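/- arXiv:2411.01452 — 5 statements merged into one kernel-verified Lean document; each statement's English description precedes it below -/
import Mathlib

section
/- In the loop representation extended by ferromagnetic edges, every connected component of the strand graph G_x that contains at least one boundary vertex contains exactly two boundary vertices (i,s) and (j,s') satisfying exactly one of: (a) s = s' = 0 and i, j lie in opposite parts of the bipartition; (b) s = s' = 2B and i, j lie in opposite parts of the bipartition; (c) {s,s'} = {0,2B} and i, j lie in the same part of the bipartition. In particular the presence of ferromagnetic (crossing) edges does not change the boundary-matching rule of the purely antiferromagnetic case. -/
open SimpleGraph

variable {V : Type*}

/-- The relation generating the strand graph of a configuration `x` of `n` local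
operators (each operator is a finite set of sites: an AFM edge in `E`, an FM edge
in `EF`, or a singleton vertex operator). -/
def strandRel (E EF : Finset (Finset V)) (n : ℕ) (x : Fin n → Finset V)
    (p q : V × Fin (n + 1)) : Prop :=
  ∃ t : Fin n,
    -- temporal edge at a site the operator does not act on
    (p.1 = q.1 ∧ p.1 ∉ x t ∧ p.2 = Fin.castSucc t ∧ q.2 = Fin.succ t) ∨
    -- bridge edges of an antiferromagnetic operator
    (x t ∈ E ∧ p.1 ∈ x t ∧ q.1 ∈ x t ∧ p.1 ≠ q.1 ∧
      ((p.2 = Fin.castSucc t ∧ q.2 = Fin.castSucc t) ∨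
       (p.2 = Fin.succ t ∧ q.2 = Fin.succ t))) ∨
    -- crossing edges of a ferromagnetic operator
    (x t ∈ EF ∧ p.1 ∈ x t ∧ q.1 ∈ x t ∧ p.1 ≠ q.1 ∧
      p.2 = Fin.castSucc t ∧ q.2 = Fin.succ t)

/-- The strand graph of a configuration. -/
def strandGraph (E EF : Finset (Finset V)) (n : ℕ) (x : Fin n → Finset V) :
    SimpleGraph (V × Fin (n + 1)) :=
  SimpleGraph.fromRel (strandRel E EF n x)

/-- `L(x)`: the number of loops (connected components of the strand graph). -/
noncomputable def numLoops (E EF : Finset (Finset V)) (n : ℕ) (x : Fin n → Finset V) : ℕ :=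
  Nat.card (strandGraph E EF n x).ConnectedComponent

open Fin.NatCast

namespace BMFM

variable {V : Type*} [DecidableEq V]

/-- the other element of a pair -/
noncomputable def pick (e : Finset V) (i : V) : V :=
  if h : (e.erase i).Nonempty then h.choose else i

lemma pick_eq {a b : V} (hab : a ≠ b) : pick ({a, b} : Finset V) a = b := by
  unfold pick
  split
  · rename_i h
    have hs := h.choose_spec
    obtain ⟨hne, hm⟩ := Finset.mem_erase.mp hs
    rcases Finset.mem_insert.mp hm with h1 | h1
    · exact absurd h1 hne
    · exact Finset.mem_singleton.mp h1
  · rename_i h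
    exact absurd ⟨b, Finset.mem_erase.mpr ⟨hab.symm, by simp⟩⟩ h

lemma pick_spec {e : Finset V} {a b : V} (hab : a ≠ b) (he : e = {a, b}) {i : V}
    (hi : i ∈ e) : (i = a ∧ pick e i = b) ∨ (i = b ∧ pick e i = a) := by
  subst he
  rcases Finset.mem_insert.mp hi with h | h
  · subst h; exact Or.inl ⟨rfl, pick_eq hab⟩
  · have hb := Finset.mem_singleton.mp h; subst hb
    refine Or.inr ⟨rfl, ?_⟩
    rw [Finset.pair_comm]; exact pick_eq hab.symm

lemma pick_props {e : Finset V} (hp : ∃ a b, a ≠ b ∧ e = {a, b}) {i : V} (hi : i ∈ e) :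
    pick e i ∈ e ∧ pick e i ≠ i ∧ pick e (pick e i) = i := by
  obtain ⟨a, b, hab, he⟩ := hp
  rcases pick_spec hab he hi with ⟨h1, h2⟩ | ⟨h1, h2⟩ <;> subst h1 <;> rw [h2]
  · have hbm : b ∈ e := by rw [he]; simp
    rcases pick_spec hab he hbm with ⟨h3, _⟩ | ⟨_, h4⟩
    · exact absurd h3 hab.symm
    · exact ⟨hbm, hab.symm, h4⟩
  · have ham : a ∈ e := by rw [he]; simp
    rcases pick_spec hab he ham with ⟨_, h4⟩ | ⟨h3, _⟩
    · exact ⟨ham, hab, h4⟩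
    · exact absurd h3 hab

variable (E : Finset (Finset V)) {n : ℕ} (x : Fin n → Finset V)

/-- one traversal step on darts (site, level, direction). `true` = about to go up. -/
noncomputable def stepD : V × ℕ × Bool → V × ℕ × Bool
  | (i, ℓ, true) =>
    if h : ℓ < n then
      if i ∈ x ⟨ℓ, h⟩ then
        if x ⟨ℓ, h⟩ ∈ E then (pick (x ⟨ℓ, h⟩) i, ℓ, false)
        else (pick (x ⟨ℓ, h⟩) i, ℓ + 1, true)
      else (i, ℓ + 1, true)
    else (i, ℓ, true)
  | (i, ℓ, false) =>
    if h : 0 < ℓ ∧ ℓ - 1 < n then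
      if i ∈ x ⟨ℓ - 1, h.2⟩ then
        if x ⟨ℓ - 1, h.2⟩ ∈ E then (pick (x ⟨ℓ - 1, h.2⟩) i, ℓ, true)
        else (pick (x ⟨ℓ - 1, h.2⟩) i, ℓ - 1, false)
      else (i, ℓ - 1, false)
    else (i, ℓ, false)

def revD (s : V × ℕ × Bool) : V × ℕ × Bool := (s.1, s.2.1, !s.2.2)

omit [DecidableEq V] in
@[simp] lemma revD_revD (s : V × ℕ × Bool) : revD (revD s) = s := by
  obtain ⟨i, ℓ, b⟩ := s; simp [revD]

/-- non-terminal darts -/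
def ntD (n : ℕ) (s : V × ℕ × Bool) : Prop :=
  (s.2.2 = true ∧ s.2.1 < n) ∨ (s.2.2 = false ∧ 0 < s.2.1)

-- computation lemmas
lemma stepD_up_notmem {i ℓ} (h : ℓ < n) (hm : i ∉ x ⟨ℓ, h⟩) :
    stepD E x (i, ℓ, true) = (i, ℓ + 1, true) := by
  simp only [stepD]; rw [dif_pos h, if_neg hm]

lemma stepD_up_E {i ℓ} (h : ℓ < n) (hm : i ∈ x ⟨ℓ, h⟩) (he : x ⟨ℓ, h⟩ ∈ E) :
    stepD E x (i, ℓ, true) = (pick (x ⟨ℓ, h⟩) i, ℓ, false) := by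
  simp only [stepD]; rw [dif_pos h, if_pos hm, if_pos he]

lemma stepD_up_F {i ℓ} (h : ℓ < n) (hm : i ∈ x ⟨ℓ, h⟩) (he : x ⟨ℓ, h⟩ ∉ E) :
    stepD E x (i, ℓ, true) = (pick (x ⟨ℓ, h⟩) i, ℓ + 1, true) := by
  simp only [stepD]; rw [dif_pos h, if_pos hm, if_neg he]

lemma stepD_up_term {i ℓ} (h : ¬ ℓ < n) :
    stepD E x (i, ℓ, true) = (i, ℓ, true) := by
  simp only [stepD]; rw [dif_neg h]

lemma stepD_down_notmem {i ℓ} (h0 : 0 < ℓ) (h1 : ℓ - 1 < n) (hm : i ∉ x ⟨ℓ - 1, h1⟩) :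
    stepD E x (i, ℓ, false) = (i, ℓ - 1, false) := by
  simp only [stepD]; rw [dif_pos ⟨h0, h1⟩, if_neg hm]

lemma stepD_down_E {i ℓ} (h0 : 0 < ℓ) (h1 : ℓ - 1 < n) (hm : i ∈ x ⟨ℓ - 1, h1⟩)
    (he : x ⟨ℓ - 1, h1⟩ ∈ E) :
    stepD E x (i, ℓ, false) = (pick (x ⟨ℓ - 1, h1⟩) i, ℓ, true) := by
  simp only [stepD]; rw [dif_pos ⟨h0, h1⟩, if_pos hm, if_pos he]

lemma stepD_down_F {i ℓ} (h0 : 0 < ℓ) (h1 : ℓ - 1 < n) (hm : i ∈ x ⟨ℓ - 1, h1⟩)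
    (he : x ⟨ℓ - 1, h1⟩ ∉ E) :
    stepD E x (i, ℓ, false) = (pick (x ⟨ℓ - 1, h1⟩) i, ℓ - 1, false) := by
  simp only [stepD]; rw [dif_pos ⟨h0, h1⟩, if_pos hm, if_neg he]

lemma stepD_down_term {i ℓ} (h : ¬ 0 < ℓ) :
    stepD E x (i, ℓ, false) = (i, ℓ, false) := by
  simp only [stepD]; rw [dif_neg (by tauto)]

lemma stepD_fix {s} (h : ¬ ntD n s) : stepD E x s = s := by
  obtain ⟨i, ℓ, b⟩ := s
  cases b
  · exact stepD_down_term E x (fun h0 => h (Or.inr ⟨rfl, h0⟩))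
  · exact stepD_up_term E x (fun h0 => h (Or.inl ⟨rfl, h0⟩))

lemma stepD_valid {s} (hv : s.2.1 ≤ n) : (stepD E x s).2.1 ≤ n := by
  obtain ⟨i, ℓ, b⟩ := s
  replace hv : ℓ ≤ n := hv
  cases b
  · by_cases h0 : 0 < ℓ
    · have h1 : ℓ - 1 < n := by omega
      by_cases hm : i ∈ x ⟨ℓ - 1, h1⟩
      · by_cases he : x ⟨ℓ - 1, h1⟩ ∈ E
        · rw [stepD_down_E E x h0 h1 hm he]; exact hv
        · rw [stepD_down_F E x h0 h1 hm he]; show ℓ - 1 ≤ n; omega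
      · rw [stepD_down_notmem E x h0 h1 hm]; show ℓ - 1 ≤ n; omega
    · rw [stepD_down_term E x h0]; exact hv
  · by_cases h : ℓ < n
    · by_cases hm : i ∈ x ⟨ℓ, h⟩
      · by_cases he : x ⟨ℓ, h⟩ ∈ E
        · rw [stepD_up_E E x h hm he]; exact hv
        · rw [stepD_up_F E x h hm he]; show ℓ + 1 ≤ n; omega
      · rw [stepD_up_notmem E x h hm]; show ℓ + 1 ≤ n; omega
    · rw [stepD_up_term E x h]; exact hv


lemma pick_unique {e : Finset V} (hpp : ∃ a b, a ≠ b ∧ e = {a, b}) {i j : V}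
    (hi : i ∈ e) (hj : j ∈ e) (hne : i ≠ j) : pick e i = j := by
  obtain ⟨a, b, hab, he⟩ := hpp
  rcases pick_spec hab he hi with ⟨h1, h2⟩ | ⟨h1, h2⟩ <;> subst h1 <;> rw [h2] <;>
    subst he
  · rcases Finset.mem_insert.mp hj with h | h
    · exact absurd h.symm hne
    · exact (Finset.mem_singleton.mp h).symm
  · rcases Finset.mem_insert.mp hj with h | h
    · exact h.symm
    · exact absurd ((Finset.mem_singleton.mp h).symm.trans rfl).symm
        (by intro hh; exact hne hh.symm)

variable (hp : ∀ t, ∃ a b, a ≠ b ∧ x t = {a, b})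

include hp in
lemma step_rev_step {s} (hnt : ntD n s) (hv : s.2.1 ≤ n) :
    stepD E x (revD (stepD E x s)) = revD s := by
  obtain ⟨i, ℓ, b⟩ := s
  replace hv : ℓ ≤ n := hv
  cases b
  · -- down
    have h0 : 0 < ℓ := by
      rcases hnt with ⟨h, _⟩ | ⟨_, h⟩
      · exact absurd h (by simp)
      · exact h
    have h1 : ℓ - 1 < n := by omega
    by_cases hm : i ∈ x ⟨ℓ - 1, h1⟩
    · obtain ⟨hjm, hjne, hjj⟩ := pick_props (hp ⟨ℓ - 1, h1⟩) hm
      by_cases he : x ⟨ℓ - 1, h1⟩ ∈ E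
      · rw [stepD_down_E E x h0 h1 hm he]
        show stepD E x (pick (x ⟨ℓ - 1, h1⟩) i, ℓ, false) = (i, ℓ, true)
        rw [stepD_down_E E x h0 h1 hjm he, hjj]
      · rw [stepD_down_F E x h0 h1 hm he]
        show stepD E x (pick (x ⟨ℓ - 1, h1⟩) i, ℓ - 1, true) = (i, ℓ, true)
        rw [stepD_up_F E x h1 hjm he, hjj, Nat.sub_add_cancel h0]
    · rw [stepD_down_notmem E x h0 h1 hm]
      show stepD E x (i, ℓ - 1, true) = (i, ℓ, true)
      rw [stepD_up_notmem E x h1 hm, Nat.sub_add_cancel h0]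
  · -- up
    have h : ℓ < n := by
      rcases hnt with ⟨_, h⟩ | ⟨h, _⟩
      · exact h
      · exact absurd h (by simp)
    by_cases hm : i ∈ x ⟨ℓ, h⟩
    · obtain ⟨hjm, hjne, hjj⟩ := pick_props (hp ⟨ℓ, h⟩) hm
      by_cases he : x ⟨ℓ, h⟩ ∈ E
      · rw [stepD_up_E E x h hm he]
        show stepD E x (pick (x ⟨ℓ, h⟩) i, ℓ, true) = (i, ℓ, false)
        rw [stepD_up_E E x h hjm he, hjj]
      · rw [stepD_up_F E x h hm he]
        show stepD E x (pick (x ⟨ℓ, h⟩) i, ℓ + 1, false) = (i, ℓ, false)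
        rw [stepD_down_F E x (Nat.succ_pos ℓ) (show ℓ + 1 - 1 < n from h) hjm he]
        simp only [Nat.succ_sub_one]
        rw [hjj]
    · rw [stepD_up_notmem E x h hm]
      show stepD E x (i, ℓ + 1, false) = (i, ℓ, false)
      rw [stepD_down_notmem E x (Nat.succ_pos ℓ) (show ℓ + 1 - 1 < n from h) hm]
      simp only [Nat.succ_sub_one]

def vtxD (n : ℕ) (s : V × ℕ × Bool) : V × Fin (n + 1) := (s.1, (s.2.1 : Fin (n + 1)))

omit [DecidableEq V] in
lemma vtxD_level {n : ℕ} {s : V × ℕ × Bool} (hv : s.2.1 ≤ n) :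
    ((vtxD n s).2 : ℕ) = s.2.1 := Fin.val_cast_of_lt (by omega)

omit [DecidableEq V] in
lemma vtxD_inj {n : ℕ} {s s' : V × ℕ × Bool} (hs : s.2.1 ≤ n) (hs' : s'.2.1 ≤ n)
    (h : vtxD n s = vtxD n s') : s.1 = s'.1 ∧ s.2.1 = s'.2.1 := by
  have h1 := congrArg Prod.fst h
  have h2 := congrArg (fun p => ((p.2 : Fin (n + 1)) : ℕ)) h
  replace h2 : ((vtxD n s).2 : ℕ) = ((vtxD n s').2 : ℕ) := h2
  rw [vtxD_level hs, vtxD_level hs'] at h2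
  exact ⟨h1, h2⟩

omit [DecidableEq V] in
lemma vtxD_revD {n : ℕ} (s : V × ℕ × Bool) : vtxD n (revD s) = vtxD n s := rfl

include hp in
lemma vtx_step_ne {s} (hnt : ntD n s) (hv : s.2.1 ≤ n) :
    vtxD n (stepD E x s) ≠ vtxD n s := by
  obtain ⟨i, ℓ, b⟩ := s
  replace hv : ℓ ≤ n := hv
  intro hList
  cases b
  · have h0 : 0 < ℓ := by
      rcases hnt with ⟨h, _⟩ | ⟨_, h⟩
      · exact absurd h (by simp)
      · exact h
    have h1 : ℓ - 1 < n := by omega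
    by_cases hm : i ∈ x ⟨ℓ - 1, h1⟩
    · obtain ⟨hjm, hjne, hjj⟩ := pick_props (hp ⟨ℓ - 1, h1⟩) hm
      by_cases he : x ⟨ℓ - 1, h1⟩ ∈ E
      · rw [stepD_down_E E x h0 h1 hm he] at hList
        exact hjne (vtxD_inj hv hv hList).1
      · rw [stepD_down_F E x h0 h1 hm he] at hList
        have := (vtxD_inj (by show ℓ - 1 ≤ n; omega) hv hList).2
        simp only at this; omega
    · rw [stepD_down_notmem E x h0 h1 hm] at hList
      have := (vtxD_inj (by show ℓ - 1 ≤ n; omega) hv hList).2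
      simp only at this; omega
  · have h : ℓ < n := by
      rcases hnt with ⟨_, h⟩ | ⟨h, _⟩
      · exact h
      · exact absurd h (by simp)
    by_cases hm : i ∈ x ⟨ℓ, h⟩
    · obtain ⟨hjm, hjne, hjj⟩ := pick_props (hp ⟨ℓ, h⟩) hm
      by_cases he : x ⟨ℓ, h⟩ ∈ E
      · rw [stepD_up_E E x h hm he] at hList
        exact hjne (vtxD_inj hv hv hList).1
      · rw [stepD_up_F E x h hm he] at hList
        have := (vtxD_inj (by show ℓ + 1 ≤ n; omega) hv hList).2
        simp only at this; omega
    · rw [stepD_up_notmem E x h hm] at hList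
      have := (vtxD_inj (by show ℓ + 1 ≤ n; omega) hv hList).2
      simp only at this; omega

include hp in
lemma step_ne_rev {s} (hnt : ntD n s) (hv : s.2.1 ≤ n) :
    stepD E x s ≠ revD s := by
  intro h
  exact vtx_step_ne E x hp hnt hv (by rw [h, vtxD_revD])

omit [DecidableEq V] in
lemma cast_castSucc' {n m ℓ : ℕ} (h : m < n) (he : ℓ = m) :
    ((ℓ : ℕ) : Fin (n + 1)) = Fin.castSucc ⟨m, h⟩ := by
  subst he
  apply Fin.ext
  rw [Fin.val_cast_of_lt (show ℓ < n + 1 by omega)]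
  simp

omit [DecidableEq V] in
lemma cast_succ' {n m ℓ : ℕ} (h : m < n) (he : ℓ = m + 1) :
    ((ℓ : ℕ) : Fin (n + 1)) = Fin.succ ⟨m, h⟩ := by
  subst he
  apply Fin.ext
  rw [Fin.val_cast_of_lt (show m + 1 < n + 1 by omega)]
  simp

variable (EF : Finset (Finset V))

include hp in
lemma adj_stepD (hxEF : ∀ t, x t ∉ E → x t ∈ EF) {s} (hnt : ntD n s) (hv : s.2.1 ≤ n) :
    (strandGraph E EF n x).Adj (vtxD n s) (vtxD n (stepD E x s)) := by
  have hne := (vtx_step_ne E x hp hnt hv).symm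
  rw [strandGraph, fromRel_adj]
  refine ⟨hne, ?_⟩
  obtain ⟨i, ℓ, b⟩ := s
  replace hv : ℓ ≤ n := hv
  cases b
  · have h0 : 0 < ℓ := by
      rcases hnt with ⟨h, _⟩ | ⟨_, h⟩
      · exact absurd h (by simp)
      · exact h
    have h1 : ℓ - 1 < n := by omega
    by_cases hm : i ∈ x ⟨ℓ - 1, h1⟩
    · obtain ⟨hjm, hjne, hjj⟩ := pick_props (hp ⟨ℓ - 1, h1⟩) hm
      by_cases he : x ⟨ℓ - 1, h1⟩ ∈ E
      · rw [stepD_down_E E x h0 h1 hm he]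
        exact Or.inl ⟨⟨ℓ - 1, h1⟩, Or.inr (Or.inl ⟨he, hm, hjm, hjne.symm,
          Or.inr ⟨cast_succ' h1 (show ℓ = ℓ - 1 + 1 by omega), cast_succ' h1 (show ℓ = ℓ - 1 + 1 by omega)⟩⟩)⟩
      · rw [stepD_down_F E x h0 h1 hm he]
        exact Or.inr ⟨⟨ℓ - 1, h1⟩, Or.inr (Or.inr ⟨hxEF _ he, hjm, hm, hjne,
          cast_castSucc' h1 rfl, cast_succ' h1 (show ℓ = ℓ - 1 + 1 by omega)⟩)⟩
    · rw [stepD_down_notmem E x h0 h1 hm]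
      exact Or.inr ⟨⟨ℓ - 1, h1⟩, Or.inl ⟨rfl, hm, cast_castSucc' h1 rfl,
        cast_succ' h1 (show ℓ = ℓ - 1 + 1 by omega)⟩⟩
  · have h : ℓ < n := by
      rcases hnt with ⟨_, h⟩ | ⟨h, _⟩
      · exact h
      · exact absurd h (by simp)
    by_cases hm : i ∈ x ⟨ℓ, h⟩
    · obtain ⟨hjm, hjne, hjj⟩ := pick_props (hp ⟨ℓ, h⟩) hm
      by_cases he : x ⟨ℓ, h⟩ ∈ E
      · rw [stepD_up_E E x h hm he]
        exact Or.inl ⟨⟨ℓ, h⟩, Or.inr (Or.inl ⟨he, hm, hjm, hjne.symm,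
          Or.inl ⟨cast_castSucc' h rfl, cast_castSucc' h rfl⟩⟩)⟩
      · rw [stepD_up_F E x h hm he]
        exact Or.inl ⟨⟨ℓ, h⟩, Or.inr (Or.inr ⟨hxEF _ he, hm, hjm, hjne.symm,
          cast_castSucc' h rfl, cast_succ' h rfl⟩)⟩
    · rw [stepD_up_notmem E x h hm]
      exact Or.inl ⟨⟨ℓ, h⟩, Or.inl ⟨rfl, hm, cast_castSucc' h rfl, cast_succ' h rfl⟩⟩

include hp in
lemma adj_to_step (hdisj : ∀ t, x t ∈ EF → x t ∉ E) {u w : V × Fin (n + 1)}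
    (h : (strandGraph E EF n x).Adj u w) :
    w = vtxD n (stepD E x (u.1, (u.2 : ℕ), true)) ∨
    w = vtxD n (stepD E x (u.1, (u.2 : ℕ), false)) := by
  rw [strandGraph, fromRel_adj] at h
  obtain ⟨hne, hrel | hrel⟩ := h <;> obtain ⟨t, hcase⟩ := hrel
  · rcases hcase with ⟨e1, e2, e3, e4⟩ | ⟨he, m1, m2, ne, hlv⟩ | ⟨he, m1, m2, ne, e3, e4⟩
    · -- temporal, u below
      left
      have hl : (u.2 : ℕ) = t.val := by rw [e3]; simp
      have hlt : (u.2 : ℕ) < n := by rw [hl]; exact t.isLt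
      have hslot : (⟨(u.2 : ℕ), hlt⟩ : Fin n) = t := Fin.ext hl
      rw [stepD_up_notmem E x hlt (by rw [hslot]; exact e2)]
      refine Prod.ext e1.symm ?_
      show w.2 = (((u.2 : ℕ) + 1 : ℕ) : Fin (n + 1))
      rw [e4, cast_succ' t.isLt (by omega)]
    · rcases hlv with ⟨e3, e4⟩ | ⟨e3, e4⟩
      · -- bridge, lower level
        left
        have hl : (u.2 : ℕ) = t.val := by rw [e3]; simp
        have hlt : (u.2 : ℕ) < n := by rw [hl]; exact t.isLt
        have hslot : (⟨(u.2 : ℕ), hlt⟩ : Fin n) = t := Fin.ext hl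
        rw [stepD_up_E E x hlt (by rw [hslot]; exact m1) (by rw [hslot]; exact he)]
        refine Prod.ext ?_ ?_
        · show w.1 = pick (x ⟨(u.2 : ℕ), hlt⟩) u.1
          rw [hslot]
          exact (pick_unique (hp t) m1 m2 ne).symm
        · show w.2 = (((u.2 : ℕ)) : Fin (n + 1))
          rw [e4]
          exact (cast_castSucc' t.isLt hl).symm
      · -- bridge, upper level
        right
        have hl : (u.2 : ℕ) = t.val + 1 := by rw [e3]; simp
        have h0 : 0 < (u.2 : ℕ) := by omega
        have h1 : (u.2 : ℕ) - 1 < n := by have := t.isLt; omega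
        have hslot : (⟨(u.2 : ℕ) - 1, h1⟩ : Fin n) = t := Fin.ext (by simp; omega)
        rw [stepD_down_E E x h0 h1 (by rw [hslot]; exact m1) (by rw [hslot]; exact he)]
        refine Prod.ext ?_ ?_
        · show w.1 = pick (x ⟨(u.2 : ℕ) - 1, h1⟩) u.1
          rw [hslot]
          exact (pick_unique (hp t) m1 m2 ne).symm
        · show w.2 = (((u.2 : ℕ)) : Fin (n + 1))
          rw [e4, cast_succ' t.isLt hl]
    · -- crossing, u below
      left
      have hl : (u.2 : ℕ) = t.val := by rw [e3]; simp
      have hlt : (u.2 : ℕ) < n := by rw [hl]; exact t.isLt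
      have hslot : (⟨(u.2 : ℕ), hlt⟩ : Fin n) = t := Fin.ext hl
      rw [stepD_up_F E x hlt (by rw [hslot]; exact m1) (by rw [hslot]; exact hdisj t he)]
      refine Prod.ext ?_ ?_
      · show w.1 = pick (x ⟨(u.2 : ℕ), hlt⟩) u.1
        rw [hslot]
        exact (pick_unique (hp t) m1 m2 ne).symm
      · show w.2 = (((u.2 : ℕ) + 1 : ℕ) : Fin (n + 1))
        rw [e4, cast_succ' t.isLt (by omega)]
  · rcases hcase with ⟨e1, e2, e3, e4⟩ | ⟨he, m1, m2, ne, hlv⟩ | ⟨he, m1, m2, ne, e3, e4⟩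
    · -- temporal, u above
      right
      have hl : (u.2 : ℕ) = t.val + 1 := by rw [e4]; simp
      have h0 : 0 < (u.2 : ℕ) := by omega
      have h1 : (u.2 : ℕ) - 1 < n := by have := t.isLt; omega
      have hslot : (⟨(u.2 : ℕ) - 1, h1⟩ : Fin n) = t := Fin.ext (by simp; omega)
      rw [stepD_down_notmem E x h0 h1 (by rw [hslot, ← e1]; exact e2)]
      refine Prod.ext e1 ?_
      show w.2 = (((u.2 : ℕ) - 1 : ℕ) : Fin (n + 1))
      rw [e3, cast_castSucc' t.isLt (by omega)]
    · rcases hlv with ⟨e3, e4⟩ | ⟨e3, e4⟩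
      · -- bridge, lower level
        left
        have hl : (u.2 : ℕ) = t.val := by rw [e4]; simp
        have hlt : (u.2 : ℕ) < n := by rw [hl]; exact t.isLt
        have hslot : (⟨(u.2 : ℕ), hlt⟩ : Fin n) = t := Fin.ext hl
        rw [stepD_up_E E x hlt (by rw [hslot]; exact m2) (by rw [hslot]; exact he)]
        refine Prod.ext ?_ ?_
        · show w.1 = pick (x ⟨(u.2 : ℕ), hlt⟩) u.1
          rw [hslot]
          exact (pick_unique (hp t) m2 m1 ne.symm).symm
        · show w.2 = (((u.2 : ℕ)) : Fin (n + 1))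
          rw [e3]
          exact (cast_castSucc' t.isLt hl).symm
      · -- bridge, upper level
        right
        have hl : (u.2 : ℕ) = t.val + 1 := by rw [e4]; simp
        have h0 : 0 < (u.2 : ℕ) := by omega
        have h1 : (u.2 : ℕ) - 1 < n := by have := t.isLt; omega
        have hslot : (⟨(u.2 : ℕ) - 1, h1⟩ : Fin n) = t := Fin.ext (by simp; omega)
        rw [stepD_down_E E x h0 h1 (by rw [hslot]; exact m2) (by rw [hslot]; exact he)]
        refine Prod.ext ?_ ?_
        · show w.1 = pick (x ⟨(u.2 : ℕ) - 1, h1⟩) u.1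
          rw [hslot]
          exact (pick_unique (hp t) m2 m1 ne.symm).symm
        · show w.2 = (((u.2 : ℕ)) : Fin (n + 1))
          rw [e3, cast_succ' t.isLt hl]
    · -- crossing, u above
      right
      have hl : (u.2 : ℕ) = t.val + 1 := by rw [e4]; simp
      have h0 : 0 < (u.2 : ℕ) := by omega
      have h1 : (u.2 : ℕ) - 1 < n := by have := t.isLt; omega
      have hslot : (⟨(u.2 : ℕ) - 1, h1⟩ : Fin n) = t := Fin.ext (by simp; omega)
      rw [stepD_down_F E x h0 h1 (by rw [hslot]; exact m2) (by rw [hslot]; exact hdisj t he)]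
      refine Prod.ext ?_ ?_
      · show w.1 = pick (x ⟨(u.2 : ℕ) - 1, h1⟩) u.1
        rw [hslot]
        exact (pick_unique (hp t) m2 m1 ne.symm).symm
      · show w.2 = (((u.2 : ℕ) - 1 : ℕ) : Fin (n + 1))
        rw [e3, cast_castSucc' t.isLt (by omega)]

def bstart (n : ℕ) (s : V × ℕ × Bool) : Prop :=
  (s.2.1 = 0 ∧ s.2.2 = true) ∨ (s.2.1 = n ∧ s.2.2 = false)

lemma stepD_ne_bstart {s s0 : V × ℕ × Bool} (hb : bstart n s0) (hnt : ntD n s)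
    (hv : s.2.1 ≤ n) : stepD E x s ≠ s0 := by
  obtain ⟨i, ℓ, b⟩ := s
  replace hv : ℓ ≤ n := hv
  intro h
  cases b
  · have h0 : 0 < ℓ := by
      rcases hnt with ⟨hh, _⟩ | ⟨_, hh⟩
      · exact absurd hh (by simp)
      · exact hh
    have h1 : ℓ - 1 < n := by omega
    by_cases hm : i ∈ x ⟨ℓ - 1, h1⟩
    · by_cases he : x ⟨ℓ - 1, h1⟩ ∈ E
      · rw [stepD_down_E E x h0 h1 hm he] at h
        rcases hb with ⟨hl, hd⟩ | ⟨hl, hd⟩ <;> rw [← h] at hl hd <;> simp at hl hd <;> omega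
      · rw [stepD_down_F E x h0 h1 hm he] at h
        rcases hb with ⟨hl, hd⟩ | ⟨hl, hd⟩ <;> rw [← h] at hl hd <;> simp at hl hd <;> omega
    · rw [stepD_down_notmem E x h0 h1 hm] at h
      rcases hb with ⟨hl, hd⟩ | ⟨hl, hd⟩ <;> rw [← h] at hl hd <;> simp at hl hd <;> omega
  · have hlt : ℓ < n := by
      rcases hnt with ⟨_, hh⟩ | ⟨hh, _⟩
      · exact hh
      · exact absurd hh (by simp)
    by_cases hm : i ∈ x ⟨ℓ, hlt⟩
    · by_cases he : x ⟨ℓ, hlt⟩ ∈ E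
      · rw [stepD_up_E E x hlt hm he] at h
        rcases hb with ⟨hl, hd⟩ | ⟨hl, hd⟩ <;> rw [← h] at hl hd <;> simp at hl hd <;> omega
      · rw [stepD_up_F E x hlt hm he] at h
        rcases hb with ⟨hl, hd⟩ | ⟨hl, hd⟩ <;> rw [← h] at hl hd <;> simp at hl hd <;> omega
    · rw [stepD_up_notmem E x hlt hm] at h
      rcases hb with ⟨hl, hd⟩ | ⟨hl, hd⟩ <;> rw [← h] at hl hd <;> simp at hl hd <;> omega

def JD (A : Finset V) (s : V × ℕ × Bool) : Prop := s.1 ∈ A ↔ s.2.2 = true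

omit hp in
lemma JD_step (A : Finset V)
    (hA1 : ∀ t, x t ∈ E → ∀ i ∈ x t, (pick (x t) i ∈ A ↔ i ∉ A))
    (hA2 : ∀ t, x t ∉ E → ∀ i ∈ x t, (pick (x t) i ∈ A ↔ i ∈ A))
    {s} (hnt : ntD n s) (hv : s.2.1 ≤ n) :
    (JD A (stepD E x s) ↔ JD A s) := by
  obtain ⟨i, ℓ, b⟩ := s
  replace hv : ℓ ≤ n := hv
  cases b
  · have h0 : 0 < ℓ := by
      rcases hnt with ⟨hh, _⟩ | ⟨_, hh⟩
      · exact absurd hh (by simp)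
      · exact hh
    have h1 : ℓ - 1 < n := by omega
    by_cases hm : i ∈ x ⟨ℓ - 1, h1⟩
    · by_cases he : x ⟨ℓ - 1, h1⟩ ∈ E
      · rw [stepD_down_E E x h0 h1 hm he]
        have := hA1 _ he i hm
        simp only [JD]
        simp only [this]
        tauto
      · rw [stepD_down_F E x h0 h1 hm he]
        have := hA2 _ he i hm
        simp only [JD]
        simp only [this]
    · rw [stepD_down_notmem E x h0 h1 hm]
      simp [JD]
  · have hlt : ℓ < n := by
      rcases hnt with ⟨_, hh⟩ | ⟨hh, _⟩
      · exact hh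
      · exact absurd hh (by simp)
    by_cases hm : i ∈ x ⟨ℓ, hlt⟩
    · by_cases he : x ⟨ℓ, hlt⟩ ∈ E
      · rw [stepD_up_E E x hlt hm he]
        have := hA1 _ he i hm
        simp only [JD]
        simp only [this]
        tauto
      · rw [stepD_up_F E x hlt hm he]
        have := hA2 _ he i hm
        simp only [JD]
        simp only [this]
    · rw [stepD_up_notmem E x hlt hm]
      simp [JD]

set_option maxHeartbeats 1000000 in
include hp in
lemma main_aux [Fintype V] (A : Finset V) (hn : 0 < n)
    (hxEF : ∀ t, x t ∉ E → x t ∈ EF)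
    (hdisj : ∀ t, x t ∈ EF → x t ∉ E)
    (hA1 : ∀ t, x t ∈ E → ∀ i ∈ x t, (pick (x t) i ∈ A ↔ i ∉ A))
    (hA2 : ∀ t, x t ∉ E → ∀ i ∈ x t, (pick (x t) i ∈ A ↔ i ∈ A))
    (s0 : V × ℕ × Bool) (hb : bstart n s0) :
    ∃ w : V × Fin (n + 1),
      (strandGraph E EF n x).Reachable (vtxD n s0) w ∧ vtxD n s0 ≠ w ∧
      (w.2 = 0 ∨ w.2 = Fin.last n) ∧
      (∀ u, (strandGraph E EF n x).Reachable (vtxD n s0) u →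
        (u.2 = 0 ∨ u.2 = Fin.last n) → u = vtxD n s0 ∨ u = w) ∧
      (((vtxD n s0).2 = 0 ∧ w.2 = 0 ∧ ¬((vtxD n s0).1 ∈ A ↔ w.1 ∈ A)) ∨
       ((vtxD n s0).2 = Fin.last n ∧ w.2 = Fin.last n ∧ ¬((vtxD n s0).1 ∈ A ↔ w.1 ∈ A)) ∨
       ((((vtxD n s0).2 = 0 ∧ w.2 = Fin.last n) ∨
         ((vtxD n s0).2 = Fin.last n ∧ w.2 = 0)) ∧
         ((vtxD n s0).1 ∈ A ↔ w.1 ∈ A))) := by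
  classical
  set G := strandGraph E EF n x with hG
  set st : ℕ → V × ℕ × Bool := fun k => (stepD E x)^[k] s0 with hst
  have hstep : ∀ k, st (k + 1) = stepD E x (st k) := fun k =>
    Function.iterate_succ_apply' _ _ _
  have hst0 : st 0 = s0 := rfl
  have hv0 : s0.2.1 ≤ n := by rcases hb with ⟨h, _⟩ | ⟨h, _⟩ <;> omega
  have hvalid : ∀ k, (st k).2.1 ≤ n := by
    intro k
    induction k with
    | zero => exact hv0
    | succ k ih => rw [hstep]; exact stepD_valid E x ih
  have hnt0 : ntD n s0 := by
    rcases hb with ⟨h1, h2⟩ | ⟨h1, h2⟩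
    · exact Or.inl ⟨h2, by omega⟩
    · exact Or.inr ⟨h2, by omega⟩
  -- termination
  have hterm : ∃ k, ¬ ntD n (st k) := by
    by_contra hcon
    push_neg at hcon
    set f : ℕ → V × Fin (n + 1) × Bool :=
      fun k => ((st k).1, (⟨(st k).2.1, Nat.lt_succ_of_le (hvalid k)⟩ : Fin (n + 1)),
        (st k).2.2) with hf
    obtain ⟨a, b, hab, heq⟩ := Finite.exists_ne_map_eq_of_infinite f
    have hsab : ∀ a b : ℕ, f a = f b → st a = st b := by
      intro a b heq
      have h1 := congrArg Prod.fst heq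
      have h2 := congrArg (fun p => (p.2.1 : ℕ)) heq
      have h3 := congrArg (fun p => p.2.2) heq
      simp only [hf] at h1 h2 h3
      exact Prod.ext h1 (Prod.ext h2 h3)
    have peel : ∀ m d, st m = st (m + d) → st 0 = st d := by
      intro m
      induction m with
      | zero => intro d h; simpa using h
      | succ m ih =>
        intro d h
        apply ih
        have gl : ∀ u, ntD n u → u.2.1 ≤ n →
            revD (stepD E x (revD (stepD E x u))) = u := by
          intro u h1 h2
          rw [step_rev_step E x hp h1 h2, revD_revD]
        have hstt : stepD E x (st m) = stepD E x (st (m + d)) := by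
          rw [← hstep m, ← hstep (m + d)]
          rw [show m + d + 1 = m + 1 + d by omega]
          exact h
        calc st m = revD (stepD E x (revD (stepD E x (st m)))) :=
              (gl _ (hcon m) (hvalid m)).symm
          _ = revD (stepD E x (revD (stepD E x (st (m + d))))) := by rw [hstt]
          _ = st (m + d) := gl _ (hcon (m + d)) (hvalid (m + d))
    have key : ∀ a b : ℕ, a < b → f a = f b → False := by
      intro a b hlt hfeq
      have h1 : st a = st b := hsab a b hfeq
      have h2 : st 0 = st (b - a) := peel a (b - a) (by
        rw [show a + (b - a) = b by omega]; exact h1)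
      have h3 : st (b - a) = stepD E x (st (b - a - 1)) := by
        rw [show b - a = (b - a - 1) + 1 by omega]; exact hstep _
      have := stepD_ne_bstart E x hb (hcon (b - a - 1)) (hvalid (b - a - 1))
      rw [← h3, ← h2, hst0] at this
      exact this rfl
    rcases Nat.lt_or_ge a b with h | h
    · exact key a b h heq
    · rcases Nat.lt_or_ge b a with h' | h'
      · exact key b a h' heq.symm
      · exact hab (by omega)
  set T := Nat.find hterm with hT
  have hTspec : ¬ ntD n (st T) := Nat.find_spec hterm
  have hmin : ∀ k, k < T → ntD n (st k) := fun k hk =>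
    not_not.mp (Nat.find_min hterm hk)
  have hT1 : 1 ≤ T := by
    rcases Nat.eq_zero_or_pos T with h | h
    · rw [h, hst0] at hTspec; exact absurd hnt0 hTspec
    · exact h
  have hreach : ∀ k, G.Reachable (vtxD n s0) (vtxD n (st k)) := by
    intro k
    induction k with
    | zero => rw [hst0]
    | succ k ih =>
      by_cases hnt : ntD n (st k)
      · rw [hstep]
        exact ih.trans (adj_stepD E x hp EF hxEF hnt (hvalid k)).reachable
      · rw [hstep, stepD_fix E x hnt]
        exact ih
  -- shape of the final dart
  have hwshape : ((st T).2.1 = 0 ∧ (st T).2.2 = false) ∨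
      ((st T).2.1 = n ∧ (st T).2.2 = true) := by
    have hvT := hvalid T
    cases hB : (st T).2.2
    · left
      refine ⟨?_, rfl⟩
      by_contra hne0
      exact hTspec (Or.inr ⟨hB, by omega⟩)
    · right
      refine ⟨?_, rfl⟩
      by_contra hnen
      exact hTspec (Or.inl ⟨hB, by omega⟩)
  refine ⟨vtxD n (st T), hreach T, ?_, ?_, ?_, ?_⟩
  · -- v ≠ w
    intro heq
    obtain ⟨h1, h2⟩ := vtxD_inj hv0 (hvalid T) heq
    have hsT : st T = revD s0 := by
      rcases hb with ⟨hl, hd⟩ | ⟨hl, hd⟩ <;>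
        rcases hwshape with ⟨hl', hd'⟩ | ⟨hl', hd'⟩
      · refine Prod.ext h1.symm (Prod.ext (by simp [revD]; omega) ?_)
        simp [revD, hd, hd']
      · omega
      · omega
      · refine Prod.ext h1.symm (Prod.ext (by simp [revD]; omega) ?_)
        simp [revD, hd, hd']
    have hrefl : ∀ k, k ≤ T → st (T - k) = revD (st k) := by
      intro k
      induction k with
      | zero => intro _; rw [Nat.sub_zero, hst0]; exact hsT
      | succ k ih =>
        intro hk1
        have ihh := ih (by omega)
        have hnt' : ntD n (st (T - (k + 1))) := hmin _ (by omega)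
        have e := step_rev_step E x hp hnt' (hvalid _)
        have e2 : stepD E x (st (T - (k + 1))) = st (T - k) := by
          rw [show T - k = (T - (k + 1)) + 1 by omega]
          exact (hstep _).symm
        rw [e2, ihh, revD_revD, ← hstep k] at e
        rw [e, revD_revD]
    rcases Nat.even_or_odd T with ⟨m, hm⟩ | ⟨m, hm⟩
    · have hh := hrefl m (by omega)
      rw [show T - m = m by omega] at hh
      have := congrArg (fun p => p.2.2) hh
      simp [revD] at this
    · have hh := hrefl m (by omega)
      rw [show T - m = m + 1 by omega, hstep m] at hh
      exact step_ne_rev E x hp (hmin m (by omega)) (hvalid m) hh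
  · -- w is a boundary vertex
    rcases hwshape with ⟨hl, _⟩ | ⟨hl, _⟩
    · left
      show ((st T).2.1 : Fin (n + 1)) = 0
      rw [hl]; simp
    · right
      show ((st T).2.1 : Fin (n + 1)) = Fin.last n
      rw [hl]
      apply Fin.ext
      rw [Fin.val_cast_of_lt (by omega)]
      simp
  · -- uniqueness
    have hcov : ∀ u, G.Reachable (vtxD n s0) u → ∃ k ≤ T, u = vtxD n (st k) := by
      have hclosed : ∀ (a b : V × Fin (n + 1)), (∃ k ≤ T, a = vtxD n (st k)) →
          G.Adj a b → ∃ k ≤ T, b = vtxD n (st k) := by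
        rintro a b ⟨k, hk, rfl⟩ hadj
        have hlev : (((vtxD n (st k)).2 : Fin (n + 1)) : ℕ) = (st k).2.1 :=
          vtxD_level (hvalid k)
        have hfst : (vtxD n (st k)).1 = (st k).1 := rfl
        have hcases := adj_to_step E x hp EF hdisj hadj
        rw [hfst, hlev] at hcases
        have hdart : ∀ bb : Bool, ((st k).1, (st k).2.1, bb) = st k ∨
            ((st k).1, (st k).2.1, bb) = revD (st k) := by
          intro bb
          cases hB : (st k).2.2 <;> cases bb
          · left; rw [← hB]
          · right; simp [revD, hB]
          · right; simp [revD, hB]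
          · left; rw [← hB]
        have hmain : ∀ bb : Bool, b = vtxD n (stepD E x ((st k).1, (st k).2.1, bb)) →
            ∃ k' ≤ T, b = vtxD n (st k') := by
          intro bb hbb
          rcases hdart bb with hd | hd
          · rw [hd] at hbb
            rcases Nat.lt_or_ge k T with hkT | hkT
            · exact ⟨k + 1, by omega, by rw [hbb, hstep]⟩
            · have hkeq : k = T := by omega
              rw [hkeq] at hbb
              rw [stepD_fix E x hTspec] at hbb
              have hne2 := G.ne_of_adj hadj
              rw [hkeq] at hne2
              exact absurd hbb.symm hne2
          · rw [hd] at hbb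
            rcases Nat.eq_zero_or_pos k with hk0 | hk0
            · rw [hk0, hst0] at hbb
              have hfix : stepD E x (revD s0) = revD s0 := by
                apply stepD_fix
                rcases hb with ⟨hl, hd'⟩ | ⟨hl, hd'⟩ <;>
                  intro hcon <;> rcases hcon with ⟨ha, hb'⟩ | ⟨ha, hb'⟩ <;>
                  simp [revD, hd', hl] at ha hb' <;> omega
              rw [hfix, vtxD_revD] at hbb
              rw [hk0, hst0] at hadj
              exact absurd hbb.symm (G.ne_of_adj hadj)
            · have e2 : stepD E x (st (k - 1)) = st k := by
                rw [show k = (k - 1) + 1 by omega]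
                exact (hstep _).symm
              have e := step_rev_step E x hp (hmin (k - 1) (by omega)) (hvalid (k - 1))
              rw [e2] at e
              rw [e, vtxD_revD] at hbb
              exact ⟨k - 1, by omega, hbb⟩
        rcases hcases with hc | hc
        · exact hmain true hc
        · exact hmain false hc
      intro u hu
      obtain ⟨p⟩ := hu
      have : ∀ (a b : V × Fin (n + 1)), G.Walk a b → (∃ k ≤ T, a = vtxD n (st k)) →
          ∃ k ≤ T, b = vtxD n (st k) := by
        intro a b p
        induction p with
        | nil => exact id
        | cons hadj q ih => intro ha; exact ih (hclosed _ _ ha hadj)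
      exact this _ _ p ⟨0, by omega, by rw [hst0]⟩
    intro u hu hub
    obtain ⟨k, hk, rfl⟩ := hcov u hu
    have hlev : (((vtxD n (st k)).2 : Fin (n + 1)) : ℕ) = (st k).2.1 :=
      vtxD_level (hvalid k)
    have hlv : (st k).2.1 = 0 ∨ (st k).2.1 = n := by
      rcases hub with h | h
      · left; rw [← hlev, h]; simp
      · right; rw [← hlev, h]; simp
    have hk0orT : k = 0 ∨ k = T := by
      cases hB : (st k).2.2
      · rcases hlv with h | h
        · -- level 0, going down: terminal
          right
          rcases Nat.lt_or_ge k T with hkT | hkT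
          · refine absurd (hmin k hkT) ?_
            intro hcon
            rcases hcon with ⟨ha, _⟩ | ⟨_, hb'⟩
            · rw [hB] at ha; exact Bool.noConfusion ha
            · omega
          · omega
        · -- level n, going down: boundary start shape
          left
          by_contra hk0
          have e2 : stepD E x (st (k - 1)) = st k := by
            rw [show k = (k - 1) + 1 by omega]
            exact (hstep _).symm
          exact stepD_ne_bstart E x (Or.inr ⟨h, hB⟩) (hmin (k - 1) (by omega))
            (hvalid (k - 1)) e2
      · rcases hlv with h | h
        · -- level 0, going up: boundary start shape
          left
          by_contra hk0
          have e2 : stepD E x (st (k - 1)) = st k := by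
            rw [show k = (k - 1) + 1 by omega]
            exact (hstep _).symm
          exact stepD_ne_bstart E x (Or.inl ⟨h, hB⟩) (hmin (k - 1) (by omega))
            (hvalid (k - 1)) e2
        · -- level n, going up: terminal
          right
          rcases Nat.lt_or_ge k T with hkT | hkT
          · refine absurd (hmin k hkT) ?_
            intro hcon
            rcases hcon with ⟨_, ha⟩ | ⟨hb', _⟩
            · omega
            · rw [hB] at hb'; exact Bool.noConfusion hb'
          · omega
    rcases hk0orT with h | h
    · left; rw [h, hst0]
    · right; rw [h]
  · -- matching rule
    have hJ : ∀ k, JD A (st k) ↔ JD A s0 := by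
      intro k
      induction k with
      | zero => rw [hst0]
      | succ k ih =>
        by_cases hnt : ntD n (st k)
        · rw [hstep]
          rw [JD_step E x A hA1 hA2 hnt (hvalid k)]
          exact ih
        · rw [hstep, stepD_fix E x hnt]
          exact ih
    have hJT := hJ T
    rcases hb with ⟨hl, hd⟩ | ⟨hl, hd⟩ <;> rcases hwshape with ⟨hl', hd'⟩ | ⟨hl', hd'⟩
    · -- start 0, end 0 : AFM style matching at bottom
      left
      refine ⟨?_, ?_, ?_⟩
      · show ((s0.2.1 : ℕ) : Fin (n + 1)) = 0
        rw [hl]; simp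
      · show (((st T).2.1 : ℕ) : Fin (n + 1)) = 0
        rw [hl']; simp
      · simp only [JD, hd, hd'] at hJT
        show ¬ (s0.1 ∈ A ↔ (st T).1 ∈ A)
        simp at hJT
        tauto
    · -- start 0, end n : same side
      right; right
      refine ⟨Or.inl ⟨?_, ?_⟩, ?_⟩
      · show ((s0.2.1 : ℕ) : Fin (n + 1)) = 0
        rw [hl]; simp
      · show (((st T).2.1 : ℕ) : Fin (n + 1)) = Fin.last n
        rw [hl']
        apply Fin.ext
        rw [Fin.val_cast_of_lt (by omega)]
        simp
      · simp only [JD, hd, hd'] at hJT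
        show s0.1 ∈ A ↔ (st T).1 ∈ A
        simp at hJT
        tauto
    · -- start n, end 0 : same side
      right; right
      refine ⟨Or.inr ⟨?_, ?_⟩, ?_⟩
      · show ((s0.2.1 : ℕ) : Fin (n + 1)) = Fin.last n
        rw [hl]
        apply Fin.ext
        rw [Fin.val_cast_of_lt (by omega)]
        simp
      · show (((st T).2.1 : ℕ) : Fin (n + 1)) = 0
        rw [hl']; simp
      · simp only [JD, hd, hd'] at hJT
        show s0.1 ∈ A ↔ (st T).1 ∈ A
        simp at hJT
        tauto
    · -- start n, end n
      right; left
      refine ⟨?_, ?_, ?_⟩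
      · show ((s0.2.1 : ℕ) : Fin (n + 1)) = Fin.last n
        rw [hl]
        apply Fin.ext
        rw [Fin.val_cast_of_lt (by omega)]
        simp
      · show (((st T).2.1 : ℕ) : Fin (n + 1)) = Fin.last n
        rw [hl']
        apply Fin.ext
        rw [Fin.val_cast_of_lt (by omega)]
        simp
      · simp only [JD, hd, hd'] at hJT
        show ¬ (s0.1 ∈ A ↔ (st T).1 ∈ A)
        simp at hJT
        tauto

end BMFM


/-- With ferromagnetic (crossing) edges included, every connected
component of the strand graph containing a boundary vertex contains exactly two
boundary vertices, matched according to the same bipartite boundary-matching rule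
as in the purely antiferromagnetic case. -/
theorem boundary_matching_with_FM [Fintype V] [DecidableEq V]
    (A : Finset V) (E EF : Finset (Finset V))
    (hE : ∀ e ∈ E, ∃ i j : V, i ∈ A ∧ j ∉ A ∧ e = {i, j})
    (hEF : ∀ e ∈ EF, ∃ i j : V, i ≠ j ∧ ((i ∈ A ∧ j ∈ A) ∨ (i ∉ A ∧ j ∉ A)) ∧ e = {i, j})
    (B : ℕ) (hB : 0 < B)
    (x : Fin (2 * B) → Finset V) (hx : ∀ t, x t ∈ E ∪ EF)
    (c : (strandGraph E EF (2 * B) x).ConnectedComponent)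
    (hc : ∃ v ∈ c.supp, v.2 = (0 : Fin (2 * B + 1)) ∨ v.2 = Fin.last (2 * B)) :
    ∃ v w : V × Fin (2 * B + 1),
      v ∈ c.supp ∧ w ∈ c.supp ∧ v ≠ w ∧
      (v.2 = 0 ∨ v.2 = Fin.last (2 * B)) ∧ (w.2 = 0 ∨ w.2 = Fin.last (2 * B)) ∧
      (∀ u ∈ c.supp, (u.2 = 0 ∨ u.2 = Fin.last (2 * B)) → u = v ∨ u = w) ∧
      ((v.2 = 0 ∧ w.2 = 0 ∧ ¬(v.1 ∈ A ↔ w.1 ∈ A)) ∨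
       (v.2 = Fin.last (2 * B) ∧ w.2 = Fin.last (2 * B) ∧ ¬(v.1 ∈ A ↔ w.1 ∈ A)) ∨
       (((v.2 = 0 ∧ w.2 = Fin.last (2 * B)) ∨ (v.2 = Fin.last (2 * B) ∧ w.2 = 0)) ∧
         (v.1 ∈ A ↔ w.1 ∈ A))) := by
  classical
  obtain ⟨v0, hv0, hv0b⟩ := hc
  have hn : 0 < 2 * B := by omega
  have hp : ∀ t : Fin (2 * B), ∃ a b : V, a ≠ b ∧ x t = {a, b} := by
    intro t
    rcases Finset.mem_union.mp (hx t) with h | h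
    · obtain ⟨i, j, hiA, hjA, hij⟩ := hE _ h
      exact ⟨i, j, fun hh => hjA (hh ▸ hiA), hij⟩
    · obtain ⟨i, j, hne, _, hij⟩ := hEF _ h
      exact ⟨i, j, hne, hij⟩
  have hxEF : ∀ t : Fin (2 * B), x t ∉ E → x t ∈ EF := by
    intro t h
    rcases Finset.mem_union.mp (hx t) with h' | h'
    · exact absurd h' h
    · exact h'
  have hdisj : ∀ t : Fin (2 * B), x t ∈ EF → x t ∉ E := by
    intro t hef he
    obtain ⟨a, b, haA, hbA, hab⟩ := hE _ he
    obtain ⟨cc, d, hcd, hcdA, hcd'⟩ := hEF _ hef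
    rw [hab] at hcd'
    have hcm : cc ∈ ({a, b} : Finset V) := by rw [hcd']; simp
    have hdm : d ∈ ({a, b} : Finset V) := by rw [hcd']; simp
    simp only [Finset.mem_insert, Finset.mem_singleton] at hcm hdm
    rcases hcm with rfl | rfl <;> rcases hdm with rfl | rfl <;>
      rcases hcdA with ⟨h1, h2⟩ | ⟨h1, h2⟩ <;> tauto
  have hA1 : ∀ t : Fin (2 * B), x t ∈ E → ∀ i ∈ x t, (BMFM.pick (x t) i ∈ A ↔ i ∉ A) := by
    intro t ht i hi
    obtain ⟨a, b, haA, hbA, hab⟩ := hE _ ht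
    have hne : a ≠ b := fun hh => hbA (hh ▸ haA)
    rcases BMFM.pick_spec hne hab hi with ⟨rfl, h2⟩ | ⟨rfl, h2⟩
    · rw [h2]; exact iff_of_false hbA (not_not_intro haA)
    · rw [h2]; exact iff_of_true haA hbA
  have hA2 : ∀ t : Fin (2 * B), x t ∉ E → ∀ i ∈ x t, (BMFM.pick (x t) i ∈ A ↔ i ∈ A) := by
    intro t ht i hi
    obtain ⟨cc, d, hcd, hcdA, hcd'⟩ := hEF _ (hxEF t ht)
    rcases BMFM.pick_spec hcd hcd' hi with ⟨rfl, h2⟩ | ⟨rfl, h2⟩ <;> rw [h2] <;>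
      rcases hcdA with ⟨h1, h2'⟩ | ⟨h1, h2'⟩
    · exact iff_of_true h2' h1
    · exact iff_of_false h2' h1
    · exact iff_of_true h1 h2'
    · exact iff_of_false h1 h2'
  have hcmk : c = (strandGraph E EF (2 * B) x).connectedComponentMk v0 :=
    ((SimpleGraph.ConnectedComponent.mem_supp_iff c v0).mp hv0).symm
  obtain ⟨s0, hbs, hveq⟩ : ∃ s0 : V × ℕ × Bool, BMFM.bstart (2 * B) s0 ∧ BMFM.vtxD (2 * B) s0 = v0 := by
    rcases hv0b with h | h
    · refine ⟨(v0.1, 0, true), Or.inl ⟨rfl, rfl⟩, Prod.ext rfl ?_⟩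
      show ((0 : ℕ) : Fin (2 * B + 1)) = v0.2
      rw [h]; simp
    · refine ⟨(v0.1, 2 * B, false), Or.inr ⟨rfl, rfl⟩, Prod.ext rfl ?_⟩
      show ((2 * B : ℕ) : Fin (2 * B + 1)) = v0.2
      rw [h]
      apply Fin.ext
      rw [Fin.val_cast_of_lt (by omega)]
      simp
  obtain ⟨w, hreach, hne, hwb, huniq, htri⟩ :=
    BMFM.main_aux E x hp EF A hn hxEF hdisj hA1 hA2 s0 hbs
  rw [hveq] at hreach hne huniq htri
  refine ⟨v0, w, hv0, ?_, hne, hv0b, hwb, ?_, htri⟩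
  · rw [SimpleGraph.ConnectedComponent.mem_supp_iff, hcmk]
    exact SimpleGraph.ConnectedComponent.eq.mpr hreach.symm
  · intro u hu hub
    have hr : (strandGraph E EF (2 * B) x).Reachable v0 u := by
      rw [SimpleGraph.ConnectedComponent.mem_supp_iff, hcmk] at hu
      exact (SimpleGraph.ConnectedComponent.eq.mp hu).symm
    exact huniq u hr hub
end

section
/- Suppose 1 ≤ |𝒜| ≤ |ℬ|. For any two configurations x, y ∈ (ℰ ∪ ℰ_F ∪ 𝒱)^{2B} and any t ∈ {1,…,2B}, define the hybrid configurations z = (y_1,…,y_{t−1},x_t,…,x_{2B}) and η = (x_1,…,x_{t−1},y_t,…,y_{2B}). Then L(x) + L(y) ≤ L(z) + L(η) + 8|𝒜| − 4; equivalently, 2^{L(x)} · 2^{L(y)} ≤ 2^{8|𝒜|−4} · 2^{L(z)} · 2^{L(η)}. -/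
open SimpleGraph

set_option linter.unusedSectionVars false
set_option maxHeartbeats 1600000

variable {V : Type*}

open Submodule Module

namespace EncodingAux

set_option linter.unusedSectionVars false
set_option maxHeartbeats 1600000

section CompCount
variable {α : Type*} [Fintype α] [DecidableEq α]

/-- indicator vector over GF(2) -/
def chiv (u : α) : α → ZMod 2 := Pi.single u 1

lemma chiv_apply (u w : α) : chiv u w = if w = u then 1 else 0 := Pi.single_apply u 1 w

lemma zmod2_cases : ∀ a : ZMod 2, a = 0 ∨ a = 1 := by decide

lemma zmod2_add_self : ∀ a : ZMod 2, a + a = 0 := by decide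

lemma chiv_add_self (u : α) : chiv u + chiv u = 0 := by
  funext v; exact zmod2_add_self _

open Classical in
/-- linear map summing a vector over each connected component -/
noncomputable def compSum (G : SimpleGraph α) :
    (α → ZMod 2) →ₗ[ZMod 2] (G.ConnectedComponent → ZMod 2) where
  toFun f := fun c => ∑ v ∈ Finset.univ.filter (fun v => G.connectedComponentMk v = c), f v
  map_add' f g := by funext c; exact Finset.sum_add_distrib
  map_smul' r f := by funext c; simp [Finset.mul_sum]

open Classical in
lemma compSum_apply (G : SimpleGraph α) (f : α → ZMod 2) (c : G.ConnectedComponent) :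
    compSum G f c = ∑ v ∈ Finset.univ.filter (fun v => G.connectedComponentMk v = c), f v := rfl

open Classical in
lemma compSum_chiv_apply (G : SimpleGraph α) (u : α) (c : G.ConnectedComponent) :
    compSum G (chiv u) c = if G.connectedComponentMk u = c then 1 else 0 := by
  rw [compSum_apply]
  unfold chiv
  rw [Finset.sum_pi_single' u 1]
  simp only [Finset.mem_filter, Finset.mem_univ, true_and]

lemma compSum_pair_eq_zero (G : SimpleGraph α) {u v : α}
    (h : G.connectedComponentMk u = G.connectedComponentMk v) :
    compSum G (chiv u + chiv v) = 0 := by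
  classical
  funext c
  rw [map_add]
  show compSum G (chiv u) c + compSum G (chiv v) c = 0
  rw [compSum_chiv_apply, compSum_chiv_apply, h]
  exact zmod2_add_self _

/-- span of edge vectors of a graph -/
def spanEdges (G : SimpleGraph α) : Submodule (ZMod 2) (α → ZMod 2) :=
  span (ZMod 2) {g | ∃ a b, G.Adj a b ∧ g = chiv a + chiv b}

lemma reachable_chiv_mem (G : SimpleGraph α) {u v : α} (h : G.Reachable u v) :
    chiv u + chiv v ∈ spanEdges G := by
  obtain ⟨w⟩ := h
  induction w with
  | nil =>
      rw [chiv_add_self]; exact zero_mem _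
  | @cons a b c hab p ih =>
      have h1 : chiv a + chiv b ∈ spanEdges G := subset_span ⟨a, b, hab, rfl⟩
      have h2 := add_mem h1 ih
      have he : (chiv a + chiv b) + (chiv b + chiv c) = chiv a + chiv c := by
        funext w
        have : ∀ x y z : ZMod 2, (x + y) + (y + z) = x + z := by decide
        exact this _ _ _
      rwa [he] at h2

lemma spanEdges_le_ker (G : SimpleGraph α) :
    spanEdges G ≤ LinearMap.ker (compSum G) := by
  rw [spanEdges, span_le]
  rintro g ⟨a, b, hab, rfl⟩
  exact LinearMap.mem_ker.mpr
    (compSum_pair_eq_zero G ((ConnectedComponent.eq).mpr hab.reachable))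

/-- kernel elements supported in S lie in the span of reachable pairs within S -/
lemma ker_supported_mem_span (G : SimpleGraph α) (S : Set α) :
    ∀ (f : α → ZMod 2), compSum G f = 0 → (∀ v, v ∉ S → f v = 0) →
    f ∈ span (ZMod 2)
      {g | ∃ u v, u ∈ S ∧ v ∈ S ∧ u ≠ v ∧ G.Reachable u v ∧ g = chiv u + chiv v} := by
  classical
  set PS : Set (α → ZMod 2) :=
    {g | ∃ u v, u ∈ S ∧ v ∈ S ∧ u ≠ v ∧ G.Reachable u v ∧ g = chiv u + chiv v} with hPS
  suffices H : ∀ (n : ℕ) (f : α → ZMod 2), (Finset.univ.filter (fun v => f v ≠ 0)).card = n →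
      compSum G f = 0 → (∀ v, v ∉ S → f v = 0) → f ∈ span (ZMod 2) PS by
    intro f hk hs; exact H _ f rfl hk hs
  intro n
  induction n using Nat.strong_induction_on with
  | _ n ih =>
    intro f hcard hker hsupp
    by_cases hf0 : f = 0
    · rw [hf0]; exact zero_mem _
    · have : ∃ u, f u ≠ 0 := by
        by_contra h
        push_neg at h
        exact hf0 (funext fun v => h v)
      obtain ⟨u, hu⟩ := this
      have hfu1 : f u = 1 := (zmod2_cases (f u)).resolve_left hu
      have huS : u ∈ S := by by_contra h; exact hu (hsupp u h)
      have hsum : ∑ v ∈ Finset.univ.filter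
          (fun v => G.connectedComponentMk v = G.connectedComponentMk u), f v = 0 := by
        have := congrFun hker (G.connectedComponentMk u)
        rwa [compSum_apply] at this
      have humem : u ∈ Finset.univ.filter
          (fun v => G.connectedComponentMk v = G.connectedComponentMk u) :=
        Finset.mem_filter.mpr ⟨Finset.mem_univ u, rfl⟩
      have hex : ∃ v ∈ (Finset.univ.filter
          (fun v => G.connectedComponentMk v = G.connectedComponentMk u)).erase u, f v ≠ 0 := by
        by_contra h
        push_neg at h
        rw [← Finset.add_sum_erase _ f humem] at hsum
        rw [Finset.sum_eq_zero h, add_zero, hfu1] at hsum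
        exact one_ne_zero hsum
      obtain ⟨v, hvmem, hv⟩ := hex
      have hvne : v ≠ u := Finset.ne_of_mem_erase hvmem
      have hvcomp : G.connectedComponentMk v = G.connectedComponentMk u :=
        (Finset.mem_filter.mp (Finset.mem_of_mem_erase hvmem)).2
      have hfv1 : f v = 1 := (zmod2_cases (f v)).resolve_left hv
      have hvS : v ∈ S := by by_contra h; exact hv (hsupp v h)
      have hreach : G.Reachable u v := (ConnectedComponent.exact hvcomp).symm
      set g : α → ZMod 2 := chiv u + chiv v with hg
      have hgPS : g ∈ PS := ⟨u, v, huS, hvS, hvne.symm, hreach, rfl⟩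
      set f' : α → ZMod 2 := f + g with hf'
      have hval : ∀ w, f' w = if w = u ∨ w = v then 0 else f w := by
        intro w
        have hfw : f' w = f w + ((if w = u then 1 else 0) + (if w = v then 1 else 0)) := by
          rw [hf', hg]
          simp only [Pi.add_apply, chiv_apply]
        by_cases hwu : w = u
        · rw [hfw, if_pos hwu, if_neg (by rw [hwu]; exact fun h => hvne h.symm),
            if_pos (Or.inl hwu), hwu, hfu1]
          decide
        · by_cases hwv : w = v
          · rw [hfw, if_neg hwu, if_pos hwv, if_pos (Or.inr hwv), hwv, hfv1]
            decide
          · rw [hfw, if_neg hwu, if_neg hwv, if_neg (by tauto)]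
            simp
      have hsub : (Finset.univ.filter (fun w => f' w ≠ 0)) ⊆
          ((Finset.univ.filter (fun w => f w ≠ 0)).erase u) := by
        intro w hw
        simp only [Finset.mem_filter, Finset.mem_univ, true_and] at hw
        rw [hval w] at hw
        by_cases h : w = u ∨ w = v
        · rw [if_pos h] at hw; exact absurd rfl hw
        · rw [if_neg h] at hw
          push_neg at h
          exact Finset.mem_erase.mpr ⟨h.1, by simp [hw]⟩
      have hlt : (Finset.univ.filter (fun w => f' w ≠ 0)).card < n := by
        calc (Finset.univ.filter (fun w => f' w ≠ 0)).card
            ≤ ((Finset.univ.filter (fun w => f w ≠ 0)).erase u).card := Finset.card_le_card hsub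
          _ < (Finset.univ.filter (fun w => f w ≠ 0)).card := by
              apply Finset.card_erase_lt_of_mem
              simp only [Finset.mem_filter, Finset.mem_univ, true_and]
              exact hu
          _ = n := hcard
      have hker' : compSum G f' = 0 := by
        rw [hf', map_add, hker, zero_add, hg]
        exact compSum_pair_eq_zero G hvcomp.symm
      have hsupp' : ∀ w, w ∉ S → f' w = 0 := by
        intro w hw
        rw [hval w]
        by_cases h : w = u ∨ w = v
        · rw [if_pos h]
        · rw [if_neg h]; exact hsupp w hw
      have hmem' : f' ∈ span (ZMod 2) PS := ih _ hlt f' rfl hker' hsupp'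
      have hfe : f = f' + g := by
        rw [hf']
        funext w
        show f w = (f w + g w) + g w
        have : ∀ x y : ZMod 2, x = (x + y) + y := by decide
        exact this _ _
      rw [hfe]
      exact add_mem hmem' (subset_span hgPS)

lemma ker_le_spanEdges (G : SimpleGraph α) :
    LinearMap.ker (compSum G) ≤ spanEdges G := by
  intro f hf
  have h1 := ker_supported_mem_span G Set.univ f (LinearMap.mem_ker.mp hf)
    (fun v hv => absurd (Set.mem_univ v) hv)
  refine span_le.mpr ?_ h1
  rintro g ⟨u, v, _, _, _, hre, rfl⟩
  exact reachable_chiv_mem G hre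

lemma spanEdges_eq_ker (G : SimpleGraph α) :
    spanEdges G = LinearMap.ker (compSum G) :=
  le_antisymm (spanEdges_le_ker G) (ker_le_spanEdges G)

open Classical in
lemma compSum_surjective (G : SimpleGraph α) : Function.Surjective (compSum G) := by
  haveI : Fintype G.ConnectedComponent := Fintype.ofFinite _
  have hout : ∀ c : G.ConnectedComponent, G.connectedComponentMk c.out = c := fun c => c.out_eq
  intro g
  refine ⟨fun v => if v = (G.connectedComponentMk v).out then g (G.connectedComponentMk v)
    else 0, ?_⟩
  funext c
  rw [compSum_apply]
  rw [Finset.sum_eq_single_of_mem c.out]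
  · rw [if_pos, hout c]
    rw [hout c]
  · exact Finset.mem_filter.mpr ⟨Finset.mem_univ _, hout c⟩
  · intro b hb hbne
    have hbc : G.connectedComponentMk b = c := (Finset.mem_filter.mp hb).2
    rw [if_neg]
    rw [hbc]
    exact fun h => hbne h
  
lemma nat_card_components (G : SimpleGraph α) :
    Nat.card G.ConnectedComponent + finrank (ZMod 2) (spanEdges G) = Fintype.card α := by
  classical
  haveI : Fact (Nat.Prime 2) := ⟨Nat.prime_two⟩
  haveI : Fintype G.ConnectedComponent := Fintype.ofFinite _
  have h1 := LinearMap.finrank_range_add_finrank_ker (compSum G)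
  have h2 : LinearMap.range (compSum G) = ⊤ :=
    LinearMap.range_eq_top.mpr (compSum_surjective G)
  rw [h2, finrank_top, finrank_fintype_fun_eq_card, finrank_fintype_fun_eq_card,
    ← spanEdges_eq_ker] at h1
  rw [Nat.card_eq_fintype_card]
  exact h1

end CompCount

end EncodingAux

namespace EncodingAux


section Strand
variable {V : Type*} [Fintype V] [DecidableEq V]
variable (A : Finset V) (E EF : Finset (Finset V)) (n : ℕ)

/-- the relation generated by a single slot -/
def slotD (x : Fin n → Finset V) (s : Fin n) (p q : V × Fin (n + 1)) : Prop :=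
    (p.1 = q.1 ∧ p.1 ∉ x s ∧ p.2 = Fin.castSucc s ∧ q.2 = Fin.succ s) ∨
    (x s ∈ E ∧ p.1 ∈ x s ∧ q.1 ∈ x s ∧ p.1 ≠ q.1 ∧
      ((p.2 = Fin.castSucc s ∧ q.2 = Fin.castSucc s) ∨
       (p.2 = Fin.succ s ∧ q.2 = Fin.succ s))) ∨
    (x s ∈ EF ∧ p.1 ∈ x s ∧ q.1 ∈ x s ∧ p.1 ≠ q.1 ∧
      p.2 = Fin.castSucc s ∧ q.2 = Fin.succ s)

variable {E EF n}

lemma slotD_congr {x₁ x₂ : Fin n → Finset V} {s : Fin n} (h : x₁ s = x₂ s) (p q) :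
    slotD E EF n x₁ s p q ↔ slotD E EF n x₂ s p q := by
  unfold slotD; rw [h]

lemma slotD_times {x : Fin n → Finset V} {s : Fin n} {p q} (h : slotD E EF n x s p q) :
    (p.2 = Fin.castSucc s ∨ p.2 = Fin.succ s) ∧ (q.2 = Fin.castSucc s ∨ q.2 = Fin.succ s) := by
  rcases h with ⟨_, _, h1, h2⟩ | ⟨_, _, _, _, ⟨h1, h2⟩ | ⟨h1, h2⟩⟩ | ⟨_, _, _, _, h1, h2⟩ <;>
    exact ⟨by tauto, by tauto⟩

lemma castSucc_ne_succ (s : Fin n) : Fin.castSucc s ≠ Fin.succ s :=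
  ne_of_lt (Fin.castSucc_lt_succ (i := s))

/-- the "port parity value" of a vertex relative to a slot -/
def cval (s : Fin n) (p : V × Fin (n + 1)) : Prop := (p.2 = Fin.castSucc s ↔ p.1 ∈ A)

variable (hE : ∀ e ∈ E, ∃ i j : V, i ∈ A ∧ j ∉ A ∧ e = {i, j})
variable (hEF : ∀ e ∈ EF, ∃ i j : V, i ≠ j ∧ ((i ∈ A ∧ j ∈ A) ∨ (i ∉ A ∧ j ∉ A)) ∧ e = {i, j})

include hE in
lemma mem_E_sides {e : Finset V} (he : e ∈ E) {a b : V} (ha : a ∈ e) (hb : b ∈ e)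
    (hab : a ≠ b) : (a ∈ A ↔ b ∉ A) := by
  obtain ⟨i, j, hiA, hjA, rfl⟩ := hE e he
  rw [Finset.mem_insert, Finset.mem_singleton] at ha hb
  rcases ha with rfl | rfl <;> rcases hb with rfl | rfl <;> tauto

include hEF in
lemma mem_EF_sides {e : Finset V} (he : e ∈ EF) {a b : V} (ha : a ∈ e) (hb : b ∈ e) :
    (a ∈ A ↔ b ∈ A) := by
  obtain ⟨i, j, hij, hside, rfl⟩ := hEF e he
  rw [Finset.mem_insert, Finset.mem_singleton] at ha hb
  rcases ha with rfl | rfl <;> rcases hb with rfl | rfl <;> tauto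

include hE hEF in
lemma slot_c {x : Fin n → Finset V} {s : Fin n} {p q} (h : slotD E EF n x s p q) :
    (cval A s p ↔ ¬ cval A s q) := by
  have hcs := castSucc_ne_succ s
  rcases h with ⟨h1, _, h2, h3⟩ | ⟨hm, hp1, hq1, hne, ⟨h2, h3⟩ | ⟨h2, h3⟩⟩ |
      ⟨hm, hp1, hq1, hne, h2, h3⟩
  · -- temporal
    unfold cval
    rw [h1, h2, h3]
    have h4 : ¬ (Fin.succ s = Fin.castSucc s) := fun hh => hcs hh.symm
    have h5 : Fin.castSucc s = Fin.castSucc s := rfl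
    tauto
  · -- bridge, lower
    have hside := mem_E_sides A hE hm hp1 hq1 hne
    unfold cval
    rw [h2, h3]
    have h5 : Fin.castSucc s = Fin.castSucc s := rfl
    tauto
  · -- bridge, upper
    have hside := mem_E_sides A hE hm hp1 hq1 hne
    unfold cval
    rw [h2, h3]
    have h4 : ¬ (Fin.succ s = Fin.castSucc s) := fun hc => hcs hc.symm
    have h5 : Fin.succ s = Fin.succ s := rfl
    tauto
  · -- crossing
    have hside := mem_EF_sides A hEF hm hp1 hq1
    unfold cval
    rw [h2, h3]
    have h4 : ¬ (Fin.succ s = Fin.castSucc s) := fun hc => hcs hc.symm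
    have h5 : Fin.castSucc s = Fin.castSucc s := rfl
    tauto

include hE hEF in
lemma not_E_and_EF {e : Finset V} (he : e ∈ E) (hf : e ∈ EF) : False := by
  obtain ⟨i, j, hiA, hjA, he'⟩ := hE e he
  have hij : i ≠ j := fun h => hjA (h ▸ hiA)
  have hi : i ∈ e := by rw [he']; simp
  have hj : j ∈ e := by rw [he']; simp
  exact hjA ((mem_EF_sides A hEF hf hi hj).mp hiA)

/-- symmetric normal form of the slot relation -/
lemma slot_sym_norm {x : Fin n → Finset V} {s : Fin n} {p q}
    (h : slotD E EF n x s p q ∨ slotD E EF n x s q p) :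
    (q.1 = p.1 ∧ p.1 ∉ x s ∧ ((p.2 = Fin.castSucc s ∧ q.2 = Fin.succ s) ∨
        (p.2 = Fin.succ s ∧ q.2 = Fin.castSucc s))) ∨
    (x s ∈ E ∧ p.1 ∈ x s ∧ q.1 ∈ x s ∧ q.1 ≠ p.1 ∧
        ((p.2 = Fin.castSucc s ∧ q.2 = Fin.castSucc s) ∨
         (p.2 = Fin.succ s ∧ q.2 = Fin.succ s))) ∨
    (x s ∈ EF ∧ p.1 ∈ x s ∧ q.1 ∈ x s ∧ q.1 ≠ p.1 ∧
        ((p.2 = Fin.castSucc s ∧ q.2 = Fin.succ s) ∨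
         (p.2 = Fin.succ s ∧ q.2 = Fin.castSucc s))) := by
  rcases h with h | h
  · rcases h with ⟨h1, h2, h3, h4⟩ | ⟨hm, hp1, hq1, hne, hor⟩ | ⟨hm, hp1, hq1, hne, h2, h3⟩
    · exact Or.inl ⟨h1.symm, h2, Or.inl ⟨h3, h4⟩⟩
    · exact Or.inr (Or.inl ⟨hm, hp1, hq1, hne.symm, hor⟩)
    · exact Or.inr (Or.inr ⟨hm, hp1, hq1, hne.symm, Or.inl ⟨h2, h3⟩⟩)
  · rcases h with ⟨h1, h2, h3, h4⟩ | ⟨hm, hq1, hp1, hne, hor⟩ | ⟨hm, hq1, hp1, hne, h2, h3⟩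
    · exact Or.inl ⟨h1, h1 ▸ h2, Or.inr ⟨h4, h3⟩⟩
    · exact Or.inr (Or.inl ⟨hm, hp1, hq1, hne, by tauto⟩)
    · exact Or.inr (Or.inr ⟨hm, hp1, hq1, hne, Or.inr ⟨h3, h2⟩⟩)

include hE hEF in
/-- each vertex has at most one neighbour through a given slot -/
lemma slot_det {x : Fin n → Finset V} {s : Fin n} {p q q'}
    (h1 : slotD E EF n x s p q ∨ slotD E EF n x s q p)
    (h2 : slotD E EF n x s p q' ∨ slotD E EF n x s q' p) : q = q' := by
  have hcs := castSucc_ne_succ s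
  have hn1 := slot_sym_norm h1
  have hn2 := slot_sym_norm h2
  clear h1 h2
  rcases hn1 with ⟨e1, e2, e3⟩ | ⟨hm, hp1, hq1, hne, hor⟩ | ⟨hm, hp1, hq1, hne, hor⟩ <;>
    rcases hn2 with ⟨f1, f2, f3⟩ | ⟨hm', hp1', hq1', hne', hor'⟩ | ⟨hm', hp1', hq1', hne', hor'⟩
  · -- temporal/temporal
    apply Prod.ext
    · rw [e1, f1]
    · rcases e3 with ⟨e3, e4⟩ | ⟨e3, e4⟩ <;> rcases f3 with ⟨f3, f4⟩ | ⟨f3, f4⟩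
      · rw [e4, f4]
      · exact absurd (e3 ▸ f3) hcs
      · exact absurd (f3 ▸ e3) hcs
      · rw [e4, f4]
  · exact absurd hp1' e2
  · exact absurd hp1' e2
  · exact absurd hp1 f2
  · -- bridge/bridge
    obtain ⟨i, j, hiA, hjA, hx⟩ := hE _ hm
    have hij : i ≠ j := fun h => hjA (h ▸ hiA)
    apply Prod.ext
    · -- q.1 = q'.1 : the unique element of {i,j} other than p.1
      have hp : p.1 = i ∨ p.1 = j := by
        have := hp1; rw [hx, Finset.mem_insert, Finset.mem_singleton] at this; exact this
      have hq : q.1 = i ∨ q.1 = j := by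
        have := hq1; rw [hx, Finset.mem_insert, Finset.mem_singleton] at this; exact this
      have hq' : q'.1 = i ∨ q'.1 = j := by
        have := hq1'; rw [hx, Finset.mem_insert, Finset.mem_singleton] at this; exact this
      rcases hp with hp | hp <;> rcases hq with hq | hq <;> rcases hq' with hq2 | hq2 <;>
        first
          | (exact hq.trans hq2.symm)
          | (exact absurd (hq.trans hp.symm) hne)
          | (exact absurd (hq2.trans hp.symm) hne')
    · rcases hor with ⟨e3, e4⟩ | ⟨e3, e4⟩ <;> rcases hor' with ⟨f3, f4⟩ | ⟨f3, f4⟩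
      · rw [e4, f4]
      · exact absurd (e3 ▸ f3) hcs
      · exact absurd (f3 ▸ e3) hcs
      · rw [e4, f4]
  · exact (not_E_and_EF A hE hEF hm hm').elim
  · exact absurd hp1 f2
  · exact (not_E_and_EF A hE hEF hm' hm).elim
  · -- crossing/crossing
    obtain ⟨i, j, hij, _, hx⟩ := hEF _ hm
    apply Prod.ext
    · have hp : p.1 = i ∨ p.1 = j := by
        have := hp1; rw [hx, Finset.mem_insert, Finset.mem_singleton] at this; exact this
      have hq : q.1 = i ∨ q.1 = j := by
        have := hq1; rw [hx, Finset.mem_insert, Finset.mem_singleton] at this; exact this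
      have hq' : q'.1 = i ∨ q'.1 = j := by
        have := hq1'; rw [hx, Finset.mem_insert, Finset.mem_singleton] at this; exact this
      rcases hp with hp | hp <;> rcases hq with hq | hq <;> rcases hq' with hq2 | hq2 <;>
        first
          | (exact hq.trans hq2.symm)
          | (exact absurd (hq.trans hp.symm) hne)
          | (exact absurd (hq2.trans hp.symm) hne')
    · rcases hor with ⟨e3, e4⟩ | ⟨e3, e4⟩ <;> rcases hor' with ⟨f3, f4⟩ | ⟨f3, f4⟩
      · rw [e4, f4]
      · exact absurd (e3 ▸ f3) hcs
      · exact absurd (f3 ▸ e3) hcs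
      · rw [e4, f4]

end Strand

/-- relation generated by a set of slots -/
def relOf {V : Type*} [DecidableEq V] (E EF : Finset (Finset V)) (n : ℕ)
    (SS : Fin n → Prop) (x : Fin n → Finset V) (p q : V × Fin (n + 1)) : Prop :=
  ∃ s, SS s ∧ slotD E EF n x s p q

section Strand2
variable {V : Type*} [Fintype V] [DecidableEq V]
variable (A : Finset V) {E EF : Finset (Finset V)} {n : ℕ}
variable (hE : ∀ e ∈ E, ∃ i j : V, i ∈ A ∧ j ∉ A ∧ e = {i, j})
variable (hEF : ∀ e ∈ EF, ∃ i j : V, i ≠ j ∧ ((i ∈ A ∧ j ∈ A) ∨ (i ∉ A ∧ j ∉ A)) ∧ e = {i, j})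

variable {SS : Fin n → Prop} {x : Fin n → Finset V}

lemma adj_ex {p q : V × Fin (n + 1)}
    (h : (SimpleGraph.fromRel (relOf E EF n SS x)).Adj p q) :
    p ≠ q ∧ ∃ s, SS s ∧ (slotD E EF n x s p q ∨ slotD E EF n x s q p) := by
  rw [fromRel_adj] at h
  obtain ⟨hne, h | h⟩ := h
  · obtain ⟨s, hs, hD⟩ := h
    exact ⟨hne, s, hs, Or.inl hD⟩
  · obtain ⟨s, hs, hD⟩ := h
    exact ⟨hne, s, hs, Or.inr hD⟩

include hE hEF in
/-- port-parity invariant along a path -/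
lemma walk_inv {w v : V × Fin (n + 1)}
    (p : (SimpleGraph.fromRel (relOf E EF n SS x)).Walk w v) :
    ∀ {u : V × Fin (n + 1)} (h : (SimpleGraph.fromRel (relOf E EF n SS x)).Adj u w),
    (SimpleGraph.Walk.cons h p).IsPath → ∀ s : Fin n, SS s →
    (slotD E EF n x s u w ∨ slotD E EF n x s w u) →
    ∃ s' : Fin n, SS s' ∧ (v.2 = Fin.castSucc s' ∨ v.2 = Fin.succ s') ∧
      (cval A s' v ↔ ¬ cval A s u) := by
  induction p with
  | nil =>
      intro u h hp s hSS hD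
      refine ⟨s, hSS, ?_, ?_⟩
      · rcases hD with hD | hD
        · exact (slotD_times hD).2
        · exact (slotD_times hD).1
      · rcases hD with hD | hD
        · have := slot_c A hE hEF hD; tauto
        · have := slot_c A hE hEF hD; tauto
  | @cons w w₂ v h' p'' ih =>
      intro u h hp s hSS hD
      obtain ⟨hne2, s₂, hSS₂, hD₂⟩ := adj_ex h'
      have hp' : (SimpleGraph.Walk.cons h' p'').IsPath :=
        ((SimpleGraph.Walk.cons_isPath_iff h _).mp hp).1
      have hunotin : u ∉ (SimpleGraph.Walk.cons h' p'').support :=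
        ((SimpleGraph.Walk.cons_isPath_iff h _).mp hp).2
      have hss2 : s ≠ s₂ := by
        rintro rfl
        have huw2 : u = w₂ := slot_det A hE hEF (by tauto) hD₂
        apply hunotin
        rw [huw2]
        rw [SimpleGraph.Walk.support_cons]
        exact List.mem_cons_of_mem _ (SimpleGraph.Walk.start_mem_support p'')
      -- port flip at w
      have hwt : w.2 = Fin.castSucc s ∨ w.2 = Fin.succ s := by
        rcases hD with hD | hD
        · exact (slotD_times hD).2
        · exact (slotD_times hD).1
      have hwt2 : w.2 = Fin.castSucc s₂ ∨ w.2 = Fin.succ s₂ := by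
        rcases hD₂ with hD | hD
        · exact (slotD_times hD).1
        · exact (slotD_times hD).2
      have hflip : cval A s₂ w ↔ ¬ cval A s w := by
        unfold cval
        rcases hwt with h1 | h1 <;> rcases hwt2 with h2 | h2
        · exact absurd (Fin.castSucc_inj.mp (h1 ▸ h2 : (Fin.castSucc s : Fin (n+1)) = Fin.castSucc s₂)) hss2
        · have hb1 : w.2 = Fin.castSucc s := h1
          have hb2 : w.2 ≠ Fin.castSucc s₂ := by
            rw [h2]; exact fun hc => (castSucc_ne_succ s₂) hc.symm
          tauto
        · have hb2 : w.2 = Fin.castSucc s₂ := h2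
          have hb1 : w.2 ≠ Fin.castSucc s := by
            rw [h1]; exact fun hc => (castSucc_ne_succ s) hc.symm
          tauto
        · exact absurd (Fin.succ_inj.mp (h1 ▸ h2 : (Fin.succ s : Fin (n+1)) = Fin.succ s₂)) hss2
      have hc1 : cval A s u ↔ ¬ cval A s w := by
        rcases hD with hD | hD
        · exact slot_c A hE hEF hD
        · have := slot_c A hE hEF hD; tauto
      obtain ⟨s', hSS', hvt, hcv⟩ := ih h' hp' s₂ hSS₂ hD₂
      exact ⟨s', hSS', hvt, by tauto⟩

include hE hEF in
/-- distinct reachable slice vertices lie on opposite sides of the partition -/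
lemma slice_opposite (τ : Fin (n + 1))
    (hport : (∀ s, SS s → Fin.castSucc s ≠ τ) ∨ (∀ s, SS s → Fin.succ s ≠ τ))
    {u v : V × Fin (n + 1)} (hu : u.2 = τ) (hv : v.2 = τ) (huv : u ≠ v)
    (hre : (SimpleGraph.fromRel (relOf E EF n SS x)).Reachable u v) :
    (u.1 ∈ A ↔ ¬ (v.1 ∈ A)) := by
  classical
  obtain ⟨pw⟩ := hre
  obtain ⟨pw, hpw⟩ := pw.toPath
  cases pw with
  | nil => exact absurd rfl huv
  | @cons _ w _ h q =>
      obtain ⟨hne, s, hSS, hD⟩ := adj_ex h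
      obtain ⟨s', hSS', hvt, hcv⟩ := walk_inv A hE hEF q h hpw s hSS hD
      have hut : u.2 = Fin.castSucc s ∨ u.2 = Fin.succ s := by
        rcases hD with hD | hD
        · exact (slotD_times hD).1
        · exact (slotD_times hD).2
      rcases hport with hport | hport
      · -- all ports at the slice are "down" (successor) ports
        have hu1 : u.2 = Fin.succ s := by
          rcases hut with h1 | h1
          · exact absurd (h1 ▸ hu : Fin.castSucc s = τ) (hport s hSS)
          · exact h1
        have hv1 : v.2 = Fin.succ s' := by
          rcases hvt with h1 | h1
          · exact absurd (h1 ▸ hv : Fin.castSucc s' = τ) (hport s' hSS')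
          · exact h1
        have hcu : cval A s u ↔ ¬ (u.1 ∈ A) := by
          unfold cval
          rw [hu1]
          have : ¬ (Fin.succ s = Fin.castSucc s) := fun hc => (castSucc_ne_succ s) hc.symm
          tauto
        have hcvv : cval A s' v ↔ ¬ (v.1 ∈ A) := by
          unfold cval
          rw [hv1]
          have : ¬ (Fin.succ s' = Fin.castSucc s') := fun hc => (castSucc_ne_succ s') hc.symm
          tauto
        tauto
      · -- all ports at the slice are "up" (castSucc) ports
        have hu1 : u.2 = Fin.castSucc s := by
          rcases hut with h1 | h1
          · exact h1
          · exact absurd (h1 ▸ hu : Fin.succ s = τ) (hport s hSS)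
        have hv1 : v.2 = Fin.castSucc s' := by
          rcases hvt with h1 | h1
          · exact h1
          · exact absurd (h1 ▸ hv : Fin.succ s' = τ) (hport s' hSS')
        have hcu : cval A s u ↔ (u.1 ∈ A) := by
          unfold cval
          rw [hu1]
          tauto
        have hcvv : cval A s' v ↔ (v.1 ∈ A) := by
          unfold cval
          rw [hv1]
          tauto
        tauto

end Strand2

end EncodingAux


namespace EncodingAux

set_option maxHeartbeats 1000000

section Supp
variable {α : Type*} [Fintype α] [DecidableEq α]

/-- submodule of functions supported where `P` holds -/
def suppIn (P : α → Prop) : Submodule (ZMod 2) (α → ZMod 2) where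
  carrier := {f | ∀ w, ¬ P w → f w = 0}
  add_mem' := by intro f g hf hg w hw; show f w + g w = 0; rw [hf w hw, hg w hw, add_zero]
  zero_mem' := fun w hw => rfl
  smul_mem' := by intro c f hf w hw; show c * f w = 0; rw [hf w hw, mul_zero]

lemma spanEdges_fromRel_le_suppIn (R : α → α → Prop) (P : α → Prop)
    (h : ∀ a b, R a b ∨ R b a → P a ∧ P b) :
    spanEdges (SimpleGraph.fromRel R) ≤ suppIn P := by
  rw [spanEdges, Submodule.span_le]
  rintro g ⟨a, b, hab, rfl⟩
  rw [SimpleGraph.fromRel_adj] at hab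
  obtain ⟨hPa, hPb⟩ := h a b hab.2
  intro w hw
  have hwa : w ≠ a := fun hc => hw (hc ▸ hPa)
  have hwb : w ≠ b := fun hc => hw (hc ▸ hPb)
  show chiv a w + chiv b w = 0
  rw [chiv_apply, chiv_apply, if_neg hwa, if_neg hwb, add_zero]

lemma spanEdges_sup (G₁ G₂ : SimpleGraph α) :
    spanEdges (G₁ ⊔ G₂) = spanEdges G₁ ⊔ spanEdges G₂ := by
  unfold spanEdges
  rw [← Submodule.span_union]
  congr 1
  ext g
  simp only [Set.mem_union, Set.mem_setOf_eq, SimpleGraph.sup_adj]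
  constructor
  · rintro ⟨a, b, h | h, rfl⟩
    · exact Or.inl ⟨a, b, h, rfl⟩
    · exact Or.inr ⟨a, b, h, rfl⟩
  · rintro (⟨a, b, h, rfl⟩ | ⟨a, b, h, rfl⟩)
    · exact ⟨a, b, Or.inl h, rfl⟩
    · exact ⟨a, b, Or.inr h, rfl⟩

end Supp

section Assemble
variable {V : Type*} [Fintype V] [DecidableEq V]
variable {E EF : Finset (Finset V)} {n : ℕ}

lemma strandRel_iff (x : Fin n → Finset V) (p q : V × Fin (n + 1)) :
    strandRel E EF n x p q ↔ ∃ s, slotD E EF n x s p q := Iff.rfl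

lemma strandGraph_eq_sup (x : Fin n → Finset V) (t : ℕ) :
    strandGraph E EF n x =
      SimpleGraph.fromRel (relOf E EF n (fun s => (s : ℕ) + 1 < t) x) ⊔
      SimpleGraph.fromRel (relOf E EF n (fun s => ¬ ((s : ℕ) + 1 < t)) x) := by
  ext p q
  simp only [strandGraph, SimpleGraph.fromRel_adj, SimpleGraph.sup_adj]
  constructor
  · rintro ⟨hne, h | h⟩
    · obtain ⟨s, hD⟩ := (strandRel_iff x p q).mp h
      by_cases hc : (s : ℕ) + 1 < t
      · exact Or.inl ⟨hne, Or.inl ⟨s, hc, hD⟩⟩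
      · exact Or.inr ⟨hne, Or.inl ⟨s, hc, hD⟩⟩
    · obtain ⟨s, hD⟩ := (strandRel_iff x q p).mp h
      by_cases hc : (s : ℕ) + 1 < t
      · exact Or.inl ⟨hne, Or.inr ⟨s, hc, hD⟩⟩
      · exact Or.inr ⟨hne, Or.inr ⟨s, hc, hD⟩⟩
  · rintro (⟨hne, h | h⟩ | ⟨hne, h | h⟩) <;> obtain ⟨s, hc, hD⟩ := h
    · exact ⟨hne, Or.inl ⟨s, hD⟩⟩
    · exact ⟨hne, Or.inr ⟨s, hD⟩⟩
    · exact ⟨hne, Or.inl ⟨s, hD⟩⟩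
    · exact ⟨hne, Or.inr ⟨s, hD⟩⟩

lemma relOf_congr {SS : Fin n → Prop} {x₁ x₂ : Fin n → Finset V}
    (h : ∀ s, SS s → x₁ s = x₂ s) :
    relOf E EF n SS x₁ = relOf E EF n SS x₂ := by
  funext p q
  apply propext
  constructor
  · rintro ⟨s, hs, hD⟩
    exact ⟨s, hs, (slotD_congr (h s hs) p q).mp hD⟩
  · rintro ⟨s, hs, hD⟩
    exact ⟨s, hs, (slotD_congr (h s hs) p q).mpr hD⟩

variable (A : Finset V)
variable (hE : ∀ e ∈ E, ∃ i j : V, i ∈ A ∧ j ∉ A ∧ e = {i, j})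
variable (hEF : ∀ e ∈ EF, ∃ i j : V, i ≠ j ∧ ((i ∈ A ∧ j ∈ A) ∨ (i ∉ A ∧ j ∉ A)) ∧ e = {i, j})

include hE hEF in
lemma inf_rank_le (x : Fin n → Finset V) (t : ℕ) (ht1 : 1 ≤ t) (ht2 : t ≤ n) :
    Module.finrank (ZMod 2)
      ↥(spanEdges (SimpleGraph.fromRel (relOf E EF n (fun s => (s : ℕ) + 1 < t) x)) ⊓
        spanEdges (SimpleGraph.fromRel (relOf E EF n (fun s => ¬ ((s : ℕ) + 1 < t)) x))) ≤
    A.card := by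
  classical
  haveI : Fact (Nat.Prime 2) := ⟨Nat.prime_two⟩
  set τ : Fin (n + 1) := ⟨t - 1, by omega⟩ with hτ
  set Gp := SimpleGraph.fromRel (relOf E EF n (fun s => (s : ℕ) + 1 < t) x) with hGp
  set Gs := SimpleGraph.fromRel (relOf E EF n (fun s => ¬ ((s : ℕ) + 1 < t)) x) with hGs
  -- support bounds
  have htimes : ∀ (SS : Fin n → Prop) (a b : V × Fin (n + 1)),
      (relOf E EF n SS x a b ∨ relOf E EF n SS x b a) →
      ∃ s, SS s ∧ (a.2 = Fin.castSucc s ∨ a.2 = Fin.succ s) ∧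
        (b.2 = Fin.castSucc s ∨ b.2 = Fin.succ s) := by
    rintro SS a b (⟨s, hs, hD⟩ | ⟨s, hs, hD⟩)
    · exact ⟨s, hs, (slotD_times hD).1, (slotD_times hD).2⟩
    · exact ⟨s, hs, (slotD_times hD).2, (slotD_times hD).1⟩
  have hP : spanEdges Gp ≤ suppIn (fun w : V × Fin (n + 1) => (w.2 : ℕ) < t) := by
    apply spanEdges_fromRel_le_suppIn
    intro a b hab
    obtain ⟨s, hs, ha, hb⟩ := htimes _ a b hab
    constructor
    · rcases ha with h | h <;> rw [h] <;> simp only [Fin.coe_castSucc, Fin.val_succ] <;> omega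
    · rcases hb with h | h <;> rw [h] <;> simp only [Fin.coe_castSucc, Fin.val_succ] <;> omega
  have hS : spanEdges Gs ≤ suppIn (fun w : V × Fin (n + 1) => t ≤ (w.2 : ℕ) + 1) := by
    apply spanEdges_fromRel_le_suppIn
    intro a b hab
    obtain ⟨s, hs, ha, hb⟩ := htimes _ a b hab
    simp only [not_lt] at hs
    constructor
    · rcases ha with h | h <;> rw [h] <;> simp only [Fin.coe_castSucc, Fin.val_succ] <;> omega
    · rcases hb with h | h <;> rw [h] <;> simp only [Fin.coe_castSucc, Fin.val_succ] <;> omega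
  -- the parity claim for the prefix graph
  have hclaim : ∀ u v : V × Fin (n + 1), u.2 = τ → v.2 = τ → u ≠ v →
      Gp.Reachable u v → (u.1 ∈ A ↔ ¬ (v.1 ∈ A)) := by
    intro u v hu hv huv hre
    apply slice_opposite A hE hEF τ _ hu hv huv hre
    left
    intro s hs hc
    have : (s : ℕ) = t - 1 := by
      have := congrArg Fin.val hc
      simpa using this
    omega
  -- pair set
  set PS : Set ((V × Fin (n + 1)) → ZMod 2) :=
    {g | ∃ u v : V × Fin (n + 1), u ∈ {w : V × Fin (n + 1) | w.2 = τ} ∧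
      v ∈ {w : V × Fin (n + 1) | w.2 = τ} ∧ u ≠ v ∧ Gp.Reachable u v ∧
      g = chiv u + chiv v} with hPS
  have hle : spanEdges Gp ⊓ spanEdges Gs ≤ Submodule.span (ZMod 2) PS := by
    intro f hf
    have hker : compSum Gp f = 0 := LinearMap.mem_ker.mp (spanEdges_le_ker Gp hf.1)
    have hsupp : ∀ w, w ∉ {w : V × Fin (n + 1) | w.2 = τ} → f w = 0 := by
      intro w hw
      simp only [Set.mem_setOf_eq] at hw
      by_cases h1 : (w.2 : ℕ) < t
      · by_cases h2 : t ≤ (w.2 : ℕ) + 1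
        · exfalso
          apply hw
          apply Fin.ext
          show (w.2 : ℕ) = t - 1
          omega
        · exact hS hf.2 w h2
      · exact hP hf.1 w h1
    exact ker_supported_mem_span Gp _ f hker hsupp
  -- partner choice function
  set φ : V → ((V × Fin (n + 1)) → ZMod 2) := fun a =>
    if h : ∃ v : V × Fin (n + 1), v.2 = τ ∧ v ≠ (a, τ) ∧ Gp.Reachable (a, τ) v then
      chiv ((a, τ) : V × Fin (n + 1)) + chiv h.choose else 0 with hφdef
  have hφ : ∀ u v : V × Fin (n + 1), u.2 = τ → v.2 = τ → u ≠ v → Gp.Reachable u v →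
      u.1 ∈ A → φ u.1 = chiv u + chiv v := by
    intro u v hu hv huv hre huA
    have hue : ((u.1, τ) : V × Fin (n + 1)) = u := by
      rw [← hu]
    have hex : ∃ w : V × Fin (n + 1), w.2 = τ ∧ w ≠ (u.1, τ) ∧
        Gp.Reachable (u.1, τ) w := by
      refine ⟨v, hv, ?_, ?_⟩
      · rw [hue]; exact fun hc => huv hc.symm
      · rw [hue]; exact hre
    have hφu : φ u.1 = chiv ((u.1, τ) : V × Fin (n + 1)) + chiv hex.choose := by
      rw [hφdef]; exact dif_pos hex
    rw [hφu]
    obtain ⟨h1, h2, h3⟩ := hex.choose_spec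
    generalize hg : hex.choose = v₀ at h1 h2 h3 ⊢
    rw [hue] at h2 h3
    have hv0 : v₀ = v := by
      by_contra hv0v
      have c1 := hclaim u v₀ hu h1 (fun hc => h2 hc.symm) h3
      have c2 := hclaim v₀ v h1 hv hv0v (h3.symm.trans hre)
      have c3 := hclaim u v hu hv huv hre
      tauto
    rw [hv0, hue]
  have hPSsub : PS ⊆ ↑(A.image φ) := by
    rintro g ⟨u, v, hu, hv, huv, hre, rfl⟩
    simp only [Set.mem_setOf_eq] at hu hv
    have hside := hclaim u v hu hv huv hre
    by_cases huA : u.1 ∈ A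
    · exact Finset.mem_coe.mpr (Finset.mem_image.mpr
        ⟨u.1, huA, (hφ u v hu hv huv hre huA).symm ▸ rfl⟩)
    · have hvA : v.1 ∈ A := by tauto
      refine Finset.mem_coe.mpr (Finset.mem_image.mpr ⟨v.1, hvA, ?_⟩)
      rw [hφ v u hv hu (Ne.symm huv) hre.symm hvA]
      exact add_comm _ _
  have hfinal : spanEdges Gp ⊓ spanEdges Gs ≤
      Submodule.span (ZMod 2) ↑(A.image φ) :=
    le_trans hle (Submodule.span_mono hPSsub)
  calc Module.finrank (ZMod 2) ↥(spanEdges Gp ⊓ spanEdges Gs)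
      ≤ Module.finrank (ZMod 2) ↥(Submodule.span (ZMod 2) (↑(A.image φ) :
          Set ((V × Fin (n + 1)) → ZMod 2))) := Submodule.finrank_mono hfinal
    _ ≤ (A.image φ).card := finrank_span_finset_le_card (A.image φ)
    _ ≤ A.card := Finset.card_image_le

end Assemble

end EncodingAux


open EncodingAux in
/-- Encoding inequality for the left-to-right canonical paths in the
general case with ferromagnetic edges and vertex operators: for configurations `x, y`
and a cut position `t ∈ {1,…,2B}`, the hybrid configurations
`z = (y_1,…,y_{t−1},x_t,…,x_{2B})` and `η = (x_1,…,x_{t−1},y_t,…,y_{2B})` satisfy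
`L(x) + L(y) ≤ L(z) + L(η) + 8|𝒜| − 4`, equivalently
`2^{L(x)}·2^{L(y)} ≤ 2^{8|𝒜|−4}·2^{L(z)}·2^{L(η)}`. -/
theorem encoding_inequality_general [Fintype V] [DecidableEq V]
    (A : Finset V) (E EF : Finset (Finset V))
    (hE : ∀ e ∈ E, ∃ i j : V, i ∈ A ∧ j ∉ A ∧ e = {i, j})
    (hEF : ∀ e ∈ EF, ∃ i j : V, i ≠ j ∧ ((i ∈ A ∧ j ∈ A) ∨ (i ∉ A ∧ j ∉ A)) ∧ e = {i, j})
    (hA : 1 ≤ A.card) (hAB : A.card ≤ Aᶜ.card)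
    (B : ℕ) (hB : 0 < B)
    (x y : Fin (2 * B) → Finset V)
    (hx : ∀ t, x t ∈ E ∪ EF ∨ ∃ i : V, x t = ({i} : Finset V))
    (hy : ∀ t, y t ∈ E ∪ EF ∨ ∃ i : V, y t = ({i} : Finset V))
    (t : ℕ) (ht1 : 1 ≤ t) (ht2 : t ≤ 2 * B) :
    numLoops E EF (2 * B) x + numLoops E EF (2 * B) y ≤
      numLoops E EF (2 * B) (fun s => if (s : ℕ) + 1 < t then y s else x s) +
      numLoops E EF (2 * B) (fun s => if (s : ℕ) + 1 < t then x s else y s) +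
      (8 * A.card - 4) ∧
    2 ^ numLoops E EF (2 * B) x * 2 ^ numLoops E EF (2 * B) y ≤
      2 ^ (8 * A.card - 4) *
        (2 ^ numLoops E EF (2 * B) (fun s => if (s : ℕ) + 1 < t then y s else x s) *
         2 ^ numLoops E EF (2 * B) (fun s => if (s : ℕ) + 1 < t then x s else y s)) := by
  classical
  haveI : Fact (Nat.Prime 2) := ⟨Nat.prime_two⟩
  open EncodingAux in
  have MAIN : numLoops E EF (2 * B) x + numLoops E EF (2 * B) y ≤
      numLoops E EF (2 * B) (fun s => if (s : ℕ) + 1 < t then y s else x s) +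
      numLoops E EF (2 * B) (fun s => if (s : ℕ) + 1 < t then x s else y s) +
      (8 * A.card - 4) := by
    set z : Fin (2 * B) → Finset V := fun s => if (s : ℕ) + 1 < t then y s else x s with hz
    set η : Fin (2 * B) → Finset V := fun s => if (s : ℕ) + 1 < t then x s else y s with hη
    set pre : Fin (2 * B) → Prop := fun s => (s : ℕ) + 1 < t with hpre
    set suf : Fin (2 * B) → Prop := fun s => ¬ ((s : ℕ) + 1 < t) with hsuf
    set a := spanEdges (SimpleGraph.fromRel (relOf E EF (2 * B) pre x)) with ha
    set b := spanEdges (SimpleGraph.fromRel (relOf E EF (2 * B) suf x)) with hb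
    set c := spanEdges (SimpleGraph.fromRel (relOf E EF (2 * B) pre y)) with hc
    set d := spanEdges (SimpleGraph.fromRel (relOf E EF (2 * B) suf y)) with hd
    have hzp : relOf E EF (2 * B) pre z = relOf E EF (2 * B) pre y :=
      relOf_congr (fun s hs => if_pos hs)
    have hzs : relOf E EF (2 * B) suf z = relOf E EF (2 * B) suf x :=
      relOf_congr (fun s hs => if_neg hs)
    have hηp : relOf E EF (2 * B) pre η = relOf E EF (2 * B) pre x :=
      relOf_congr (fun s hs => if_pos hs)
    have hηs : relOf E EF (2 * B) suf η = relOf E EF (2 * B) suf y :=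
      relOf_congr (fun s hs => if_neg hs)
    have hsplit : ∀ w : Fin (2 * B) → Finset V,
        spanEdges (strandGraph E EF (2 * B) w) =
        spanEdges (SimpleGraph.fromRel (relOf E EF (2 * B) pre w)) ⊔
        spanEdges (SimpleGraph.fromRel (relOf E EF (2 * B) suf w)) := by
      intro w
      rw [strandGraph_eq_sup w t, spanEdges_sup]
    have e1 := nat_card_components (strandGraph E EF (2 * B) x)
    have e2 := nat_card_components (strandGraph E EF (2 * B) y)
    have e3 := nat_card_components (strandGraph E EF (2 * B) z)
    have e4 := nat_card_components (strandGraph E EF (2 * B) η)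
    rw [hsplit x, ← ha, ← hb] at e1
    rw [hsplit y, ← hc, ← hd] at e2
    rw [hsplit z, hzp, hzs, ← hc, ← hb] at e3
    rw [hsplit η, hηp, hηs, ← ha, ← hd] at e4
    have f1 := Submodule.finrank_sup_add_finrank_inf_eq a b
    have f2 := Submodule.finrank_sup_add_finrank_inf_eq c d
    have f3 := Submodule.finrank_sup_add_finrank_inf_eq c b
    have f4 := Submodule.finrank_sup_add_finrank_inf_eq a d
    have g1 : Module.finrank (ZMod 2) ↥(a ⊓ b) ≤ A.card :=
      inf_rank_le A hE hEF x t ht1 ht2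
    have g2 : Module.finrank (ZMod 2) ↥(c ⊓ d) ≤ A.card :=
      inf_rank_le A hE hEF y t ht1 ht2
    change Nat.card (strandGraph E EF (2 * B) x).ConnectedComponent +
      Nat.card (strandGraph E EF (2 * B) y).ConnectedComponent ≤
      Nat.card (strandGraph E EF (2 * B) z).ConnectedComponent +
      Nat.card (strandGraph E EF (2 * B) η).ConnectedComponent + (8 * A.card - 4)
    omega
  refine ⟨MAIN, ?_⟩
  calc 2 ^ numLoops E EF (2 * B) x * 2 ^ numLoops E EF (2 * B) y
      = 2 ^ (numLoops E EF (2 * B) x + numLoops E EF (2 * B) y) := (pow_add 2 _ _).symm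
    _ ≤ 2 ^ (numLoops E EF (2 * B) (fun s => if (s : ℕ) + 1 < t then y s else x s) +
          numLoops E EF (2 * B) (fun s => if (s : ℕ) + 1 < t then x s else y s) +
          (8 * A.card - 4)) := Nat.pow_le_pow_right (by norm_num) MAIN
    _ = 2 ^ (8 * A.card - 4) *
        (2 ^ numLoops E EF (2 * B) (fun s => if (s : ℕ) + 1 < t then y s else x s) *
         2 ^ numLoops E EF (2 * B) (fun s => if (s : ℕ) + 1 < t then x s else y s)) := by
        rw [pow_add, pow_add, mul_comm]
end

section
/- Let A be a positive semidefinite Hermitian matrix on ℂ^d with d ≤ 2^N, largest eigenvalue λ₀ > 0, let ψ₀ be a unit eigenvector for λ₀, let v be a unit vector with w := |⟨ψ₀, v⟩|² > 0, let ε ∈ (0, λ₀], and let Π be the spectral projection of A onto eigenvalues strictly less than λ₀ − ε. Define the normalized vector M_B = A^B v / ‖A^B v‖. Then ⟨M_B, Π M_B⟩ ≤ (d−1) w^{−1} (1 − ε/λ₀)^{2B} ≤ e^{N − 2Bε/λ₀ − ln w}. In particular, for any δ ∈ (0,1), if B ≥ (λ₀/(2ε)) (N + ln(1/(δw))), then ⟨M_B,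 Π M_B⟩ ≤ δ, and hence ⟨M_B, (I − Π) M_B⟩ ≥ 1 − δ. -/
open Matrix
open scoped ComplexOrder

private lemma sumMulVec {d e : ℕ} (S : Finset (Fin d)) (M : Fin d → Matrix (Fin e) (Fin e) ℂ)
    (x : Fin e → ℂ) : (∑ i ∈ S, M i) *ᵥ x = ∑ i ∈ S, (M i *ᵥ x) := by
  ext j
  simp only [mulVec, dotProduct, Finset.sum_apply, Finset.sum_mul, Matrix.sum_apply]
  rw [Finset.sum_comm]

private lemma vecMulVecMulVec {e : ℕ} (a b x : Fin e → ℂ) :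
    (vecMulVec a b) *ᵥ x = (b ⬝ᵥ x) • a := by
  ext j
  simp [mulVec, dotProduct, vecMulVec_apply, Finset.mul_sum, mul_comm, mul_left_comm]

private lemma ip_conj {e : ℕ} (x y : Fin e → ℂ) :
    star x ⬝ᵥ y = starRingEnd ℂ (star y ⬝ᵥ x) := by
  simp [dotProduct, map_sum, mul_comm]

private lemma ip_self_re {e : ℕ} (x : Fin e → ℂ) :
    (star x ⬝ᵥ x).re = ∑ i, Complex.normSq (x i) := by
  simp [dotProduct, Complex.re_sum, Complex.normSq_apply]

private lemma eigPow {e : ℕ} (A : Matrix (Fin e) (Fin e) ℂ) (x : Fin e → ℂ) (c : ℂ)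
    (h : A *ᵥ x = c • x) (B : ℕ) : (A ^ B) *ᵥ x = c ^ B • x := by
  induction B with
  | zero => simp
  | succ n ih =>
      rw [pow_succ, ← Matrix.mulVec_mulVec, h, mulVec_smul, ih, smul_smul, ← pow_succ']

private lemma hermDot {e : ℕ} (M : Matrix (Fin e) (Fin e) ℂ) (hM : Mᴴ = M)
    (x y : Fin e → ℂ) (c : ℝ) (h : M *ᵥ x = (c : ℂ) • x) :
    star x ⬝ᵥ (M *ᵥ y) = (c : ℂ) * (star x ⬝ᵥ y) := by
  rw [Matrix.dotProduct_mulVec]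
  have : star x ᵥ* M = star ((c:ℂ) • x) := by
    rw [← h, Matrix.star_mulVec, hM]
  rw [this]
  simp [smul_dotProduct]

private lemma dpSumR {e d : ℕ} (x : Fin e → ℂ) (S : Finset (Fin d)) (f : Fin d → Fin e → ℂ) :
    x ⬝ᵥ (∑ i ∈ S, f i) = ∑ i ∈ S, x ⬝ᵥ f i := by
  simp only [dotProduct, Finset.sum_apply, Finset.mul_sum]
  exact Finset.sum_comm

private lemma dpSumL {e d : ℕ} (x : Fin e → ℂ) (S : Finset (Fin d)) (f : Fin d → Fin e → ℂ) :
    (∑ i ∈ S, f i) ⬝ᵥ x = ∑ i ∈ S, f i ⬝ᵥ x := by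
  simp only [dotProduct, Finset.sum_apply, Finset.sum_mul]
  exact Finset.sum_comm

private lemma bessel {e : ℕ} (u : Fin e → Fin e → ℂ) (S : Finset (Fin e))
    (hS : ∀ i ∈ S, ∀ j ∈ S, star (u i) ⬝ᵥ u j = if i = j then (1:ℂ) else 0)
    (v : Fin e → ℂ) :
    ∑ i ∈ S, Complex.normSq (star (u i) ⬝ᵥ v) ≤ (star v ⬝ᵥ v).re := by
  set c : Fin e → ℂ := fun i => star (u i) ⬝ᵥ v with hc
  set T : Fin e → ℂ := ∑ i ∈ S, c i • u i with hT
  have hstarT : star T = ∑ i ∈ S, (starRingEnd ℂ (c i)) • star (u i) := by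
    rw [hT, star_sum]
    refine Finset.sum_congr rfl fun i _ => ?_
    ext j
    simp [mul_comm]
  have hvT : star v ⬝ᵥ T = ∑ i ∈ S, (Complex.normSq (c i) : ℂ) := by
    rw [hT, dpSumR]
    refine Finset.sum_congr rfl fun i hi => ?_
    have h2 : star (u i) ⬝ᵥ v = c i := rfl
    rw [dotProduct_smul, ip_conj v (u i), h2, smul_eq_mul, Complex.mul_conj]
  have hTv : star T ⬝ᵥ v = ∑ i ∈ S, (Complex.normSq (c i) : ℂ) := by
    rw [hstarT, dpSumL]
    refine Finset.sum_congr rfl fun i hi => ?_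
    have h2 : star (u i) ⬝ᵥ v = c i := rfl
    rw [smul_dotProduct, h2, smul_eq_mul, mul_comm, Complex.mul_conj]
  have hTT : star T ⬝ᵥ T = ∑ i ∈ S, (Complex.normSq (c i) : ℂ) := by
    rw [hstarT, dpSumL]
    refine Finset.sum_congr rfl fun i hi => ?_
    rw [hT, smul_dotProduct, dpSumR]
    have : ∀ j ∈ S, star (u i) ⬝ᵥ (c j • u j) = if i = j then c i else 0 := by
      intro j hj
      rw [dotProduct_smul, hS i hi j hj, smul_eq_mul]
      by_cases h : i = j <;> simp [h]
    rw [Finset.sum_congr rfl this, Finset.sum_ite_eq S i (fun _ => c i), if_pos hi]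
    rw [smul_eq_mul, mul_comm, Complex.mul_conj]
  have key : star (v - T) ⬝ᵥ (v - T)
      = star v ⬝ᵥ v - ∑ i ∈ S, (Complex.normSq (c i) : ℂ) := by
    rw [star_sub, sub_dotProduct, dotProduct_sub, dotProduct_sub,
      hvT, hTv, hTT]
    ring
  have h0 : 0 ≤ (star (v - T) ⬝ᵥ (v - T)).re := by
    rw [ip_self_re]
    exact Finset.sum_nonneg fun i _ => Complex.normSq_nonneg _
  rw [key] at h0
  simp only [Complex.sub_re, Complex.re_sum, Complex.ofReal_re] at h0
  linarith

private lemma ip_smul_re {e : ℕ} (r : ℝ) (x z : Fin e → ℂ) :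
    (star ((r:ℂ) • x) ⬝ᵥ ((r:ℂ) • z)).re = r * r * (star x ⬝ᵥ z).re := by
  have : star ((r:ℂ) • x) = (r:ℂ) • star x := by
    ext j; simp [Complex.conj_ofReal]
  rw [this, smul_dotProduct, dotProduct_smul, smul_eq_mul, smul_eq_mul,
    ← mul_assoc, ← Complex.ofReal_mul, Complex.re_ofReal_mul]


/-- Leakage of the normalized power-method state `M_B = A^B v / ‖A^B v‖`
out of the spectral subspace of eigenvalues `≥ λ₀ − ε`:
`⟨M_B, Π M_B⟩ ≤ (d−1) w⁻¹ (1 − ε/λ₀)^{2B} ≤ e^{N − 2Bε/λ₀ − ln w}`, and in particular if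
`B ≥ (λ₀/(2ε))(N + ln(1/(δw)))` then `⟨M_B, Π M_B⟩ ≤ δ` and `⟨M_B, (I−Π) M_B⟩ ≥ 1 − δ`. -/
theorem power_method_projection {d N : ℕ} (hd : d ≤ 2 ^ N)
    (A : Matrix (Fin d) (Fin d) ℂ) (hA : A.PosSemidef)
    (u : Fin d → Fin d → ℂ) (μ : Fin d → ℝ)
    (hortho : ∀ i j, star (u i) ⬝ᵥ u j = if i = j then (1 : ℂ) else 0)
    (heig : ∀ i, A *ᵥ u i = (μ i : ℂ) • u i)
    (lam0 : ℝ) (hmax : ∀ i, μ i ≤ lam0)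
    (ψ₀ : Fin d → ℂ) (hψ : star ψ₀ ⬝ᵥ ψ₀ = 1) (hψeig : A *ᵥ ψ₀ = (lam0 : ℂ) • ψ₀)
    (v : Fin d → ℂ) (hv : star v ⬝ᵥ v = 1)
    (w : ℝ) (hw : w = Complex.normSq (star ψ₀ ⬝ᵥ v)) (hwpos : 0 < w)
    (B : ℕ) (hB : 0 < B) (ε : ℝ) (hε1 : 0 < ε) (hε2 : ε ≤ lam0) :
    let Pi : Matrix (Fin d) (Fin d) ℂ :=
      ∑ i ∈ Finset.univ.filter (fun i => μ i < lam0 - ε), vecMulVec (u i) (star (u i));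
    let MB : Fin d → ℂ :=
      (((Real.sqrt ((star ((A ^ B) *ᵥ v) ⬝ᵥ ((A ^ B) *ᵥ v)).re))⁻¹ : ℝ) : ℂ) •
        ((A ^ B) *ᵥ v);
    (star MB ⬝ᵥ (Pi *ᵥ MB)).re ≤ ((d : ℝ) - 1) * w⁻¹ * (1 - ε / lam0) ^ (2 * B) ∧
    ((d : ℝ) - 1) * w⁻¹ * (1 - ε / lam0) ^ (2 * B) ≤
      Real.exp ((N : ℝ) - 2 * B * ε / lam0 - Real.log w) ∧
    ∀ δ : ℝ, 0 < δ → δ < 1 →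
      (lam0 / (2 * ε)) * ((N : ℝ) + Real.log (1 / (δ * w))) ≤ (B : ℝ) →
      (star MB ⬝ᵥ (Pi *ᵥ MB)).re ≤ δ ∧
      1 - δ ≤ (star MB ⬝ᵥ (((1 : Matrix (Fin d) (Fin d) ℂ) - Pi) *ᵥ MB)).re := by
  intro Pi MB
  have hlam : 0 < lam0 := lt_of_lt_of_le hε1 hε2
  have hd0 : 0 < d := by
    rcases Nat.eq_zero_or_pos d with h | h
    · subst h
      simp [dotProduct] at hψ
    · exact h
  set S : Finset (Fin d) := Finset.univ.filter (fun i => μ i < lam0 - ε) with hSdef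
  set y : Fin d → ℂ := (A ^ B) *ᵥ v with hy
  set c : Fin d → ℂ := fun i => star (u i) ⬝ᵥ v with hc
  set n2 : ℝ := (star y ⬝ᵥ y).re with hn2def
  have hApowH : (A ^ B)ᴴ = A ^ B := (hA.pow B).1
  -- eigenvalues nonnegative
  have hμnn : ∀ i, 0 ≤ μ i := by
    intro i
    have h := hA.dotProduct_mulVec_nonneg (u i)
    rw [heig i, dotProduct_smul, hortho i i, if_pos rfl, smul_eq_mul, mul_one] at h
    exact Complex.zero_le_real.mp h
  -- eigen decomposition of coefficients
  have hci : ∀ i, star (u i) ⬝ᵥ y = ((μ i ^ B : ℝ) : ℂ) * c i := by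
    intro i
    rw [hy]
    refine hermDot (A ^ B) hApowH (u i) v (μ i ^ B) ?_
    rw [eigPow A (u i) ((μ i : ℝ) : ℂ) (heig i) B]
    norm_cast
  have hψy : star ψ₀ ⬝ᵥ y = ((lam0 ^ B : ℝ) : ℂ) * (star ψ₀ ⬝ᵥ v) := by
    rw [hy]
    refine hermDot (A ^ B) hApowH ψ₀ v (lam0 ^ B) ?_
    rw [eigPow A ψ₀ ((lam0 : ℝ) : ℂ) hψeig B]
    norm_cast
  -- numerator
  have hPiy : Pi *ᵥ y = ∑ i ∈ S, (star (u i) ⬝ᵥ y) • u i := by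
    show (∑ i ∈ S, vecMulVec (u i) (star (u i))) *ᵥ y = _
    rw [sumMulVec]
    exact Finset.sum_congr rfl fun i _ => vecMulVecMulVec (u i) (star (u i)) y
  have hNumC : star y ⬝ᵥ (Pi *ᵥ y)
      = ∑ i ∈ S, (Complex.normSq (((μ i ^ B : ℝ) : ℂ) * c i) : ℂ) := by
    rw [hPiy, dpSumR]
    refine Finset.sum_congr rfl fun i _ => ?_
    rw [dotProduct_smul, ip_conj y (u i), smul_eq_mul, Complex.mul_conj, hci i]
  have hNum : (star y ⬝ᵥ (Pi *ᵥ y)).re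
      = ∑ i ∈ S, (μ i ^ B * μ i ^ B) * Complex.normSq (c i) := by
    rw [hNumC, Complex.re_sum]
    refine Finset.sum_congr rfl fun i _ => ?_
    rw [Complex.ofReal_re, Complex.normSq_mul, Complex.normSq_ofReal]
  have hNumnn : 0 ≤ ∑ i ∈ S, (μ i ^ B * μ i ^ B) * Complex.normSq (c i) :=
    Finset.sum_nonneg fun i _ => mul_nonneg
      (mul_nonneg (pow_nonneg (hμnn i) B) (pow_nonneg (hμnn i) B)) (Complex.normSq_nonneg _)
  -- denominator lower bound
  have hn2ge : lam0 ^ B * lam0 ^ B * w ≤ n2 := by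
    have hb := bessel (fun _ : Fin d => ψ₀) {(⟨0, hd0⟩ : Fin d)}
      (fun i hi j hj => by
        rcases Finset.mem_singleton.mp hi with rfl
        rcases Finset.mem_singleton.mp hj with rfl
        simpa using hψ) y
    rw [Finset.sum_singleton, hψy, Complex.normSq_mul, Complex.normSq_ofReal, ← hw] at hb
    exact hb
  have hn2pos : 0 < n2 := lt_of_lt_of_le (mul_pos (mul_pos (pow_pos hlam B) (pow_pos hlam B)) hwpos) hn2ge
  -- MB inner products
  have hrr : (Real.sqrt n2)⁻¹ * (Real.sqrt n2)⁻¹ = n2⁻¹ := by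
    rw [← mul_inv, Real.mul_self_sqrt hn2pos.le]
  have hMB : MB = (((Real.sqrt n2)⁻¹ : ℝ) : ℂ) • y := rfl
  have hMBPi : (star MB ⬝ᵥ (Pi *ᵥ MB)).re = n2⁻¹ * (star y ⬝ᵥ (Pi *ᵥ y)).re := by
    rw [hMB, mulVec_smul, ip_smul_re, hrr]
  have hMBself : (star MB ⬝ᵥ MB).re = 1 := by
    rw [hMB, ip_smul_re, hrr, ← hn2def, inv_mul_cancel₀ (ne_of_gt hn2pos)]
  have hMBsub : (star MB ⬝ᵥ (((1 : Matrix (Fin d) (Fin d) ℂ) - Pi) *ᵥ MB)).re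
      = 1 - (star MB ⬝ᵥ (Pi *ᵥ MB)).re := by
    rw [Matrix.sub_mulVec, Matrix.one_mulVec, dotProduct_sub, Complex.sub_re, hMBself]
  -- orthogonality of ψ₀ to the deep eigenvectors
  have horthS : ∀ i ∈ S, star (u i) ⬝ᵥ ψ₀ = 0 := by
    intro i hi
    have hilt : μ i < lam0 - ε := (Finset.mem_filter.mp hi).2
    have e1 : star (u i) ⬝ᵥ (A *ᵥ ψ₀) = (lam0 : ℂ) * (star (u i) ⬝ᵥ ψ₀) := by
      rw [hψeig, dotProduct_smul, smul_eq_mul]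
    have e2 : star (u i) ⬝ᵥ (A *ᵥ ψ₀) = ((μ i : ℝ) : ℂ) * (star (u i) ⬝ᵥ ψ₀) :=
      hermDot A hA.1 (u i) ψ₀ (μ i) (heig i)
    have e3 : ((lam0 : ℂ) - (μ i : ℂ)) * (star (u i) ⬝ᵥ ψ₀) = 0 := by
      rw [sub_mul, ← e1, ← e2, sub_self]
    rcases mul_eq_zero.mp e3 with h | h
    · exfalso
      have : (lam0 : ℂ) = (μ i : ℂ) := by linear_combination h
      have : lam0 = μ i := by exact_mod_cast this
      linarith
    · exact h
  -- key bound on the numerator sum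
  have hKey : ∑ i ∈ S, (μ i ^ B * μ i ^ B) * Complex.normSq (c i)
      ≤ ((d : ℝ) - 1) * ((lam0 - ε) ^ B * (lam0 - ε) ^ B) := by
    rcases Nat.lt_or_ge d 2 with h2 | h2
    · -- d = 1 : S is empty
      have hd1 : d = 1 := by omega
      subst hd1
      have hSempty : S = ∅ := by
        refine Finset.eq_empty_of_forall_notMem fun i hi => ?_
        have h0 := horthS i hi
        have hu : Complex.normSq (u i 0) = 1 := by
          have := hortho i i
          rw [if_pos rfl] at this
          have := congrArg Complex.re this
          simpa [dotProduct, Complex.normSq_apply, Complex.mul_re] using this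
        have hp : Complex.normSq (ψ₀ 0) = 1 := by
          have := congrArg Complex.re hψ
          simpa [dotProduct, Complex.normSq_apply, Complex.mul_re] using this
        have : (starRingEnd ℂ) (u i 0) * ψ₀ 0 = 0 := by
          simpa [dotProduct] using h0
        rcases mul_eq_zero.mp this with h | h
        · rw [map_eq_zero] at h
          rw [h] at hu
          simp at hu
        · rw [h] at hp
          simp at hp
      rw [hSempty]
      simp
    · -- d ≥ 2 : Bessel
      have hl0 : (0:ℝ) ≤ lam0 - ε := by linarith
      have hfac : (0:ℝ) ≤ (lam0 - ε) ^ B * (lam0 - ε) ^ B :=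
        mul_nonneg (pow_nonneg hl0 B) (pow_nonneg hl0 B)
      calc ∑ i ∈ S, (μ i ^ B * μ i ^ B) * Complex.normSq (c i)
          ≤ ∑ i ∈ S, ((lam0 - ε) ^ B * (lam0 - ε) ^ B) * Complex.normSq (c i) := by
            refine Finset.sum_le_sum fun i hi => ?_
            have hilt : μ i < lam0 - ε := (Finset.mem_filter.mp hi).2
            have hpow : μ i ^ B ≤ (lam0 - ε) ^ B :=
              pow_le_pow_left₀ (hμnn i) hilt.le B
            have hpnn : 0 ≤ μ i ^ B := pow_nonneg (hμnn i) B
            exact mul_le_mul_of_nonneg_right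
              (mul_le_mul hpow hpow hpnn (pow_nonneg hl0 B)) (Complex.normSq_nonneg _)
        _ = ((lam0 - ε) ^ B * (lam0 - ε) ^ B) * ∑ i ∈ S, Complex.normSq (c i) := by
            rw [Finset.mul_sum]
        _ ≤ ((lam0 - ε) ^ B * (lam0 - ε) ^ B) * 1 := by
            refine mul_le_mul_of_nonneg_left ?_ hfac
            have hb := bessel u S (fun i _ j _ => hortho i j) v
            rw [hv] at hb
            simpa using hb
        _ ≤ ((d : ℝ) - 1) * ((lam0 - ε) ^ B * (lam0 - ε) ^ B) := by
            rw [mul_one]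
            have : (2:ℝ) ≤ (d:ℝ) := by exact_mod_cast h2
            nlinarith
  -- first inequality
  have h1 : (star MB ⬝ᵥ (Pi *ᵥ MB)).re
      ≤ ((d : ℝ) - 1) * w⁻¹ * (1 - ε / lam0) ^ (2 * B) := by
    rw [hMBPi, hNum]
    calc n2⁻¹ * ∑ i ∈ S, (μ i ^ B * μ i ^ B) * Complex.normSq (c i)
        ≤ (lam0 ^ B * lam0 ^ B * w)⁻¹ * ∑ i ∈ S, (μ i ^ B * μ i ^ B) * Complex.normSq (c i) := by
          refine mul_le_mul_of_nonneg_right ?_ hNumnn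
          exact inv_anti₀ (by positivity) hn2ge
      _ ≤ (lam0 ^ B * lam0 ^ B * w)⁻¹ * (((d : ℝ) - 1) * ((lam0 - ε) ^ B * (lam0 - ε) ^ B)) := by
          refine mul_le_mul_of_nonneg_left hKey (by positivity)
      _ = ((d : ℝ) - 1) * w⁻¹ * (1 - ε / lam0) ^ (2 * B) := by
          have h1e : 1 - ε / lam0 = (lam0 - ε) / lam0 := by
            field_simp
          rw [h1e, two_mul, pow_add, div_pow, mul_inv, mul_inv, div_eq_mul_inv]
          ring
  -- second inequality
  have h2 : ((d : ℝ) - 1) * w⁻¹ * (1 - ε / lam0) ^ (2 * B)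
      ≤ Real.exp ((N : ℝ) - 2 * B * ε / lam0 - Real.log w) := by
    have hdle : (d : ℝ) - 1 ≤ Real.exp N := by
      have hcast : (d : ℝ) ≤ (2:ℝ) ^ N := by exact_mod_cast hd
      have h2e : (2:ℝ) ≤ Real.exp 1 := by
        have := Real.add_one_le_exp 1
        linarith
      have : (2:ℝ) ^ N ≤ Real.exp 1 ^ N := pow_le_pow_left₀ (by norm_num) h2e N
      have hE : Real.exp 1 ^ N = Real.exp N := by
        rw [← Real.exp_nat_mul, mul_one]
      linarith [hE ▸ this]
    have hwinv : w⁻¹ = Real.exp (-Real.log w) := by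
      rw [Real.exp_neg, Real.exp_log hwpos]
    have h01 : 0 ≤ 1 - ε / lam0 := by
      have : ε / lam0 ≤ 1 := (div_le_one hlam).mpr hε2
      linarith
    have hpe : (1 - ε / lam0) ^ (2 * B) ≤ Real.exp (-(2 * B * ε / lam0)) := by
      have hstep : 1 - ε / lam0 ≤ Real.exp (-(ε / lam0)) := by
        have := Real.add_one_le_exp (-(ε / lam0))
        linarith
      calc (1 - ε / lam0) ^ (2 * B) ≤ Real.exp (-(ε / lam0)) ^ (2 * B) :=
            pow_le_pow_left₀ h01 hstep (2 * B)
        _ = Real.exp (-(2 * B * ε / lam0)) := by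
            rw [← Real.exp_nat_mul]
            congr 1
            push_cast
            ring
    have hwnn : (0:ℝ) ≤ w⁻¹ := by positivity
    have hpnn : (0:ℝ) ≤ (1 - ε / lam0) ^ (2 * B) := by positivity
    calc ((d : ℝ) - 1) * w⁻¹ * (1 - ε / lam0) ^ (2 * B)
        ≤ Real.exp N * w⁻¹ * (1 - ε / lam0) ^ (2 * B) := by
          refine mul_le_mul_of_nonneg_right (mul_le_mul_of_nonneg_right hdle hwnn) hpnn
      _ = Real.exp N * Real.exp (-Real.log w) * (1 - ε / lam0) ^ (2 * B) := by rw [hwinv]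
      _ ≤ Real.exp N * Real.exp (-Real.log w) * Real.exp (-(2 * B * ε / lam0)) := by
          refine mul_le_mul_of_nonneg_left hpe (by positivity)
      _ = Real.exp ((N : ℝ) - 2 * B * ε / lam0 - Real.log w) := by
          rw [← Real.exp_add, ← Real.exp_add]
          congr 1
          ring
  refine ⟨h1, h2, fun δ hδ0 hδ1 hBineq => ?_⟩
  have hexp : Real.exp ((N : ℝ) - 2 * B * ε / lam0 - Real.log w) ≤ δ := by
    rw [← Real.exp_log hδ0]
    apply Real.exp_le_exp.mpr
    have hlog : Real.log (1 / (δ * w)) = -Real.log δ - Real.log w := by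
      rw [one_div, Real.log_inv, Real.log_mul (ne_of_gt hδ0) (ne_of_gt hwpos)]
      ring
    rw [hlog] at hBineq
    have h2e : (0:ℝ) < 2 * ε := by linarith
    rw [div_mul_eq_mul_div, div_le_iff₀ h2e] at hBineq
    have hdiv : (N:ℝ) - Real.log δ - Real.log w ≤ 2 * B * ε / lam0 := by
      rw [le_div_iff₀ hlam]
      nlinarith [hBineq]
    linarith
  have hfin : (star MB ⬝ᵥ (Pi *ᵥ MB)).re ≤ δ := h1.trans (h2.trans hexp)
  exact ⟨hfin, by rw [hMBsub]; linarith⟩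
end

section
/- Let H be a Hermitian matrix acting on (ℂ²)^{⊗N} ≅ ℂ^{2^N} that is stoquastic in the computational basis (all off-diagonal entries are real and ≤ 0) and whose eigenvalues all lie in [E₀, 0] with ground energy E₀ < 0, so that the operator norm satisfies ‖H‖ = −E₀. Let |+^N⟩ ∈ ℂ^{2^N} be the unit vector with all entries equal to 2^{−N/2}, and for a positive integer B define |M_B⟩ = (−H)^B |+^N⟩ / ‖(−H)^B |+^N⟩‖. Then for every ε > 0, if B ≥ (‖H‖/(2ε)) (2N + ln(2‖H‖ ε^{−1})), then |⟨M_B| H |M_B⟩ − E₀| ≤ ε. -/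
open Matrix Finset

open scoped ComplexConjugate

section aux
variable {ι : Type*} [Fintype ι] [DecidableEq ι]

lemma aux_dotExpand (u : ι → (ι → ℂ))
    (hu : ∀ i j, star (u i) ⬝ᵥ u j = if i = j then (1:ℂ) else 0)
    (a b : ι → ℂ) :
    star (∑ i, a i • u i) ⬝ᵥ (∑ i, b i • u i) = ∑ i, conj (a i) * b i := by
  have hu' : ∀ i j, ∑ σ, conj (u i σ) * u j σ = if i = j then (1:ℂ) else 0 := by
    intro i j; simpa [dotProduct] using hu i j
  calc star (∑ i, a i • u i) ⬝ᵥ (∑ i, b i • u i)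
      = ∑ σ, ∑ i, ∑ j, (conj (a i) * b j) * (conj (u i σ) * u j σ) := by
        simp only [dotProduct, Pi.star_apply, Finset.sum_apply, Pi.smul_apply, smul_eq_mul,
          star_sum, star_mul', RCLike.star_def]
        refine Finset.sum_congr rfl fun σ _ => ?_
        rw [Finset.sum_mul_sum]
        exact Finset.sum_congr rfl fun i _ => Finset.sum_congr rfl fun j _ => by ring
    _ = ∑ i, ∑ j, (conj (a i) * b j) * (∑ σ, conj (u i σ) * u j σ) := by
        rw [Finset.sum_comm]
        refine Finset.sum_congr rfl fun i _ => ?_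
        rw [Finset.sum_comm]
        exact Finset.sum_congr rfl fun j _ => (Finset.mul_sum _ _ _).symm
    _ = ∑ i, conj (a i) * b i := by
        simp [hu', mul_ite, Finset.sum_ite_eq']

lemma aux_mulVec_sum (M : Matrix ι ι ℂ) (a : ι → ℂ) (u : ι → (ι → ℂ)) :
    M *ᵥ (∑ i, a i • u i) = ∑ i, a i • (M *ᵥ u i) := by
  rw [← Matrix.mulVecLin_apply, map_sum]
  simp only [Matrix.mulVecLin_apply, Matrix.mulVec_smul]

end aux

lemma aux_conj_mul (z : ℂ) (r e : ℝ) :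
    conj (z * (r:ℂ)) * (z * (r:ℂ) * (e:ℂ)) = ((Complex.normSq z * (r*r) * e : ℝ) : ℂ) := by
  rw [_root_.map_mul, Complex.conj_ofReal]
  push_cast
  rw [Complex.normSq_eq_conj_mul_self]
  ring

lemma aux_conj_mul' (z : ℂ) (r : ℝ) :
    conj (z * (r:ℂ)) * (z * (r:ℂ)) = ((Complex.normSq z * (r*r) : ℝ) : ℂ) := by
  have := aux_conj_mul z r 1
  simpa using this

lemma aux_exp_mono {β x0 x : ℝ} (h0 : 0 ≤ x0) (h1 : 1 ≤ β * x0) (hx : x0 ≤ x) :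
    x * Real.exp (-(β*x)) ≤ x0 * Real.exp (-(β*x0)) := by
  have hd : 0 ≤ x - x0 := by linarith
  have key : x ≤ x0 * Real.exp (β*(x-x0)) := by
    have h2 : 1 + β*(x-x0) ≤ Real.exp (β*(x-x0)) := by
      have := Real.add_one_le_exp (β*(x-x0)); linarith
    have h3 : x0 * (1 + β*(x-x0)) ≤ x0 * Real.exp (β*(x-x0)) :=
      mul_le_mul_of_nonneg_left h2 h0
    nlinarith
  calc x * Real.exp (-(β*x)) ≤ (x0 * Real.exp (β*(x-x0))) * Real.exp (-(β*x)) :=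
      mul_le_mul_of_nonneg_right key (Real.exp_pos _).le
  _ = x0 * Real.exp (-(β*x0)) := by
      rw [mul_assoc, ← Real.exp_add]; ring_nf

lemma aux_term {lam ε : ℝ} {B N : ℕ} (hε : 0 < ε) (hlt : ε < lam) (hN : 1 ≤ N)
    (hB : (lam/(2*ε)) * (2*N + Real.log (2*lam/ε)) ≤ B) {μ : ℝ} (hμ0 : 0 ≤ μ)
    (hμ : μ ≤ lam - ε/2) :
    μ^B * μ^B * (lam - μ) ≤ ε/2 * ((2:ℝ)^N)⁻¹ * (lam^B * lam^B) := by
  have hlam : 0 < lam := hε.trans hlt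
  set L : ℝ := Real.log (2*lam/ε) with hLdef
  set x : ℝ := (lam - μ)/lam with hxdef
  set x0 : ℝ := ε/(2*lam) with hx0def
  have hx00 : 0 < x0 := by positivity
  have hx0x : x0 ≤ x := by
    rw [hxdef, hx0def, div_le_div_iff₀ (by positivity) hlam]
    nlinarith
  have hx1 : x ≤ 1 := by rw [hxdef, div_le_one hlam]; linarith
  have hxpos : 0 < x := lt_of_lt_of_le hx00 hx0x
  have hμeq : μ = lam * (1 - x) := by rw [hxdef]; field_simp; ring
  have hL : 0 ≤ L := by
    rw [hLdef]
    apply Real.log_nonneg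
    rw [le_div_iff₀ hε]; linarith
  have hBx : (N:ℝ) + L/2 ≤ 2*B*x0 := by
    have h1 : (2*(B:ℝ)*x0) = (B:ℝ) * (ε/lam) := by rw [hx0def]; field_simp
    have h2 : ((N:ℝ) + L/2) = ((lam/(2*ε)) * (2*N + L)) * (ε/lam) := by field_simp
    rw [h1, h2]
    exact mul_le_mul_of_nonneg_right hB (by positivity)
  have hN1 : (1:ℝ) ≤ (N:ℝ) := by exact_mod_cast hN
  have h1x0 : 1 ≤ 2*(B:ℝ)*x0 := by linarith
  have e1 : (1 - x)^B * (1-x)^B ≤ Real.exp (-(2*B*x)) := by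
    have h1 : 1 - x ≤ Real.exp (-x) := by
      have := Real.add_one_le_exp (-x); linarith
    have h0 : 0 ≤ 1 - x := by linarith
    calc (1-x)^B*(1-x)^B = (1-x)^(2*B) := by rw [two_mul, pow_add]
    _ ≤ (Real.exp (-x))^(2*B) := pow_le_pow_left₀ h0 h1 _
    _ = Real.exp (-(2*B*x)) := by
        rw [← Real.exp_nat_mul]; push_cast; ring_nf
  have e2 : x * Real.exp (-(2*B*x)) ≤ x0 * Real.exp (-(2*B*x0)) :=
    aux_exp_mono hx00.le h1x0 hx0x
  have e3 : Real.exp (-(2*B*x0)) ≤ ((2:ℝ)^N)⁻¹ := by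
    have hlog2 : Real.log 2 ≤ 1 := by
      have := Real.log_le_sub_one_of_pos (by norm_num : (0:ℝ) < 2); linarith
    have h4 : (N:ℝ) * Real.log 2 ≤ 2*B*x0 := by
      have : (N:ℝ) * Real.log 2 ≤ (N:ℝ) := by
        nlinarith [Real.log_nonneg (by norm_num : (1:ℝ) ≤ 2)]
      linarith
    calc Real.exp (-(2*B*x0)) ≤ Real.exp (-((N:ℝ)*Real.log 2)) := by
          apply Real.exp_le_exp.2; linarith
    _ = ((2:ℝ)^N)⁻¹ := by
        rw [Real.exp_neg, Real.exp_nat_mul, Real.exp_log (by norm_num : (0:ℝ) < 2)]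
  calc μ^B * μ^B * (lam - μ)
      = (lam^B*lam^B) * (lam * (x * ((1-x)^B*(1-x)^B))) := by
        rw [hμeq, mul_pow]
        have : lam - lam*(1-x) = lam * x := by ring
        rw [this]; ring
    _ ≤ (lam^B*lam^B) * (lam * (x0 * ((2:ℝ)^N)⁻¹)) := by
        apply mul_le_mul_of_nonneg_left _ (by positivity)
        apply mul_le_mul_of_nonneg_left _ hlam.le
        calc x * ((1-x)^B*(1-x)^B) ≤ x * Real.exp (-(2*B*x)) :=
              mul_le_mul_of_nonneg_left e1 hxpos.le
        _ ≤ x0 * Real.exp (-(2*B*x0)) := e2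
        _ ≤ x0 * ((2:ℝ)^N)⁻¹ := mul_le_mul_of_nonneg_left e3 hx00.le
    _ = ε/2 * ((2:ℝ)^N)⁻¹ * (lam^B*lam^B) := by
        rw [hx0def]; field_simp

set_option maxHeartbeats 2000000 in
/-- For a stoquastic Hamiltonian `H` on `N` qubits with all eigenvalues
in `[E₀, 0]` and ground energy `E₀ < 0` (so `‖H‖ = −E₀`), the normalized power-method
state `M_B = (−H)^B |+^N⟩ / ‖(−H)^B |+^N⟩‖` satisfies `|⟨M_B| H |M_B⟩ − E₀| ≤ ε` whenever
`B ≥ (‖H‖/(2ε))(2N + ln(2‖H‖ε⁻¹))`. -/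
theorem ground_energy_estimate {N : ℕ}
    (H : Matrix (Fin N → Bool) (Fin N → Bool) ℂ) (hH : H.IsHermitian)
    (hstoq : ∀ σ τ : Fin N → Bool, σ ≠ τ → (H σ τ).im = 0 ∧ (H σ τ).re ≤ 0)
    (E0 : ℝ) (hE0 : E0 < 0)
    (hspec : ∀ i, E0 ≤ hH.eigenvalues i ∧ hH.eigenvalues i ≤ 0)
    (hground : ∃ i, hH.eigenvalues i = E0)
    (B : ℕ) (hB : 0 < B) :
    let plus : (Fin N → Bool) → ℂ := fun _ => (((Real.sqrt (2 ^ N))⁻¹ : ℝ) : ℂ);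
    let MB : (Fin N → Bool) → ℂ :=
      (((Real.sqrt ((star (((-H) ^ B) *ᵥ plus) ⬝ᵥ (((-H) ^ B) *ᵥ plus)).re))⁻¹ : ℝ) : ℂ) •
        (((-H) ^ B) *ᵥ plus);
    ∀ ε : ℝ, 0 < ε →
      ((-E0) / (2 * ε)) * (2 * (N : ℝ) + Real.log (2 * (-E0) / ε)) ≤ (B : ℝ) →
      |(star MB ⬝ᵥ (H *ᵥ MB)).re - E0| ≤ ε := by
  classical
  intro plus MB ε hε hBb
  set lam : ℝ := -E0 with hlamdef
  have hlam : 0 < lam := by simp [hlamdef]; linarith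
  set u : (Fin N → Bool) → ((Fin N → Bool) → ℂ) := fun i => ⇑(hH.eigenvectorBasis i) with hudef
  have hu : ∀ i j, star (u i) ⬝ᵥ u j = if i = j then (1:ℂ) else 0 := by
    intro i j
    have := orthonormal_iff_ite.mp hH.eigenvectorBasis.orthonormal i j
    rw [EuclideanSpace.inner_eq_star_dotProduct] at this
    rw [dotProduct_comm]; exact this
  have heig : ∀ i, H *ᵥ u i = ((hH.eigenvalues i : ℝ) : ℂ) • u i := by
    intro i
    have h := hH.mulVec_eigenvectorBasis i
    rw [hudef]
    rw [h]
    ext σ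
    simp [Complex.real_smul]
  set μ : (Fin N → Bool) → ℝ := fun i => -(hH.eigenvalues i) with hμdef
  have hμ0 : ∀ i, 0 ≤ μ i := fun i => by simp [hμdef]; exact (hspec i).2
  have hμlam : ∀ i, μ i ≤ lam := fun i => by simp [hμdef, hlamdef]; exact (hspec i).1
  have hneig : ∀ i, (-H) *ᵥ u i = ((μ i : ℝ) : ℂ) • u i := by
    intro i
    rw [neg_mulVec, heig i, hμdef]
    push_cast
    rw [neg_smul]
  have hpow : ∀ (k : ℕ) (i), ((-H)^k) *ᵥ u i = ((μ i ^ k : ℝ) : ℂ) • u i := by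
    intro k i
    induction k with
    | zero => simp
    | succ k ih =>
      rw [pow_succ', ← mulVec_mulVec, ih, mulVec_smul, hneig i, smul_smul]
      push_cast
      ring_nf
  set c : (Fin N → Bool) → ℂ := fun i => star (u i) ⬝ᵥ plus with hcdef
  set w : (Fin N → Bool) → ℝ := fun i => Complex.normSq (c i) with hwdef
  have hw0 : ∀ i, 0 ≤ w i := fun i => Complex.normSq_nonneg _
  have hplus : ∑ i, c i • u i = plus := by
    have h2 := congrArg WithLp.ofLp (hH.eigenvectorBasis.sum_repr' (WithLp.toLp 2 plus))
    rw [WithLp.ofLp_sum] at h2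
    refine Eq.trans (Finset.sum_congr rfl fun i _ => ?_) h2
    rw [WithLp.ofLp_smul, EuclideanSpace.inner_eq_star_dotProduct, dotProduct_comm]
  set v : (Fin N → Bool) → ℂ := ((-H) ^ B) *ᵥ plus with hvdef
  have hv : v = ∑ i, (c i * ((μ i ^ B : ℝ) : ℂ)) • u i := by
    rw [hvdef, ← hplus, aux_mulVec_sum]
    refine Finset.sum_congr rfl fun i _ => ?_
    rw [hpow B i, smul_smul]
  set S : ℝ := ∑ i, w i * (μ i ^ B * μ i ^ B) with hSdef
  set T : ℝ := ∑ i, w i * (μ i ^ B * μ i ^ B) * μ i with hTdef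
  have hSc : star v ⬝ᵥ v = ((S : ℝ) : ℂ) := by
    rw [hv, aux_dotExpand u hu, hSdef, Complex.ofReal_sum]
    refine Finset.sum_congr rfl fun i _ => ?_
    rw [aux_conj_mul' (c i) (μ i ^ B),
      show w i = Complex.normSq (c i) from rfl]
  have hHv : H *ᵥ v = ∑ i, (c i * ((μ i ^ B : ℝ) : ℂ) * ((hH.eigenvalues i : ℝ) : ℂ)) • u i := by
    rw [hv, aux_mulVec_sum]
    refine Finset.sum_congr rfl fun i _ => ?_
    rw [heig i, smul_smul]
  have hTc : star v ⬝ᵥ (H *ᵥ v) = ((-T : ℝ) : ℂ) := by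
    rw [hHv, hv, aux_dotExpand u hu, hTdef, Complex.ofReal_neg, Complex.ofReal_sum,
      ← Finset.sum_neg_distrib]
    refine Finset.sum_congr rfl fun i _ => ?_
    rw [aux_conj_mul (c i) (μ i ^ B) (hH.eigenvalues i),
      show w i = Complex.normSq (c i) from rfl,
      show μ i = -hH.eigenvalues i from rfl]
    push_cast
    ring
  have hwsum : ∑ i, w i = 1 := by
    have h1 : star plus ⬝ᵥ plus = ((∑ i, w i : ℝ) : ℂ) := by
      rw [← hplus, aux_dotExpand u hu, Complex.ofReal_sum]
      exact Finset.sum_congr rfl fun i _ => (Complex.normSq_eq_conj_mul_self).symm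
    have h2 : star plus ⬝ᵥ plus = 1 := by
      have hs : ((Real.sqrt (2^N) : ℝ) : ℂ) * ((Real.sqrt (2^N) : ℝ) : ℂ) = ((2:ℂ)^N) := by
        rw [← Complex.ofReal_mul, Real.mul_self_sqrt (by positivity)]
        push_cast; ring
      rw [show plus = fun (_ : Fin N → Bool) => (((Real.sqrt (2 ^ N))⁻¹ : ℝ) : ℂ) from rfl]
      simp only [dotProduct, Pi.star_apply, RCLike.star_def, map_inv₀, Complex.conj_ofReal]
      rw [Finset.sum_const, Finset.card_univ]
      rw [show Fintype.card (Fin N → Bool) = 2^N by simp [Fintype.card_fun]]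
      rw [nsmul_eq_mul]
      push_cast
      rw [← mul_inv, hs, mul_inv_cancel₀ (pow_ne_zero _ two_ne_zero)]
    have := h1.symm.trans h2
    exact_mod_cast this
  -- ground state / Perron-Frobenius part
  obtain ⟨g, hg⟩ := hground
  set Tset : Finset (Fin N → Bool) := Finset.univ.filter (fun i => μ i = lam) with hTsetdef
  have hTw : ((2:ℝ)^N)⁻¹ ≤ ∑ i ∈ Tset, w i := by
    have hgmu2 : μ g = lam := by rw [show μ g = -(hH.eigenvalues g) from rfl, hg]
    set φ : (Fin N → Bool) → ℂ := fun σ => ((‖u g σ‖ : ℝ) : ℂ) with hφdef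
    set a : (Fin N → Bool) → ℂ := fun i => star (u i) ⬝ᵥ φ with hadef
    have hφsum : ∑ i, a i • u i = φ := by
      have h2 := congrArg WithLp.ofLp (hH.eigenvectorBasis.sum_repr' (WithLp.toLp 2 φ))
      rw [WithLp.ofLp_sum] at h2
      refine Eq.trans (Finset.sum_congr rfl fun i _ => ?_) h2
      rw [WithLp.ofLp_smul, EuclideanSpace.inner_eq_star_dotProduct, dotProduct_comm]
    have hψ1 : star (u g) ⬝ᵥ u g = 1 := by simpa using hu g g
    have hψn : ∑ σ, Complex.normSq (u g σ) = 1 := by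
      have h' : star (u g) ⬝ᵥ u g = ((∑ σ, Complex.normSq (u g σ) : ℝ) : ℂ) := by
        rw [Complex.ofReal_sum]
        simp only [dotProduct, Pi.star_apply, RCLike.star_def]
        exact Finset.sum_congr rfl fun σ _ => (Complex.normSq_eq_conj_mul_self).symm
      exact_mod_cast (h'.symm.trans hψ1)
    have hφn : ∑ i, Complex.normSq (a i) = 1 := by
      have h1 : star φ ⬝ᵥ φ = ((∑ i, Complex.normSq (a i) : ℝ) : ℂ) := by
        rw [← hφsum, aux_dotExpand u hu, Complex.ofReal_sum]
        exact Finset.sum_congr rfl fun i _ => (Complex.normSq_eq_conj_mul_self).symm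
      have h2 : star φ ⬝ᵥ φ = ((∑ σ, Complex.normSq (u g σ) : ℝ) : ℂ) := by
        rw [Complex.ofReal_sum]
        simp only [dotProduct, Pi.star_apply, hφdef, RCLike.star_def, Complex.conj_ofReal]
        refine Finset.sum_congr rfl fun σ _ => ?_
        rw [← Complex.ofReal_mul, Complex.norm_mul_self_eq_normSq]
      exact (Complex.ofReal_inj.mp (h1.symm.trans h2)).trans hψn
    have hψquad : star (u g) ⬝ᵥ ((-H) *ᵥ u g) = ((lam : ℝ) : ℂ) := by
      rw [hneig g, dotProduct_smul, smul_eq_mul, hψ1, mul_one, hgmu2]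
    have hexp : ∀ x : (Fin N → Bool) → ℂ,
        (star x ⬝ᵥ ((-H) *ᵥ x)).re
          = ∑ σ, ∑ τ, ((starRingEnd ℂ) (x σ) * ((-H) σ τ * x τ)).re := by
      intro x
      rw [dotProduct, Complex.re_sum]
      refine Finset.sum_congr rfl fun σ _ => ?_
      rw [show ((-H) *ᵥ x) σ = ∑ τ, (-H) σ τ * x τ from rfl, Pi.star_apply, Finset.mul_sum,
        Complex.re_sum, RCLike.star_def]
    have hcomp : (star (u g) ⬝ᵥ ((-H) *ᵥ u g)).re ≤ (star φ ⬝ᵥ ((-H) *ᵥ φ)).re := by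
      rw [hexp (u g), hexp φ]
      refine Finset.sum_le_sum fun σ _ => Finset.sum_le_sum fun τ _ => ?_
      by_cases hστ : σ = τ
      · subst hστ
        have him : ((-H) σ σ).im = 0 := by
          have h1 : star (H σ σ) = H σ σ := hH.apply σ σ
          have h2 : (H σ σ).im = 0 := by
            have := Complex.conj_eq_iff_im.mp h1
            exact this
          simp [Matrix.neg_apply, h2]
        have hz : (-H) σ σ = ((((-H) σ σ).re : ℝ) : ℂ) :=
          Complex.ext (Complex.ofReal_re _).symm (by rw [Complex.ofReal_im, him])
        rw [hz]
        have hcalc : ∀ y : ℂ, ((starRingEnd ℂ) y * (((((-H) σ σ).re : ℝ) : ℂ) * y)).re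
            = ((-H) σ σ).re * Complex.normSq y := by
          intro y
          rw [show (starRingEnd ℂ) y * (((((-H) σ σ).re : ℝ) : ℂ) * y)
            = ((((-H) σ σ).re : ℝ) : ℂ) * (y * (starRingEnd ℂ) y) from by ring,
            Complex.mul_conj, ← Complex.ofReal_mul, Complex.ofReal_re]
        rw [hcalc, hcalc]
        have hns : Complex.normSq (φ σ) = Complex.normSq (u g σ) := by
          rw [show φ σ = ((‖u g σ‖ : ℝ) : ℂ) from rfl, Complex.normSq_ofReal,
            Complex.norm_mul_self_eq_normSq]
        rw [hns]
      · obtain ⟨him, hre⟩ := hstoq σ τ hστ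
        have hz : (-H) σ τ = (((-(H σ τ).re : ℝ)) : ℂ) :=
          Complex.ext (by rw [Complex.ofReal_re]; simp)
            (by rw [Complex.ofReal_im]; simp [him])
        rw [hz]
        have hr0 : (0:ℝ) ≤ -(H σ τ).re := by linarith
        have hL : ((starRingEnd ℂ) (u g σ) * ((((-(H σ τ).re : ℝ)) : ℂ) * u g τ)).re
            = (-(H σ τ).re) * ((starRingEnd ℂ) (u g σ) * u g τ).re := by
          rw [show (starRingEnd ℂ) (u g σ) * ((((-(H σ τ).re : ℝ)) : ℂ) * u g τ)
            = (((-(H σ τ).re : ℝ)) : ℂ) * ((starRingEnd ℂ) (u g σ) * u g τ) from by ring,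
            Complex.mul_re, Complex.ofReal_re, Complex.ofReal_im]
          ring
        have hR : ((starRingEnd ℂ) (φ σ) * ((((-(H σ τ).re : ℝ)) : ℂ) * φ τ)).re
            = (-(H σ τ).re) * (‖u g σ‖ * ‖u g τ‖) := by
          rw [show φ σ = ((‖u g σ‖ : ℝ) : ℂ) from rfl,
            show φ τ = ((‖u g τ‖ : ℝ) : ℂ) from rfl, Complex.conj_ofReal,
            ← Complex.ofReal_mul, ← Complex.ofReal_mul, Complex.ofReal_re]
          ring
        rw [hL, hR]
        apply mul_le_mul_of_nonneg_left _ hr0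
        calc ((starRingEnd ℂ) (u g σ) * u g τ).re
            ≤ ‖(starRingEnd ℂ) (u g σ) * u g τ‖ := Complex.re_le_norm _
          _ = ‖u g σ‖ * ‖u g τ‖ := by
              rw [Complex.norm_mul, Complex.norm_conj]
    have hφquad : star φ ⬝ᵥ ((-H) *ᵥ φ) = ((∑ i, Complex.normSq (a i) * μ i : ℝ) : ℂ) := by
      rw [← hφsum, aux_mulVec_sum]
      rw [show (∑ i, a i • ((-H) *ᵥ u i)) = ∑ i, (a i * ((μ i : ℝ) : ℂ)) • u i from
        Finset.sum_congr rfl fun i _ => by rw [hneig i, smul_smul]]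
      rw [aux_dotExpand u hu, Complex.ofReal_sum]
      refine Finset.sum_congr rfl fun i _ => ?_
      rw [Complex.ofReal_mul, Complex.normSq_eq_conj_mul_self]
      ring
    have hray : lam ≤ ∑ i, Complex.normSq (a i) * μ i := by
      have h1 : (star (u g) ⬝ᵥ ((-H) *ᵥ u g)).re = lam := by rw [hψquad, Complex.ofReal_re]
      have h2 : (star φ ⬝ᵥ ((-H) *ᵥ φ)).re = ∑ i, Complex.normSq (a i) * μ i := by
        rw [hφquad, Complex.ofReal_re]
      linarith [hcomp]
    have htop : ∀ i, μ i ≠ lam → a i = 0 := by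
      intro i hi
      by_contra hai
      have hlt : μ i < lam := lt_of_le_of_ne (hμlam i) hi
      have hpos : 0 < Complex.normSq (a i) := Complex.normSq_pos.mpr hai
      have hle : ∀ j ∈ Finset.univ, Complex.normSq (a j) * μ j
          ≤ Complex.normSq (a j) * lam :=
        fun j _ => mul_le_mul_of_nonneg_left (hμlam j) (Complex.normSq_nonneg _)
      have hstrict := Finset.sum_lt_sum hle ⟨i, Finset.mem_univ i,
        mul_lt_mul_of_pos_left hlt hpos⟩
      have hsum : ∑ j, Complex.normSq (a j) * lam = lam := by
        rw [← Finset.sum_mul, hφn, one_mul]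
      linarith
    have habs1 : (1:ℝ) ≤ ∑ σ, ‖u g σ‖ := by
      have hterm : ∀ σ : Fin N → Bool, Complex.normSq (u g σ)
          ≤ ‖u g σ‖ * ∑ τ, ‖u g τ‖ := by
        intro σ
        rw [← Complex.norm_mul_self_eq_normSq]
        exact mul_le_mul_of_nonneg_left (Finset.single_le_sum
          (fun τ _ => norm_nonneg (u g τ)) (Finset.mem_univ σ))
          (norm_nonneg _)
      have h1 : (1:ℝ) ≤ (∑ σ, ‖u g σ‖) * (∑ τ, ‖u g τ‖) := by
        calc (1:ℝ) = ∑ σ, Complex.normSq (u g σ) := hψn.symm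
        _ ≤ ∑ σ, ‖u g σ‖ * ∑ τ, ‖u g τ‖ :=
            Finset.sum_le_sum (fun σ _ => hterm σ)
        _ = (∑ σ, ‖u g σ‖) * (∑ τ, ‖u g τ‖) := by
            rw [← Finset.sum_mul]
      nlinarith [Finset.sum_nonneg
        (fun σ (_ : σ ∈ Finset.univ) => norm_nonneg (u g σ))]
    have hoverlap : (Real.sqrt (2^N))⁻¹ ≤ (star φ ⬝ᵥ plus).re := by
      have hd : star φ ⬝ᵥ plus
          = (((∑ σ, ‖u g σ‖) * (Real.sqrt (2^N))⁻¹ : ℝ) : ℂ) := by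
        rw [show plus = fun (_ : Fin N → Bool) => (((Real.sqrt (2 ^ N))⁻¹ : ℝ) : ℂ) from rfl]
        rw [Complex.ofReal_mul, Complex.ofReal_sum, Finset.sum_mul]
        simp only [dotProduct, Pi.star_apply, RCLike.star_def]
        refine Finset.sum_congr rfl fun σ _ => ?_
        rw [show φ σ = ((‖u g σ‖ : ℝ) : ℂ) from rfl, Complex.conj_ofReal]
      rw [hd, Complex.ofReal_re]
      have h2 : (0:ℝ) ≤ (Real.sqrt (2^N))⁻¹ := by positivity
      nlinarith [habs1, h2]
    have hparse : star φ ⬝ᵥ plus = ∑ i ∈ Tset, (starRingEnd ℂ) (a i) * c i := by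
      rw [← hφsum, ← hplus, aux_dotExpand u hu]
      refine (Finset.sum_subset (Finset.subset_univ Tset) fun i _ hi => ?_).symm
      have hμi : μ i ≠ lam := by
        intro h; exact hi (Finset.mem_filter.mpr ⟨Finset.mem_univ i, h⟩)
      rw [htop i hμi, map_zero, zero_mul]
    have h0 : (Real.sqrt (2^N))⁻¹ ≤ ∑ i ∈ Tset, ‖a i‖ * ‖c i‖ := by
      calc (Real.sqrt (2^N))⁻¹ ≤ (star φ ⬝ᵥ plus).re := hoverlap
      _ = ∑ i ∈ Tset, ((starRingEnd ℂ) (a i) * c i).re := by rw [hparse, Complex.re_sum]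
      _ ≤ ∑ i ∈ Tset, ‖a i‖ * ‖c i‖ := by
          refine Finset.sum_le_sum fun i _ => ?_
          calc ((starRingEnd ℂ) (a i) * c i).re
              ≤ ‖(starRingEnd ℂ) (a i) * c i‖ := Complex.re_le_norm _
            _ = ‖a i‖ * ‖c i‖ := by rw [Complex.norm_mul, Complex.norm_conj]
    have h1 := Finset.sum_mul_sq_le_sq_mul_sq Tset (fun i => ‖a i‖)
      (fun i => ‖c i‖)
    have h2 : ∑ i ∈ Tset, ‖a i‖^2 ≤ 1 := by
      rw [← hφn]
      calc ∑ i ∈ Tset, ‖a i‖^2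
          = ∑ i ∈ Tset, Complex.normSq (a i) :=
            Finset.sum_congr rfl fun i _ => Complex.sq_norm _
        _ ≤ ∑ i, Complex.normSq (a i) :=
            Finset.sum_le_sum_of_subset_of_nonneg (Finset.subset_univ _)
              fun i _ _ => Complex.normSq_nonneg _
    have h3 : ∑ i ∈ Tset, ‖c i‖^2 = ∑ i ∈ Tset, w i :=
      Finset.sum_congr rfl fun i _ => by rw [Complex.sq_norm, hwdef]
    have h4 : ((Real.sqrt (2^N))⁻¹)^2 = ((2:ℝ)^N)⁻¹ := by
      rw [inv_pow, Real.sq_sqrt (by positivity)]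
    have hA0 : (0:ℝ) ≤ (Real.sqrt (2^N))⁻¹ := by positivity
    have h5 : ((2:ℝ)^N)⁻¹ ≤ (∑ i ∈ Tset, ‖a i‖ * ‖c i‖)^2 := by
      rw [← h4]; exact pow_le_pow_left₀ hA0 h0 2
    have h6 : 0 ≤ ∑ i ∈ Tset, ‖c i‖^2 :=
      Finset.sum_nonneg fun i _ => sq_nonneg _
    calc ((2:ℝ)^N)⁻¹ ≤ (∑ i ∈ Tset, ‖a i‖ * ‖c i‖)^2 := h5
      _ ≤ (∑ i ∈ Tset, ‖a i‖^2) * (∑ i ∈ Tset, ‖c i‖^2) := h1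
      _ ≤ 1 * (∑ i ∈ Tset, ‖c i‖^2) := mul_le_mul_of_nonneg_right h2 h6
      _ = ∑ i ∈ Tset, w i := by rw [one_mul, h3]
  have hSlb : ((2:ℝ)^N)⁻¹ * (lam ^ B * lam ^ B) ≤ S := by
    calc ((2:ℝ)^N)⁻¹ * (lam ^ B * lam ^ B)
        ≤ (∑ i ∈ Tset, w i) * (lam ^ B * lam ^ B) :=
          mul_le_mul_of_nonneg_right hTw (by positivity)
      _ = ∑ i ∈ Tset, w i * (lam ^ B * lam ^ B) := by rw [Finset.sum_mul]
      _ = ∑ i ∈ Tset, w i * (μ i ^ B * μ i ^ B) := by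
          refine Finset.sum_congr rfl fun i hi => ?_
          rw [(Finset.mem_filter.mp hi).2]
      _ ≤ S := by
          rw [hSdef]
          refine Finset.sum_le_sum_of_subset_of_nonneg (Finset.subset_univ _) fun i _ _ => ?_
          exact mul_nonneg (hw0 i) (mul_nonneg (pow_nonneg (hμ0 i) B) (pow_nonneg (hμ0 i) B))
  have hS0 : 0 < S := lt_of_lt_of_le (by positivity) hSlb
  have hT0 : 0 ≤ T := Finset.sum_nonneg fun i _ => by
    have := hμ0 i; have := hw0 i; positivity
  have hTleS : T ≤ lam * S := by
    rw [hTdef, hSdef, Finset.mul_sum]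
    refine Finset.sum_le_sum fun i _ => ?_
    have h1 := hμlam i
    have h2 := hw0 i
    have h3 := hμ0 i
    have h4 : 0 ≤ μ i ^ B * μ i ^ B := by positivity
    have h5 := mul_le_mul_of_nonneg_left h1 (mul_nonneg h2 h4)
    nlinarith [h5]
  -- the value of the quadratic form
  have hval : (star MB ⬝ᵥ (H *ᵥ MB)).re = -(T / S) := by
    set r : ℝ := (Real.sqrt S)⁻¹ with hrdef
    have hMB : MB = ((r : ℝ) : ℂ) • v := by
      rw [show MB = (((Real.sqrt ((star v ⬝ᵥ v).re))⁻¹ : ℝ) : ℂ) • v from rfl, hSc,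
        Complex.ofReal_re]
    rw [hMB]
    rw [star_smul, smul_dotProduct, mulVec_smul, dotProduct_smul, hTc]
    rw [RCLike.star_def, Complex.conj_ofReal]
    rw [smul_eq_mul, smul_eq_mul, ← Complex.ofReal_mul, ← Complex.ofReal_mul,
      Complex.ofReal_re]
    rw [hrdef]
    rw [show ((Real.sqrt S)⁻¹ * ((Real.sqrt S)⁻¹ * -T)) =
      (Real.sqrt S * Real.sqrt S)⁻¹ * -T by rw [mul_inv]; ring]
    rw [Real.mul_self_sqrt hS0.le]
    field_simp
  -- main analytic inequality
  have key : lam * S - T ≤ ε * S := by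
    by_cases hcase : lam ≤ ε
    · have h1 : lam * S ≤ ε * S := mul_le_mul_of_nonneg_right hcase hS0.le
      linarith
    push_neg at hcase
    have hsplit : lam * S - T = ∑ i, w i * (μ i ^ B * μ i ^ B) * (lam - μ i) := by
      rw [hSdef, hTdef, Finset.mul_sum, ← Finset.sum_sub_distrib]
      exact Finset.sum_congr rfl fun i _ => by ring
    have htermnn : ∀ i, 0 ≤ w i * (μ i ^ B * μ i ^ B) := fun i =>
      mul_nonneg (hw0 i) (mul_nonneg (pow_nonneg (hμ0 i) B) (pow_nonneg (hμ0 i) B))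
    rw [hsplit, ← Finset.sum_filter_add_sum_filter_not Finset.univ
      (fun i => μ i < lam - ε/2)]
    have hgood : ∑ i ∈ Finset.univ.filter (fun i => ¬ μ i < lam - ε/2),
        w i * (μ i ^ B * μ i ^ B) * (lam - μ i) ≤ (ε/2) * S := by
      calc ∑ i ∈ Finset.univ.filter (fun i => ¬ μ i < lam - ε/2),
          w i * (μ i ^ B * μ i ^ B) * (lam - μ i)
          ≤ ∑ i ∈ Finset.univ.filter (fun i => ¬ μ i < lam - ε/2),
            (ε/2) * (w i * (μ i ^ B * μ i ^ B)) := by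
            refine Finset.sum_le_sum fun i hi => ?_
            have h1 : lam - μ i ≤ ε/2 := by
              have := (Finset.mem_filter.mp hi).2
              push_neg at this
              linarith
            have h2 := mul_le_mul_of_nonneg_left h1 (htermnn i)
            nlinarith [h2]
        _ = (ε/2) * ∑ i ∈ Finset.univ.filter (fun i => ¬ μ i < lam - ε/2),
            w i * (μ i ^ B * μ i ^ B) := by rw [Finset.mul_sum]
        _ ≤ (ε/2) * S := by
            apply mul_le_mul_of_nonneg_left _ (by positivity)
            rw [hSdef]
            exact Finset.sum_le_sum_of_subset_of_nonneg (Finset.subset_univ _)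
              fun i _ _ => htermnn i
    have hbad : ∑ i ∈ Finset.univ.filter (fun i => μ i < lam - ε/2),
        w i * (μ i ^ B * μ i ^ B) * (lam - μ i) ≤ (ε/2) * S := by
      rcases Nat.eq_zero_or_pos N with hN0 | hN1
      · have hsub : ∀ i : Fin N → Bool, i = g := by
          intro i
          have hcard : Fintype.card (Fin N → Bool) = 1 := by
            simp [Fintype.card_fun, hN0]
          exact Fintype.card_le_one_iff.mp hcard.le i g
        have hgmu : μ g = lam := by
          rw [show μ g = -(hH.eigenvalues g) from rfl, hg]
        have hempty : Finset.univ.filter (fun i => μ i < lam - ε/2) = ∅ := by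
          apply Finset.eq_empty_of_forall_notMem
          intro i hi
          have h1 := (Finset.mem_filter.mp hi).2
          rw [hsub i, hgmu] at h1
          linarith
        rw [hempty, Finset.sum_empty]
        positivity
      · calc ∑ i ∈ Finset.univ.filter (fun i => μ i < lam - ε/2),
            w i * (μ i ^ B * μ i ^ B) * (lam - μ i)
            ≤ ∑ i ∈ Finset.univ.filter (fun i => μ i < lam - ε/2),
              w i * (ε/2 * ((2:ℝ)^N)⁻¹ * (lam ^ B * lam ^ B)) := by
              refine Finset.sum_le_sum fun i hi => ?_
              have h1 := (Finset.mem_filter.mp hi).2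
              have h2 := aux_term hε hcase hN1 hBb (hμ0 i) (by linarith)
              calc w i * (μ i ^ B * μ i ^ B) * (lam - μ i)
                  = w i * (μ i ^ B * μ i ^ B * (lam - μ i)) := by ring
                _ ≤ w i * (ε/2 * ((2:ℝ)^N)⁻¹ * (lam ^ B * lam ^ B)) :=
                  mul_le_mul_of_nonneg_left h2 (hw0 i)
          _ = (∑ i ∈ Finset.univ.filter (fun i => μ i < lam - ε/2), w i) *
              (ε/2 * ((2:ℝ)^N)⁻¹ * (lam ^ B * lam ^ B)) := by rw [Finset.sum_mul]
          _ ≤ 1 * (ε/2 * ((2:ℝ)^N)⁻¹ * (lam ^ B * lam ^ B)) := by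
              apply mul_le_mul_of_nonneg_right _ (by positivity)
              rw [← hwsum]
              exact Finset.sum_le_sum_of_subset_of_nonneg (Finset.subset_univ _)
                fun i _ _ => hw0 i
          _ = (ε/2) * (((2:ℝ)^N)⁻¹ * (lam ^ B * lam ^ B)) := by ring
          _ ≤ (ε/2) * S := mul_le_mul_of_nonneg_left hSlb (by positivity)
    linarith
  -- conclusion
  rw [hval]
  have hTS : T / S ≤ lam := by
    rw [div_le_iff₀ hS0]; linarith
  have h1 : -(T/S) - E0 = lam - T/S := by rw [hlamdef]; ring
  rw [h1, abs_of_nonneg (by linarith)]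
  have : (lam - ε) * S ≤ T := by linarith
  have h2 : lam - ε ≤ T / S := by
    rw [le_div_iff₀ hS0]; linarith
  linarith
end

section
/- Let 𝒢 be the star graph: 𝒱 = {0,1,…,N−1} with center 0, and ℰ = {{0,i} : i = 1,…,N−1}. Then for every configuration x = (x_1,…,x_{2B}) ∈ ℰ^{2B}, the number of loops satisfies L(x) = N + |{ t ∈ {1,…,2B−1} : x_t = x_{t+1} }|. Consequently the loop weight factorizes as 2^{L(x)} = 2^N · exp( −ln(2) · E_Potts(x) ), where E_Potts(x) = −Σ_{t=1}^{2B−1} δ_{x_t, x_{t+1}} is the energy of a 1-dimensional ferromagnetic Potts model with 2B sites and N−1 colors. -/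
open SimpleGraph

variable {V : Type*}

/-! ### auxiliary -/

/-- lift by adjacency-constancy -/
def adjLift {W : Type*} {G : SimpleGraph W} {β : Sort*} (f : W → β)
    (h : ∀ v w, G.Adj v w → f v = f w) : G.ConnectedComponent → β :=
  Quot.lift f (fun v w r => by
    obtain ⟨p⟩ := r
    induction p with
    | nil => rfl
    | cons ha p ih => exact (h _ _ ha).trans ih)

@[simp] lemma adjLift_mk {W : Type*} {G : SimpleGraph W} {β : Sort*} (f : W → β)
    (h : ∀ v w, G.Adj v w → f v = f w) (v : W) :
    adjLift f h (G.connectedComponentMk v) = f v := rfl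

lemma reachable_closed {W : Type*} {G : SimpleGraph W} {S : Set W}
    (hS : ∀ u ∈ S, ∀ w, G.Adj u w → w ∈ S) {a b : W} (ha : a ∈ S)
    (h : G.Reachable a b) : b ∈ S := by
  obtain ⟨p⟩ := h
  induction p with
  | nil => exact ha
  | cons ha' p ih => exact ih (hS _ ha _ ha')

section adj

variable {E : Finset (Finset V)} {n : ℕ} {x : Fin n → Finset V}

lemma adj_temporal {j : V} {t : Fin n} (h : j ∉ x t) :
    (strandGraph E ∅ n x).Adj (j, t.castSucc) (j, t.succ) := by
  refine ⟨?_, Or.inl ⟨t, Or.inl ⟨rfl, h, rfl, rfl⟩⟩⟩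
  simp [Prod.ext_iff, (Fin.castSucc_lt_succ : t.castSucc < t.succ).ne]

lemma adj_bridge {a b : V} {t : Fin n} (hE : x t ∈ E) (ha : a ∈ x t) (hb : b ∈ x t)
    (hab : a ≠ b) {ℓ : Fin (n+1)} (hℓ : ℓ = t.castSucc ∨ ℓ = t.succ) :
    (strandGraph E ∅ n x).Adj (a, ℓ) (b, ℓ) := by
  refine ⟨by simp [Prod.ext_iff, hab], Or.inl ⟨t, Or.inr (Or.inl ⟨hE, ha, hb, hab, ?_⟩)⟩⟩
  rcases hℓ with h | h
  · exact Or.inl ⟨h, h⟩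
  · exact Or.inr ⟨h, h⟩

lemma adj_elim {p q : V × Fin (n+1)} (h : (strandGraph E ∅ n x).Adj p q) :
    ∃ t : Fin n,
      (p.1 = q.1 ∧ p.1 ∉ x t ∧
        ((p.2 = t.castSucc ∧ q.2 = t.succ) ∨ (p.2 = t.succ ∧ q.2 = t.castSucc))) ∨
      (p.1 ∈ x t ∧ q.1 ∈ x t ∧ p.1 ≠ q.1 ∧ p.2 = q.2 ∧
        (p.2 = t.castSucc ∨ p.2 = t.succ)) := by
  obtain ⟨hne, hrel | hrel⟩ := h <;> obtain ⟨t, ht⟩ := hrel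
  · rcases ht with ⟨h1, h2, h3, h4⟩ | ⟨_, h2, h3, h4, (⟨h5, h6⟩ | ⟨h5, h6⟩)⟩ | ⟨hEF, _⟩
    · exact ⟨t, Or.inl ⟨h1, h2, Or.inl ⟨h3, h4⟩⟩⟩
    · exact ⟨t, Or.inr ⟨h2, h3, h4, h5.trans h6.symm, Or.inl h5⟩⟩
    · exact ⟨t, Or.inr ⟨h2, h3, h4, h5.trans h6.symm, Or.inr h5⟩⟩
    · exact absurd hEF (Finset.notMem_empty _)
  · rcases ht with ⟨h1, h2, h3, h4⟩ | ⟨_, h2, h3, h4, (⟨h5, h6⟩ | ⟨h5, h6⟩)⟩ | ⟨hEF, _⟩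
    · exact ⟨t, Or.inl ⟨h1.symm, h1 ▸ h2, Or.inr ⟨h4, h3⟩⟩⟩
    · exact ⟨t, Or.inr ⟨h3, h2, h4.symm, h6.trans h5.symm, Or.inl h6⟩⟩
    · exact ⟨t, Or.inr ⟨h3, h2, h4.symm, h6.trans h5.symm, Or.inr h6⟩⟩
    · exact absurd hEF (Finset.notMem_empty _)

end adj

section star

variable {N : ℕ} [NeZero N]

def EstarN (N : ℕ) [NeZero N] : Finset (Finset (Fin N)) :=
  (Finset.univ.filter (fun i : Fin N => i ≠ 0)).image
    (fun i => ({0, i} : Finset (Fin N)))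

lemma mem_EstarN {i : Fin N} (hi : i ≠ 0) : ({0, i} : Finset (Fin N)) ∈ EstarN N :=
  Finset.mem_image.mpr ⟨i, Finset.mem_filter.mpr ⟨Finset.mem_univ _, hi⟩, rfl⟩

lemma mem_star {i j : Fin N} : j ∈ ({0, i} : Finset (Fin N)) ↔ j = 0 ∨ j = i := by
  simp

/-- The component of the top zero vertex is the pendant pair. -/
lemma pendant (n : ℕ) (x : Fin (n+1) → Finset (Fin N)) (i : Fin (n+1) → Fin N)
    (hi0 : ∀ t, i t ≠ 0) (hix : ∀ t, x t = {0, i t}) (u : Fin N × Fin (n+2))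
    (h : (strandGraph (EstarN N) ∅ (n+1) x).Reachable (0, Fin.last (n+1)) u) :
    u = (0, Fin.last (n+1)) ∨ u = (i (Fin.last n), Fin.last (n+1)) := by
  set L : Fin (n+2) := Fin.last (n+1)
  have key : ∀ p ∈ ({(0, L), (i (Fin.last n), L)} : Set (Fin N × Fin (n+2))),
      ∀ w, (strandGraph (EstarN N) ∅ (n+1) x).Adj p w →
        w ∈ ({(0, L), (i (Fin.last n), L)} : Set (Fin N × Fin (n+2))) := by
    rintro p hp w hadj
    have hp2 : p.2 = L := by
      rcases hp with hp | hp <;> rw [hp]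
    have hp1 : p.1 = 0 ∨ p.1 = i (Fin.last n) := by
      rcases hp with hp | hp <;> rw [hp] <;> simp
    obtain ⟨t, hc⟩ := adj_elim hadj
    have hcs : Fin.castSucc t ≠ L := (Fin.castSucc_lt_last t).ne
    rcases hc with ⟨h1, h2, (⟨h3, h4⟩ | ⟨h3, h4⟩)⟩ | ⟨h1, h2, h3, h4, h5⟩
    · exact absurd (hp2 ▸ h3.symm) hcs
    · -- p.2 = succ t = L hence t = last n, p.1 ∉ x t : contradiction
      have ht : t = Fin.last n := by
        have : Fin.succ t = Fin.succ (Fin.last n) := by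
          rw [← h3, hp2, Fin.succ_last]
        exact Fin.succ_injective _ this
      rw [ht, hix, mem_star] at h2
      exact absurd hp1 h2
    · have ht : t = Fin.last n := by
        rcases h5 with h5 | h5
        · exact absurd (hp2 ▸ h5.symm) hcs
        · have : Fin.succ t = Fin.succ (Fin.last n) := by
            rw [← h5, hp2, Fin.succ_last]
          exact Fin.succ_injective _ this
      rw [ht, hix, mem_star] at h2
      have hw2 : w.2 = L := h4 ▸ hp2
      rcases h2 with h2 | h2
      · exact Or.inl (Prod.ext h2 hw2)
      · exact Or.inr (Prod.ext h2 hw2)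
  exact reachable_closed key (Or.inl rfl) h

/-- Base case: one slot. -/
lemma base_case (x : Fin 1 → Finset (Fin N)) (i : Fin 1 → Fin N)
    (hi0 : ∀ t, i t ≠ 0) (hix : ∀ t, x t = {0, i t}) :
    Nat.card (strandGraph (EstarN N) ∅ 1 x).ConnectedComponent = N := by
  set G := strandGraph (EstarN N) ∅ 1 x with hG
  set i0 := i 0 with hi0def
  have hi0' : i0 ≠ 0 := hi0 0
  have hmem : ∀ j : Fin N, j ∈ x 0 ↔ j = 0 ∨ j = i0 := by
    intro j; rw [hix 0, mem_star]
  set f : Fin N × Fin 2 → Fin N :=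
    fun v => if v.1 = 0 ∨ v.1 = i0 then (if v.2 = 0 then 0 else i0) else v.1 with hf
  have hfadj : ∀ v w, G.Adj v w → f v = f w := by
    intro v w h
    obtain ⟨t, hc⟩ := adj_elim h
    have ht : t = 0 := Subsingleton.elim t 0
    subst ht
    rcases hc with ⟨h1, h2, _⟩ | ⟨h1, h2, h3, h4, _⟩
    · rw [hmem] at h2
      simp only [hf, h1, if_neg h2]
      rw [← h1, if_neg h2]
    · rw [hmem] at h1 h2
      simp only [hf, if_pos h1, if_pos h2, h4]
  have hcs0 : (Fin.castSucc (0 : Fin 1)) = (0 : Fin 2) := by decide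
  have hsc0 : (Fin.succ (0 : Fin 1)) = (1 : Fin 2) := by decide
  have hE : x 0 ∈ EstarN N := by rw [hix 0]; exact mem_EstarN hi0'
  have h0m : (0 : Fin N) ∈ x 0 := by rw [hmem]; exact Or.inl rfl
  have him : i0 ∈ x 0 := by rw [hmem]; exact Or.inr rfl
  set ψ : Fin N → G.ConnectedComponent :=
    fun k => G.connectedComponentMk (k, if k = i0 then 1 else 0) with hψ
  have linv : ∀ C, ψ (adjLift f hfadj C) = C := by
    refine ConnectedComponent.ind ?_
    rintro ⟨j, ℓ⟩
    by_cases hj : j = 0 ∨ j = i0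
    · by_cases hℓ : ℓ = 0
      · subst hℓ
        simp only [adjLift_mk, hf, if_pos hj, if_pos rfl, hψ, if_true, if_neg (Ne.symm hi0')]
        rcases hj with hj | hj <;> subst hj
        · rfl
        · exact ConnectedComponent.sound
            (adj_bridge hE h0m him (Ne.symm hi0') (Or.inl hcs0.symm)).reachable
      · have hℓ1 : ℓ = 1 := by omega
        subst hℓ1
        simp only [adjLift_mk, hf, if_pos hj, if_neg (by decide : ¬(1 : Fin 2) = 0), hψ,
          if_pos rfl]
        rcases hj with hj | hj <;> subst hj
        · exact ConnectedComponent.sound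
            (adj_bridge hE him h0m hi0' (Or.inr hsc0.symm)).reachable
        · rfl
    · push_neg at hj
      have hnm : j ∉ x 0 := by rw [hmem]; tauto
      simp only [adjLift_mk, hf, if_neg (by tauto : ¬(j = 0 ∨ j = i0)), hψ, if_neg hj.2]
      by_cases hℓ : ℓ = 0
      · rw [hℓ]
      · have hℓ1 : ℓ = 1 := by omega
        rw [hℓ1]
        exact ConnectedComponent.sound
          (by rw [← hcs0, ← hsc0]; exact (adj_temporal hnm) :
            G.Adj (j, 0) (j, 1)).reachable
  have rinv : ∀ k, adjLift f hfadj (ψ k) = k := by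
    intro k
    by_cases hk : k = i0
    · simp only [hψ, if_pos hk, adjLift_mk, hf, hk]
      simp
    · simp only [hψ, if_neg hk, adjLift_mk, hf]
      by_cases hk0 : k = 0
      · simp [hk0]
      · rw [if_neg (by tauto)]
  have e : G.ConnectedComponent ≃ Fin N := ⟨adjLift f hfadj, ψ, linv, rinv⟩
  rw [Nat.card_congr e, Nat.card_eq_fintype_card, Fintype.card_fin]


def low {m : ℕ} (ℓ : Fin (m+3)) (h : ℓ ≠ Fin.last (m+2)) : Fin (m+2) :=
  ⟨ℓ.val, by
    have h1 := ℓ.isLt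
    have h2 : ℓ.val ≠ m+2 := fun hc => h (Fin.ext (by simp [hc]))
    omega⟩

lemma castSucc_low {m : ℕ} (ℓ : Fin (m+3)) (h : ℓ ≠ Fin.last (m+2)) :
    Fin.castSucc (low ℓ h) = ℓ := Fin.ext rfl

lemma low_eq_iff {m : ℕ} (ℓ : Fin (m+3)) (h : ℓ ≠ Fin.last (m+2)) (w : Fin (m+2)) :
    low ℓ h = w ↔ ℓ = Fin.castSucc w := by
  rw [Fin.ext_iff, Fin.ext_iff]
  simp [low]

lemma hom_castSucc {N : ℕ} [NeZero N] (m : ℕ) (x : Fin (m+2) → Finset (Fin N))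
    (i : Fin (m+2) → Fin N) (hi0 : ∀ t, i t ≠ 0) (hix : ∀ t, x t = {0, i t}) :
    ∀ v w, (strandGraph (EstarN N) ∅ (m+1) (fun t : Fin (m+1) => x t.castSucc)).Adj v w →
      (strandGraph (EstarN N) ∅ (m+2) x).Adj (v.1, v.2.castSucc) (w.1, w.2.castSucc) := by
  intro v w h
  obtain ⟨t, hc⟩ := adj_elim h
  have hE : x (t.castSucc) ∈ EstarN N := by rw [hix]; exact mem_EstarN (hi0 _)
  rcases hc with ⟨h1, h2, (⟨h3, h4⟩ | ⟨h3, h4⟩)⟩ | ⟨h1, h2, h3, h4, h5⟩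
  · rw [h3, h4, ← h1, ← Fin.succ_castSucc]
    exact adj_temporal h2
  · rw [h3, h4, h1, ← Fin.succ_castSucc]
    exact (adj_temporal (h1 ▸ h2)).symm
  · rw [← h4]
    refine adj_bridge hE h1 h2 h3 ?_
    rcases h5 with h5 | h5
    · exact Or.inl (by rw [h5])
    · exact Or.inr (by rw [h5, Fin.succ_castSucc])

end star

section step

variable {N : ℕ} [NeZero N] {m : ℕ} {x : Fin (m+2) → Finset (Fin N)}
  {i : Fin (m+2) → Fin N}

lemma step_common (hi0 : ∀ t, i t ≠ 0) (hix : ∀ t, x t = {0, i t}) : True := trivial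

lemma step_eq (hi0 : ∀ t, i t ≠ 0) (hix : ∀ t, x t = {0, i t})
    (hab : i (Fin.last (m+1)) = i ((Fin.last m).castSucc)) :
    Nat.card (strandGraph (EstarN N) ∅ (m+2) x).ConnectedComponent =
      Nat.card (strandGraph (EstarN N) ∅ (m+1)
        (fun t : Fin (m+1) => x t.castSucc)).ConnectedComponent + 1 := by
  set y : Fin (m+1) → Finset (Fin N) := fun t => x t.castSucc with hy
  set G' := strandGraph (EstarN N) ∅ (m+2) x with hG'
  set G := strandGraph (EstarN N) ∅ (m+1) y with hG
  set s1 : Fin (m+2) := Fin.last (m+1) with hs1def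
  set s0 : Fin (m+2) := (Fin.last m).castSucc with hs0
  set a : Fin N := i s1 with hadef
  set top' : Fin (m+3) := Fin.last (m+2) with htop'def
  have hmem : ∀ t j, j ∈ x t ↔ j = 0 ∨ j = i t := fun t j => by rw [hix t, mem_star]
  have hxE : ∀ t, x t ∈ EstarN N := fun t => by rw [hix t]; exact mem_EstarN (hi0 t)
  have htop' : Fin.succ s1 = top' := Fin.succ_last (m+1)
  have htops : Fin.succ s0 = s1.castSucc := by
    rw [Fin.ext_iff]; simp [hs0, hs1def]
  have hcsne : ∀ t : Fin (m+2), Fin.castSucc t ≠ top' := fun t => (Fin.castSucc_lt_last t).ne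
  have hsucc_eq : ∀ t : Fin (m+2), Fin.succ t = top' → t = s1 := fun t h =>
    Fin.succ_injective _ (h.trans (Fin.succ_last _).symm)
  have hlowtop : low (Fin.castSucc s1) (hcsne s1) = s1 := Fin.ext rfl
  have hom := hom_castSucc m x i hi0 hix
  set ιh : G →g G' := ⟨fun v => (v.1, v.2.castSucc), fun {v w} h => hom v w h⟩ with hιh
  have eA2 : G'.Adj ((0 : Fin N), top') (a, top') :=
    adj_bridge (hxE s1) ((hmem s1 0).mpr (Or.inl rfl)) ((hmem s1 a).mpr (Or.inr rfl))
      (Ne.symm (hi0 s1)) (Or.inr htop'.symm)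
  have eA3 : ∀ j : Fin N, ¬(j = 0 ∨ j = a) → G'.Adj (j, s1.castSucc) (j, top') := by
    intro j hj
    have : j ∉ x s1 := fun hc => hj ((hmem s1 j).mp hc)
    have h := adj_temporal (E := EstarN N) (t := s1) this
    rwa [htop'] at h
  -- old graph top bridge (case A: i s0 = i s1 = a)
  have e0 : G.Adj ((0 : Fin N), s1) (a, s1) := by
    have h := adj_bridge (E := EstarN N) (x := y) (t := Fin.last m)
        (show y (Fin.last m) ∈ EstarN N from hxE s0)
        (show (0 : Fin N) ∈ y (Fin.last m) from (hmem s0 0).mpr (Or.inl rfl))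
        (show i s0 ∈ y (Fin.last m) from (hmem s0 _).mpr (Or.inr rfl))
        (Ne.symm (hi0 s0)) (Or.inr rfl)
    rw [hab]
    rwa [Fin.succ_last] at h
  -- the labelling
  set fA : Fin N × Fin (m+3) → G.ConnectedComponent ⊕ Unit := fun v =>
    if h : v.2 = top' then
      (if v.1 = 0 ∨ v.1 = a then Sum.inr () else Sum.inl (G.connectedComponentMk (v.1, s1)))
    else Sum.inl (G.connectedComponentMk (v.1, low v.2 h)) with hfA
  have keyT : ∀ (j : Fin N) (t : Fin (m+2)), j ∉ x t → fA (j, t.castSucc) = fA (j, t.succ) := by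
    intro j t hj
    by_cases ht : t = s1
    · subst ht
      have hj0 : ¬(j = 0 ∨ j = a) := fun hc => hj ((hmem s1 j).mpr hc)
      simp only [hfA, dif_neg (hcsne s1), dif_pos htop', if_neg hj0, hlowtop]
    · have hsne : Fin.succ t ≠ top' := fun h => ht (hsucc_eq t h)
      have ht' : t.val < m+1 := by
        have h1 := t.isLt
        have h2 : t.val ≠ m+1 := fun hc => ht (Fin.ext (by simp [hs1def, hc]))
        omega
      set t' : Fin (m+1) := ⟨t.val, ht'⟩ with ht'def
      have hct : Fin.castSucc t' = t := Fin.ext rfl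
      have hl1 : low (Fin.castSucc t) (hcsne t) = Fin.castSucc t' := Fin.ext rfl
      have hl2 : low (Fin.succ t) hsne = Fin.succ t' := Fin.ext rfl
      have hjy : j ∉ y t' := by rw [hy]; simpa only [hct] using hj
      have hadj : G.Adj (j, Fin.castSucc t') (j, Fin.succ t') := adj_temporal hjy
      simp only [hfA, dif_neg (hcsne t), dif_neg hsne, hl1, hl2]
      exact congrArg Sum.inl (ConnectedComponent.connectedComponentMk_eq_of_adj hadj)
  have keyB : ∀ (c d : Fin N) (t : Fin (m+2)) (ℓ : Fin (m+3)), c ∈ x t → d ∈ x t → c ≠ d →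
      (ℓ = t.castSucc ∨ ℓ = t.succ) → fA (c, ℓ) = fA (d, ℓ) := by
    intro c d t ℓ hc hd hcd hℓ
    rw [hmem] at hc hd
    by_cases hℓ' : ℓ = top'
    · have ht : t = s1 := by
        rcases hℓ with h | h
        · exact absurd (hℓ' ▸ h.symm) (hcsne t)
        · exact hsucc_eq t (h.symm.trans hℓ')
      subst ht
      simp only [hfA, dif_pos hℓ', if_pos hc, if_pos hd]
      rw [if_pos (show c = 0 ∨ c = a from hc), if_pos (show d = 0 ∨ d = a from hd)]
    · by_cases ht : t = s1
      · subst ht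
        have hℓc : ℓ = Fin.castSucc s1 := by
          rcases hℓ with h | h
          · exact h
          · exact absurd (h.trans htop') hℓ'
        subst hℓc
        simp only [hfA, dif_neg hℓ', hlowtop]
        refine congrArg Sum.inl ?_
        have key : ∀ e f : Fin N, (e = 0 ∨ e = a) → (f = 0 ∨ f = a) → e ≠ f →
            G.connectedComponentMk (e, s1) = G.connectedComponentMk (f, s1) := by
          rintro e f (rfl | rfl) (rfl | rfl) hef
          · exact absurd rfl hef
          · exact ConnectedComponent.connectedComponentMk_eq_of_adj e0
          · exact (ConnectedComponent.connectedComponentMk_eq_of_adj e0).symm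
          · exact absurd rfl hef
        exact key c d hc hd hcd
      · have hsne : Fin.succ t ≠ top' := fun h => ht (hsucc_eq t h)
        have ht' : t.val < m+1 := by
          have h1 := t.isLt
          have h2 : t.val ≠ m+1 := fun hc => ht (Fin.ext (by simp [hs1def, hc]))
          omega
        set t' : Fin (m+1) := ⟨t.val, ht'⟩ with ht'def
        have hct : Fin.castSucc t' = t := Fin.ext rfl
        have hcy : c ∈ y t' := by rw [hy]; simp only [hct]; rw [hmem]; exact hc
        have hdy : d ∈ y t' := by rw [hy]; simp only [hct]; rw [hmem]; exact hd
        have hyE : y t' ∈ EstarN N := by rw [hy]; simp only [hct]; exact hxE t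
        have hlowor : low ℓ hℓ' = Fin.castSucc t' ∨ low ℓ hℓ' = Fin.succ t' := by
          rcases hℓ with rfl | rfl
          · exact Or.inl (Fin.ext rfl)
          · exact Or.inr (Fin.ext rfl)
        have hadj : G.Adj (c, low ℓ hℓ') (d, low ℓ hℓ') := adj_bridge hyE hcy hdy hcd hlowor
        simp only [hfA, dif_neg hℓ']
        exact congrArg Sum.inl (ConnectedComponent.connectedComponentMk_eq_of_adj hadj)
  have hfadj : ∀ v w, G'.Adj v w → fA v = fA w := by
    intro v w h
    obtain ⟨t, hc⟩ := adj_elim h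
    rcases hc with ⟨h1, h2, (⟨h3, h4⟩ | ⟨h3, h4⟩)⟩ | ⟨h1, h2, h3, h4, h5⟩
    · have hv : v = (v.1, t.castSucc) := Prod.ext rfl h3
      have hw : w = (v.1, t.succ) := Prod.ext h1.symm h4
      rw [hv, hw]; exact keyT v.1 t h2
    · have hv : v = (v.1, t.succ) := Prod.ext rfl h3
      have hw : w = (v.1, t.castSucc) := Prod.ext h1.symm h4
      rw [hv, hw]; exact (keyT v.1 t h2).symm
    · have hw : w = (w.1, v.2) := Prod.ext rfl h4.symm
      rw [hw]; exact keyB v.1 w.1 t v.2 h1 h2 h3 h5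
  set Φ : G'.ConnectedComponent → G.ConnectedComponent ⊕ Unit := adjLift fA hfadj with hΦ
  set Ψ : G.ConnectedComponent ⊕ Unit → G'.ConnectedComponent :=
    Sum.elim (ConnectedComponent.map ιh) (fun _ => G'.connectedComponentMk (0, top')) with hΨ
  have linv : ∀ C, Ψ (Φ C) = C := by
    refine ConnectedComponent.ind ?_
    rintro ⟨j, ℓ⟩
    by_cases hℓ : ℓ = top'
    · subst hℓ
      by_cases hj : j = 0 ∨ j = a
      · simp only [hΦ, adjLift_mk, hfA, dif_pos rfl, if_pos hj, hΨ, Sum.elim_inr]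
        rcases hj with rfl | rfl
        · rfl
        · exact ConnectedComponent.connectedComponentMk_eq_of_adj eA2
      · simp only [hΦ, adjLift_mk, hfA, dif_pos rfl, if_neg hj, hΨ, Sum.elim_inl,
          ConnectedComponent.map_mk]
        have hv : (⇑ιh) ((j, s1) : Fin N × Fin (m+2)) = (j, Fin.castSucc s1) := rfl
        rw [hv]
        exact ConnectedComponent.connectedComponentMk_eq_of_adj (eA3 j hj)
    · simp only [hΦ, adjLift_mk, hfA, dif_neg hℓ, hΨ, Sum.elim_inl,
        ConnectedComponent.map_mk]
      have hv : (⇑ιh) ((j, low ℓ hℓ) : Fin N × Fin (m+2)) = (j, ℓ) :=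
        Prod.ext rfl (castSucc_low ℓ hℓ)
      rw [hv]
  have rinv : ∀ s, Φ (Ψ s) = s := by
    rintro (C | ⟨⟩)
    · revert C
      refine ConnectedComponent.ind ?_
      rintro ⟨j, ℓ₂⟩
      simp only [hΨ, Sum.elim_inl, ConnectedComponent.map_mk]
      have hv : (⇑ιh) ((j, ℓ₂) : Fin N × Fin (m+2)) = (j, Fin.castSucc ℓ₂) := rfl
      rw [hv]
      simp only [hΦ, adjLift_mk, hfA, dif_neg (hcsne ℓ₂)]
      exact congrArg Sum.inl
        (congrArg G.connectedComponentMk (Prod.ext rfl (Fin.ext rfl)))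
    · simp only [hΨ, Sum.elim_inr, hΦ, adjLift_mk, hfA, dif_pos rfl]
      simp
  have equiv : G'.ConnectedComponent ≃ G.ConnectedComponent ⊕ Unit := ⟨Φ, Ψ, linv, rinv⟩
  rw [Nat.card_congr equiv, Nat.card_sum]
  simp

lemma step_ne (hi0 : ∀ t, i t ≠ 0) (hix : ∀ t, x t = {0, i t})
    (hab : i (Fin.last (m+1)) ≠ i ((Fin.last m).castSucc)) :
    Nat.card (strandGraph (EstarN N) ∅ (m+2) x).ConnectedComponent =
      Nat.card (strandGraph (EstarN N) ∅ (m+1)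
        (fun t : Fin (m+1) => x t.castSucc)).ConnectedComponent := by
  classical
  set y : Fin (m+1) → Finset (Fin N) := fun t => x t.castSucc with hy
  set G' := strandGraph (EstarN N) ∅ (m+2) x with hG'
  set G := strandGraph (EstarN N) ∅ (m+1) y with hG
  set s1 : Fin (m+2) := Fin.last (m+1) with hs1def
  set s0 : Fin (m+2) := (Fin.last m).castSucc with hs0
  set a : Fin N := i s1 with hadef
  set b : Fin N := i s0 with hbdef
  set top' : Fin (m+3) := Fin.last (m+2) with htop'def
  have hmem : ∀ t j, j ∈ x t ↔ j = 0 ∨ j = i t := fun t j => by rw [hix t, mem_star]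
  have hxE : ∀ t, x t ∈ EstarN N := fun t => by rw [hix t]; exact mem_EstarN (hi0 t)
  have htop' : Fin.succ s1 = top' := Fin.succ_last (m+1)
  have htops : Fin.succ s0 = s1.castSucc := by
    rw [Fin.ext_iff]; simp [hs0, hs1def]
  have hcsne : ∀ t : Fin (m+2), Fin.castSucc t ≠ top' := fun t => (Fin.castSucc_lt_last t).ne
  have hsucc_eq : ∀ t : Fin (m+2), Fin.succ t = top' → t = s1 := fun t h =>
    Fin.succ_injective _ (h.trans (Fin.succ_last _).symm)
  have hlowtop : low (Fin.castSucc s1) (hcsne s1) = s1 := Fin.ext rfl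
  have hom := hom_castSucc m x i hi0 hix
  set ιh : G →g G' := ⟨fun v => (v.1, v.2.castSucc), fun {v w} h => hom v w h⟩ with hιh
  have eA1 : G'.Adj ((0 : Fin N), s1.castSucc) (a, s1.castSucc) :=
    adj_bridge (hxE s1) ((hmem s1 0).mpr (Or.inl rfl)) ((hmem s1 a).mpr (Or.inr rfl))
      (Ne.symm (hi0 s1)) (Or.inl rfl)
  have eA2 : G'.Adj ((0 : Fin N), top') (a, top') :=
    adj_bridge (hxE s1) ((hmem s1 0).mpr (Or.inl rfl)) ((hmem s1 a).mpr (Or.inr rfl))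
      (Ne.symm (hi0 s1)) (Or.inr htop'.symm)
  have eA3 : ∀ j : Fin N, ¬(j = 0 ∨ j = a) → G'.Adj (j, s1.castSucc) (j, top') := by
    intro j hj
    have : j ∉ x s1 := fun hc => hj ((hmem s1 j).mp hc)
    have h := adj_temporal (E := EstarN N) (t := s1) this
    rwa [htop'] at h
  have eB0 : G'.Adj ((0 : Fin N), s1.castSucc) (b, s1.castSucc) := by
    have h := adj_bridge (E := EstarN N) (x := x) (t := s0)
      (hxE s0) ((hmem s0 0).mpr (Or.inl rfl)) ((hmem s0 b).mpr (Or.inr rfl))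
      (Ne.symm (hi0 s0)) (Or.inr rfl)
    rwa [htops] at h
  have hba : ¬(b = 0 ∨ b = a) := by
    rintro (hc | hc)
    · exact hi0 s0 hc
    · exact hab (hc.symm)
  have eA3b : G'.Adj (b, s1.castSucc) (b, top') := eA3 b hba
  -- old graph top bridge
  have e0 : G.Adj ((0 : Fin N), s1) (b, s1) := by
    have h := adj_bridge (E := EstarN N) (x := y) (t := Fin.last m)
        (show y (Fin.last m) ∈ EstarN N from hxE s0)
        (show (0 : Fin N) ∈ y (Fin.last m) from (hmem s0 0).mpr (Or.inl rfl))
        (show b ∈ y (Fin.last m) from (hmem s0 _).mpr (Or.inr rfl))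
        (Ne.symm (hi0 s0)) (Or.inr rfl)
    rwa [Fin.succ_last] at h
  have hpend : ∀ u, G.Reachable ((0 : Fin N), s1) u → u = ((0 : Fin N), s1) ∨ u = (b, s1) :=
    pendant m y (fun t => i t.castSucc) (fun t => hi0 t.castSucc) (fun t => hix t.castSucc)
  set C1 : G.ConnectedComponent := G.connectedComponentMk (0, s1) with hC1
  set C2 : G.ConnectedComponent := G.connectedComponentMk (a, s1) with hC2
  have hC2ne : C2 ≠ C1 := by
    intro hc
    have hr : G.Reachable ((0 : Fin N), s1) (a, s1) := ConnectedComponent.exact hc.symm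
    rcases hpend _ hr with h | h
    · exact hi0 s1 (congrArg Prod.fst h)
    · exact hab (congrArg Prod.fst h)
  set m' : G.ConnectedComponent → G.ConnectedComponent :=
    fun C => if C = C1 then C2 else C with hm'
  have hm'C1 : m' C1 = C2 := by rw [hm']; simp
  have hm'C2 : m' C2 = C2 := by rw [hm']; simp [hC2ne]
  set fB : Fin N × Fin (m+3) → G.ConnectedComponent := fun v =>
    if h : v.2 = top' then
      (if v.1 = 0 ∨ v.1 = a then C1 else m' (G.connectedComponentMk (v.1, s1)))
    else m' (G.connectedComponentMk (v.1, low v.2 h)) with hfB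
  have keyT : ∀ (j : Fin N) (t : Fin (m+2)), j ∉ x t → fB (j, t.castSucc) = fB (j, t.succ) := by
    intro j t hj
    by_cases ht : t = s1
    · subst ht
      have hj0 : ¬(j = 0 ∨ j = a) := fun hc => hj ((hmem s1 j).mpr hc)
      simp only [hfB, dif_neg (hcsne s1), dif_pos htop', if_neg hj0, hlowtop]
    · have hsne : Fin.succ t ≠ top' := fun h => ht (hsucc_eq t h)
      have ht' : t.val < m+1 := by
        have h1 := t.isLt
        have h2 : t.val ≠ m+1 := fun hc => ht (Fin.ext (by simp [hs1def, hc]))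
        omega
      set t' : Fin (m+1) := ⟨t.val, ht'⟩ with ht'def
      have hct : Fin.castSucc t' = t := Fin.ext rfl
      have hl1 : low (Fin.castSucc t) (hcsne t) = Fin.castSucc t' := Fin.ext rfl
      have hl2 : low (Fin.succ t) hsne = Fin.succ t' := Fin.ext rfl
      have hjy : j ∉ y t' := by rw [hy]; simpa only [hct] using hj
      have hadj : G.Adj (j, Fin.castSucc t') (j, Fin.succ t') := adj_temporal hjy
      simp only [hfB, dif_neg (hcsne t), dif_neg hsne, hl1, hl2]
      exact congrArg m' (ConnectedComponent.connectedComponentMk_eq_of_adj hadj)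
  have keyB : ∀ (c d : Fin N) (t : Fin (m+2)) (ℓ : Fin (m+3)), c ∈ x t → d ∈ x t → c ≠ d →
      (ℓ = t.castSucc ∨ ℓ = t.succ) → fB (c, ℓ) = fB (d, ℓ) := by
    intro c d t ℓ hc hd hcd hℓ
    rw [hmem] at hc hd
    by_cases hℓ' : ℓ = top'
    · have ht : t = s1 := by
        rcases hℓ with h | h
        · exact absurd (hℓ' ▸ h.symm) (hcsne t)
        · exact hsucc_eq t (h.symm.trans hℓ')
      subst ht
      simp only [hfB, dif_pos hℓ', if_pos hc, if_pos hd]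
      rw [if_pos (show c = 0 ∨ c = a from hc), if_pos (show d = 0 ∨ d = a from hd)]
    · by_cases ht : t = s1
      · subst ht
        have hℓc : ℓ = Fin.castSucc s1 := by
          rcases hℓ with h | h
          · exact h
          · exact absurd (h.trans htop') hℓ'
        subst hℓc
        simp only [hfB, dif_neg hℓ', hlowtop]
        have key : ∀ e : Fin N, (e = 0 ∨ e = a) → m' (G.connectedComponentMk (e, s1)) = C2 := by
          rintro e (rfl | rfl)
          · exact hm'C1
          · exact hm'C2
        rw [key c hc, key d hd]
      · have hsne : Fin.succ t ≠ top' := fun h => ht (hsucc_eq t h)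
        have ht' : t.val < m+1 := by
          have h1 := t.isLt
          have h2 : t.val ≠ m+1 := fun hc => ht (Fin.ext (by simp [hs1def, hc]))
          omega
        set t' : Fin (m+1) := ⟨t.val, ht'⟩ with ht'def
        have hct : Fin.castSucc t' = t := Fin.ext rfl
        have hcy : c ∈ y t' := by rw [hy]; simp only [hct]; rw [hmem]; exact hc
        have hdy : d ∈ y t' := by rw [hy]; simp only [hct]; rw [hmem]; exact hd
        have hyE : y t' ∈ EstarN N := by rw [hy]; simp only [hct]; exact hxE t
        have hlowor : low ℓ hℓ' = Fin.castSucc t' ∨ low ℓ hℓ' = Fin.succ t' := by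
          rcases hℓ with rfl | rfl
          · exact Or.inl (Fin.ext rfl)
          · exact Or.inr (Fin.ext rfl)
        have hadj : G.Adj (c, low ℓ hℓ') (d, low ℓ hℓ') := adj_bridge hyE hcy hdy hcd hlowor
        simp only [hfB, dif_neg hℓ']
        exact congrArg m' (ConnectedComponent.connectedComponentMk_eq_of_adj hadj)
  have hfadj : ∀ v w, G'.Adj v w → fB v = fB w := by
    intro v w h
    obtain ⟨t, hc⟩ := adj_elim h
    rcases hc with ⟨h1, h2, (⟨h3, h4⟩ | ⟨h3, h4⟩)⟩ | ⟨h1, h2, h3, h4, h5⟩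
    · have hv : v = (v.1, t.castSucc) := Prod.ext rfl h3
      have hw : w = (v.1, t.succ) := Prod.ext h1.symm h4
      rw [hv, hw]; exact keyT v.1 t h2
    · have hv : v = (v.1, t.succ) := Prod.ext rfl h3
      have hw : w = (v.1, t.castSucc) := Prod.ext h1.symm h4
      rw [hv, hw]; exact (keyT v.1 t h2).symm
    · have hw : w = (w.1, v.2) := Prod.ext rfl h4.symm
      rw [hw]; exact keyB v.1 w.1 t v.2 h1 h2 h3 h5
  set Φ : G'.ConnectedComponent → G.ConnectedComponent := adjLift fB hfadj with hΦ
  set Ψ : G.ConnectedComponent → G'.ConnectedComponent :=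
    fun C => if C = C1 then G'.connectedComponentMk (0, top') else ConnectedComponent.map ιh C
    with hΨ
  -- reachability chain in G' from (a, castSucc s1) to (b, top')
  have hchain : G'.Reachable (a, Fin.castSucc s1) (b, top') :=
    (eA1.symm.reachable.trans eB0.reachable).trans eA3b.reachable
  have hchain0 : G'.Reachable (a, Fin.castSucc s1) ((0 : Fin N), Fin.castSucc s1) :=
    eA1.symm.reachable
  have hchainb : G'.Reachable (a, Fin.castSucc s1) (b, Fin.castSucc s1) :=
    eA1.symm.reachable.trans eB0.reachable
  have linv : ∀ C, Ψ (Φ C) = C := by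
    refine ConnectedComponent.ind ?_
    rintro ⟨j, ℓ⟩
    by_cases hℓ : ℓ = top'
    · subst hℓ
      by_cases hj : j = 0 ∨ j = a
      · simp only [hΦ, adjLift_mk, hfB, dif_pos rfl, if_pos hj, hΨ, if_pos rfl]
        rcases hj with rfl | rfl
        · rfl
        · exact ConnectedComponent.sound eA2.reachable
      · simp only [hΦ, adjLift_mk, hfB, dif_pos rfl, if_neg hj]
        by_cases h1 : G.connectedComponentMk (j, s1) = C1
        · have hr : G.Reachable ((0 : Fin N), s1) (j, s1) := ConnectedComponent.exact h1.symm
          have hjb : j = b := by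
            rcases hpend _ hr with h | h
            · exact absurd (congrArg Prod.fst h) (fun hc => hj (Or.inl hc))
            · exact congrArg Prod.fst h
          rw [h1, hm'C1]
          simp only [hΨ]
          rw [if_neg hC2ne, hC2, ConnectedComponent.map_mk]
          have hv : (⇑ιh) ((a, s1) : Fin N × Fin (m+2)) = (a, Fin.castSucc s1) := rfl
          rw [hv, hjb]
          exact ConnectedComponent.sound hchain
        · simp only [hm', hΨ]
          rw [if_neg h1, if_neg h1, ConnectedComponent.map_mk]
          have hv : (⇑ιh) ((j, s1) : Fin N × Fin (m+2)) = (j, Fin.castSucc s1) := rfl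
          rw [hv]
          exact ConnectedComponent.sound (eA3 j hj).reachable
    · simp only [hΦ, adjLift_mk, hfB, dif_neg hℓ]
      by_cases h1 : G.connectedComponentMk (j, low ℓ hℓ) = C1
      · have hr : G.Reachable ((0 : Fin N), s1) (j, low ℓ hℓ) :=
          ConnectedComponent.exact h1.symm
        have hℓc : ℓ = Fin.castSucc s1 := by
          rcases hpend _ hr with h | h
          · have h2 : low ℓ hℓ = s1 := congrArg Prod.snd h
            rw [← castSucc_low ℓ hℓ, h2]
          · have h2 : low ℓ hℓ = s1 := congrArg Prod.snd h
            rw [← castSucc_low ℓ hℓ, h2]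
        have hj0b : j = 0 ∨ j = b := by
          rcases hpend _ hr with h | h
          · exact Or.inl (congrArg Prod.fst h)
          · exact Or.inr (congrArg Prod.fst h)
        rw [h1, hm'C1]
        simp only [hΨ]
        rw [if_neg hC2ne, hC2, ConnectedComponent.map_mk]
        have hv : (⇑ιh) ((a, s1) : Fin N × Fin (m+2)) = (a, Fin.castSucc s1) := rfl
        rw [hv, hℓc]
        rcases hj0b with rfl | rfl
        · exact ConnectedComponent.sound hchain0
        · exact ConnectedComponent.sound hchainb
      · simp only [hm', hΨ]
        rw [if_neg h1, if_neg h1, ConnectedComponent.map_mk]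
        have hv : (⇑ιh) ((j, low ℓ hℓ) : Fin N × Fin (m+2)) = (j, ℓ) :=
          Prod.ext rfl (castSucc_low ℓ hℓ)
        rw [hv]
  have haux : ∀ C, C ≠ C1 → Φ (ConnectedComponent.map ιh C) = C := by
    refine ConnectedComponent.ind ?_
    rintro ⟨j, ℓ₂⟩ hC
    simp only [ConnectedComponent.map_mk]
    have hv : (⇑ιh) ((j, ℓ₂) : Fin N × Fin (m+2)) = (j, Fin.castSucc ℓ₂) := rfl
    rw [hv]
    simp only [hΦ, adjLift_mk, hfB, dif_neg (hcsne ℓ₂)]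
    have hl : low (Fin.castSucc ℓ₂) (hcsne ℓ₂) = ℓ₂ := Fin.ext rfl
    rw [hl]
    simp only [hm']
    rw [if_neg hC]
  have rinv : ∀ C, Φ (Ψ C) = C := by
    intro C
    by_cases hC : C = C1
    · simp only [hΨ]
      rw [if_pos hC]
      simp only [hΦ, adjLift_mk, hfB, dif_pos rfl]
      rw [hC]
      simp
    · simp only [hΨ]
      rw [if_neg hC]
      exact haux C hC
  have equiv : G'.ConnectedComponent ≃ G.ConnectedComponent := ⟨Φ, Ψ, linv, rinv⟩
  rw [Nat.card_congr equiv]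

end step


lemma key_aux {N : ℕ} [NeZero N] : ∀ (m : ℕ) (x : Fin (m+1) → Finset (Fin N))
    (i : Fin (m+1) → Fin N), (∀ t, i t ≠ 0) → (∀ t, x t = {0, i t}) →
    Nat.card (strandGraph (EstarN N) ∅ (m+1) x).ConnectedComponent =
      N + (Finset.univ.filter (fun t : Fin m => x t.castSucc = x t.succ)).card := by
  intro m
  induction m with
  | zero =>
    intro x i hi0 hix
    have h := base_case x i hi0 hix
    simpa using h
  | succ m ih =>
    intro x i hi0 hix
    have hih := ih (fun t => x t.castSucc) (fun t => i t.castSucc)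
      (fun t => hi0 t.castSucc) (fun t => hix t.castSucc)
    beta_reduce at hih
    have hiff : x ((Fin.last m).castSucc) = x (Fin.last (m+1)) ↔
        i (Fin.last (m+1)) = i ((Fin.last m).castSucc) := by
      constructor
      · intro h
        have hm : i (Fin.last (m+1)) ∈ x ((Fin.last m).castSucc) := by
          rw [h, hix]; simp
        rw [hix, mem_star] at hm
        rcases hm with hc | hc
        · exact absurd hc (hi0 _)
        · exact hc
      · intro h; rw [hix, hix, h]
    have hcount : (Finset.univ.filter (fun t : Fin (m+1) => x t.castSucc = x t.succ)).card
        = (Finset.univ.filter (fun t : Fin m =>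
            x (t.castSucc).castSucc = x (t.succ).castSucc)).card
          + (if x ((Fin.last m).castSucc) = x (Fin.last (m+1)) then 1 else 0) := by
      rw [Finset.card_filter, Finset.card_filter, Fin.sum_univ_castSucc]
      congr 1
    by_cases hcase : i (Fin.last (m+1)) = i ((Fin.last m).castSucc)
    · have hstep := step_eq hi0 hix hcase
      rw [hstep, hih, hcount, if_pos (hiff.mpr hcase)]
      omega
    · have hstep := step_ne hi0 hix hcase
      rw [hstep, hih, hcount, if_neg (fun hxx => hcase (hiff.mp hxx))]
      omega

lemma key {N : ℕ} [NeZero N] (n : ℕ) (hn : n ≠ 0) (x : Fin n → Finset (Fin N))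
    (hx : ∀ t, ∃ i : Fin N, i ≠ 0 ∧ x t = ({0, i} : Finset (Fin N))) :
    Nat.card (strandGraph (EstarN N) ∅ n x).ConnectedComponent =
      N + Set.ncard {t : Fin n | ∃ h : (t : ℕ) + 1 < n, x t = x ⟨(t : ℕ) + 1, h⟩} := by
  obtain ⟨m, rfl⟩ := Nat.exists_eq_succ_of_ne_zero hn
  choose i hi0 hix using hx
  rw [key_aux m x i hi0 hix]
  congr 1
  have himg : {t : Fin (m+1) | ∃ h : (t : ℕ) + 1 < m+1, x t = x ⟨(t : ℕ) + 1, h⟩}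
      = Fin.castSucc '' {t : Fin m | x t.castSucc = x t.succ} := by
    ext u
    constructor
    · rintro ⟨h, hx'⟩
      have hu : (u : ℕ) < m := by omega
      refine ⟨⟨u, hu⟩, ?_, Fin.ext rfl⟩
      have h1 : Fin.castSucc (⟨(u : ℕ), hu⟩ : Fin m) = u := Fin.ext rfl
      have h2 : Fin.succ (⟨(u : ℕ), hu⟩ : Fin m) = ⟨(u : ℕ) + 1, h⟩ := Fin.ext rfl
      show x (Fin.castSucc ⟨(u : ℕ), hu⟩) = x (Fin.succ ⟨(u : ℕ), hu⟩)
      rw [h1, h2]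
      exact hx'
    · rintro ⟨t, ht, rfl⟩
      have h : ((Fin.castSucc t : Fin (m+1)) : ℕ) + 1 < m + 1 := by
        have := t.isLt
        simp only [Fin.coe_castSucc]
        omega
      refine ⟨h, ?_⟩
      have h2 : (⟨((Fin.castSucc t : Fin (m+1)) : ℕ) + 1, h⟩ : Fin (m+1)) = Fin.succ t :=
        Fin.ext rfl
      rw [h2]
      exact ht
  rw [himg, Set.ncard_image_of_injective _ (Fin.castSucc_injective m)]
  classical
  rw [Set.ncard_eq_toFinset_card', Set.toFinset_setOf]

/-- For the star graph (center `0`, edges `{0,i}` for `i ≠ 0`), the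
number of loops of any configuration is `N` plus the number of adjacent equal pairs of
operators, so the loop weight `2^{L(x)}` coincides with `2^N` times the Boltzmann weight
`e^{−ln(2) E_Potts(x)}` of a 1-dimensional ferromagnetic Potts model with `2B` sites and
`N−1` colors, where `E_Potts(x) = −Σ_t δ_{x_t, x_{t+1}}`. -/
theorem star_graph_potts (N : ℕ) [NeZero N] (B : ℕ) (hB : 0 < B)
    (x : Fin (2 * B) → Finset (Fin N))
    (hx : ∀ t, ∃ i : Fin N, i ≠ 0 ∧ x t = ({0, i} : Finset (Fin N))) :
    let Estar : Finset (Finset (Fin N)) :=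
      (Finset.univ.filter (fun i : Fin N => i ≠ 0)).image
        (fun i => ({0, i} : Finset (Fin N)));
    let cnt : ℕ :=
      Set.ncard {t : Fin (2 * B) | ∃ h : (t : ℕ) + 1 < 2 * B, x t = x ⟨(t : ℕ) + 1, h⟩};
    numLoops Estar ∅ (2 * B) x = N + cnt ∧
    (2 : ℝ) ^ numLoops Estar ∅ (2 * B) x =
      2 ^ N * Real.exp (-Real.log 2 * (-(cnt : ℝ))) := by
  intro Estar cnt
  have hkey : numLoops Estar ∅ (2 * B) x = N + cnt :=
    key (2 * B) (by omega) x hx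
  refine ⟨hkey, ?_⟩
  rw [hkey, neg_mul_neg, pow_add]
  congr 1
  rw [mul_comm, Real.exp_nat_mul, Real.exp_log (by norm_num : (0:ℝ) < 2)]
end
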